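/- arXiv:math/0507144 — 10 statements merged into one kernel-verified Lean document; each statement's English description precedes it below -/
import Mathlib

section
/- (Euler's first identity.) For complex numbers q, t with |q| < 1 and |t| < 1, ∑_{n=0}^∞ t^n / (q;q)_n = 1 / (t;q)_∞. -/
open Finset Filter Topology

/-- The finite q-Pochhammer symbol `(a;q)_n = (1-a)(1-aq)⋯(1-aq^{n-1})`. -/
noncomputable def qPoch (a q : ℂ) (n : ℕ) : ℂ :=
  ∏ i ∈ Finset.range n, (1 - a * q ^ i)

/-- Euler's first identity: for `|q| < 1` and `|t| < 1`,
`∑_{n≥0} tⁿ / (q;q)_n = 1 / (t;q)_∞`. -/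
theorem euler_first_identity (q t : ℂ) (hq : ‖q‖ < 1) (ht : ‖t‖ < 1) :
    ∑' n : ℕ, t ^ n / qPoch q q n = 1 / ∏' n : ℕ, (1 - t * q ^ n) := by
  have hq0 : 0 ≤ ‖q‖ := norm_nonneg q
  have ht0 : 0 ≤ ‖t‖ := norm_nonneg t
  have habs : ∀ n : ℕ, ‖q * q ^ n‖ < 1 := by
    intro n
    rw [norm_mul, norm_pow]
    have h1 : ‖q‖ ^ n ≤ 1 := pow_le_one₀ hq0 hq.le
    nlinarith
  have hne1 : ∀ n : ℕ, (1 : ℂ) - q * q ^ n ≠ 0 := by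
    intro n h
    rw [sub_eq_zero] at h
    have := habs n
    rw [← h] at this
    simp at this
  have hpoch : ∀ n : ℕ, qPoch q q n ≠ 0 := by
    intro n
    exact Finset.prod_ne_zero_iff.2 fun i _ => hne1 i
  have hpochpos : ∀ n : ℕ, 0 < ‖qPoch q q n‖ := fun n =>
    norm_pos_iff.mpr (hpoch n)
  -- the real bound sequence
  set b : ℕ → ℝ := fun n => ‖t‖ ^ n / ‖qPoch q q n‖ with hbdef
  have hbnonneg : ∀ n, 0 ≤ b n := fun n => div_nonneg (pow_nonneg ht0 n) (norm_nonneg _)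
  have hb : Summable b := by
    set r : ℝ := (1 + ‖t‖) / 2 with hrdef
    have hr1 : r < 1 := by rw [hrdef]; linarith
    have htr : ‖t‖ < r := by rw [hrdef]; linarith
    have hr0 : 0 < r := lt_of_le_of_lt ht0 htr
    apply summable_of_ratio_norm_eventually_le hr1
    have htendsto : Tendsto (fun n : ℕ => ‖q * q ^ n‖) atTop (𝓝 0) := by
      have h0 : Tendsto (fun n : ℕ => ‖q‖ ^ n) atTop (𝓝 0) :=
        tendsto_pow_atTop_nhds_zero_of_lt_one hq0 hq
      have := h0.const_mul (‖q‖)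
      simpa [norm_mul, norm_pow, mul_comm] using this
    have hev : ∀ᶠ n : ℕ in atTop, ‖q * q ^ n‖ < 1 - ‖t‖ / r := by
      apply htendsto.eventually_lt_const
      have : ‖t‖ / r < 1 := (div_lt_one hr0).2 htr
      linarith
    filter_upwards [hev] with n hn
    have hA : ‖t‖ / r < ‖1 - q * q ^ n‖ := by
      have h1 : (1 : ℝ) - ‖q * q ^ n‖ ≤ ‖1 - q * q ^ n‖ := by
        have := norm_sub_norm_le (1 : ℂ) (q * q ^ n)
        simpa using this
      linarith
    have hApos : 0 < ‖1 - q * q ^ n‖ :=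
      lt_of_le_of_lt (div_nonneg ht0 hr0.le) hA
    have hta : ‖t‖ ≤ r * ‖1 - q * q ^ n‖ := by
      rw [div_lt_iff₀ hr0] at hA
      nlinarith
    have hpochsucc : qPoch q q (n + 1) = qPoch q q n * (1 - q * q ^ n) := by
      rw [qPoch, Finset.prod_range_succ, ← qPoch]
    rw [Real.norm_of_nonneg (hbnonneg _), Real.norm_of_nonneg (hbnonneg _), hbdef]
    simp only [hpochsucc, norm_mul]
    rw [pow_succ]
    rw [div_le_iff₀ (mul_pos (hpochpos n) hApos)]
    have heq : r * (‖t‖ ^ n / ‖qPoch q q n‖) *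
        (‖qPoch q q n‖ * ‖1 - q * q ^ n‖) =
        ‖t‖ ^ n * (r * ‖1 - q * q ^ n‖) := by
      field_simp [ne_of_gt (hpochpos n)]
    rw [heq]
    exact mul_le_mul_of_nonneg_left hta (pow_nonneg ht0 n)
  have hsum : ∀ s : ℂ, ‖s‖ ≤ ‖t‖ →
      Summable fun n : ℕ => s ^ n / qPoch q q n := by
    intro s hs
    apply hb.of_norm_bounded
    intro n
    simp only [hbdef]
    rw [norm_div, norm_pow]
    have hp := hpochpos n
    gcongr
  -- the sum as a function
  set F : ℂ → ℂ := fun s => ∑' n : ℕ, s ^ n / qPoch q q n with hFdef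
  -- functional equation
  have hFE : ∀ s : ℂ, ‖s‖ ≤ ‖t‖ → F (q * s) = (1 - s) * F s := by
    intro s hs
    have hs0 : 0 ≤ ‖s‖ := norm_nonneg s
    have hqs : ‖q * s‖ ≤ ‖t‖ := by
      rw [norm_mul]
      nlinarith
    have h1 := hsum s hs
    have h2 := hsum _ hqs
    have hsub : Summable fun n : ℕ => (s ^ n - (q * s) ^ n) / qPoch q q n := by
      have := h1.sub h2
      simpa [sub_div] using this
    have hdiff : F s - F (q * s) = ∑' n : ℕ, (s ^ n - (q * s) ^ n) / qPoch q q n := by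
      rw [hFdef]
      simp only
      rw [← Summable.tsum_sub h1 h2]
      congr 1
      funext n
      rw [sub_div]
    have hterm : ∀ n : ℕ, (s ^ (n + 1) - (q * s) ^ (n + 1)) / qPoch q q (n + 1) =
        s * (s ^ n / qPoch q q n) := by
      intro n
      have hA := hne1 n
      have hP := hpoch n
      have hpochsucc : qPoch q q (n + 1) = qPoch q q n * (1 - q * q ^ n) := by
        rw [qPoch, Finset.prod_range_succ, ← qPoch]
      rw [hpochsucc]
      field_simp
      ring
    have hshift : ∑' n : ℕ, (s ^ n - (q * s) ^ n) / qPoch q q n = s * F s := by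
      rw [Summable.tsum_eq_zero_add hsub]
      simp only [pow_zero, sub_self, zero_div, zero_add]
      rw [tsum_congr hterm, tsum_mul_left]
    have hcomb := hdiff.trans hshift
    linear_combination (-1 : ℂ) * hcomb
  -- iterated functional equation
  have hInd : ∀ N : ℕ, F (q ^ N * t) =
      (∏ k ∈ Finset.range N, (1 - t * q ^ k)) * F t := by
    intro N
    induction N with
    | zero => simp
    | succ N ih =>
      have habsN : ‖q ^ N * t‖ ≤ ‖t‖ := by
        rw [norm_mul, norm_pow]
        have h1 : ‖q‖ ^ N ≤ 1 := pow_le_one₀ hq0 hq.le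
        nlinarith
      have hfe := hFE (q ^ N * t) habsN
      have harg : q ^ (N + 1) * t = q * (q ^ N * t) := by ring
      rw [harg, hfe, ih, Finset.prod_range_succ]
      ring
  -- limit of F (q^N * t) is 1
  have hlim : Tendsto (fun N : ℕ => F (q ^ N * t)) atTop (𝓝 1) := by
    have h0 : Tendsto (fun N : ℕ => q ^ N * t) atTop (𝓝 0) := by
      have := (tendsto_pow_atTop_nhds_zero_of_norm_lt_one
        (by exact hq)).mul_const t
      simpa using this
    have hab : ∀ k : ℕ, Tendsto (fun N : ℕ => (q ^ N * t) ^ k / qPoch q q k) atTop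
        (𝓝 ((0 : ℂ) ^ k / qPoch q q k)) := by
      intro k
      exact (h0.pow k).div_const _
    have hbound : ∀ᶠ N : ℕ in atTop, ∀ k : ℕ, ‖(q ^ N * t) ^ k / qPoch q q k‖ ≤ b k := by
      apply Eventually.of_forall
      intro N k
      simp only [hbdef]
      rw [norm_div, norm_pow]
      have hp := hpochpos k
      gcongr
      rw [norm_mul, norm_pow]
      have h1 : ‖q‖ ^ N ≤ 1 := pow_le_one₀ hq0 hq.le
      nlinarith [norm_nonneg t]
    have := tendsto_tsum_of_dominated_convergence hb hab hbound
    have hgval : (∑' k : ℕ, (0 : ℂ) ^ k / qPoch q q k) = 1 := by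
      rw [tsum_eq_single 0]
      · simp [qPoch]
      · intro k hk
        rw [zero_pow hk, zero_div]
    rw [hgval] at this
    exact this
  -- multipliability of the product
  have hne2 : ∀ n : ℕ, (1 : ℂ) - t * q ^ n ≠ 0 := by
    intro n h
    rw [sub_eq_zero] at h
    have : ‖t * q ^ n‖ < 1 := by
      rw [norm_mul, norm_pow]
      have h1 : ‖q‖ ^ n ≤ 1 := pow_le_one₀ hq0 hq.le
      nlinarith
    rw [← h] at this
    simp at this
  have hslog : Summable fun n : ℕ => Complex.log (1 - t * q ^ n) := by
    have hgeo : Summable fun n : ℕ => (3 / 2 : ℝ) * (‖t‖ * ‖q‖ ^ n) :=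
      ((summable_geometric_of_lt_one hq0 hq).mul_left _).mul_left _
    apply Summable.of_norm_bounded_eventually_nat hgeo
    have h0 : Tendsto (fun n : ℕ => ‖t‖ * ‖q‖ ^ n) atTop (𝓝 0) := by
      have := (tendsto_pow_atTop_nhds_zero_of_lt_one hq0 hq).const_mul (‖t‖)
      simpa using this
    have hev : ∀ᶠ n : ℕ in atTop, ‖t‖ * ‖q‖ ^ n ≤ 1 / 2 :=
      h0.eventually_le_const (by norm_num)
    filter_upwards [hev] with n hn
    have hz : ‖-(t * q ^ n)‖ ≤ 1 / 2 := by
      rw [norm_neg, norm_mul, norm_pow]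
      exact hn
    have h3 := Complex.norm_log_one_add_half_le_self hz
    rw [sub_eq_add_neg]
    refine h3.trans ?_
    rw [norm_neg, norm_mul, norm_pow]
  have hmult : Multipliable fun n : ℕ => (1 : ℂ) - t * q ^ n := by
    have := Complex.multipliable_of_summable_log hslog
    exact this
  have hPlim : Tendsto (fun N : ℕ => ∏ k ∈ Finset.range N, (1 - t * q ^ k)) atTop
      (𝓝 (∏' n : ℕ, (1 - t * q ^ n))) := hmult.hasProd.tendsto_prod_nat
  have hlim2 : Tendsto (fun N : ℕ => F (q ^ N * t)) atTop
      (𝓝 ((∏' n : ℕ, (1 - t * q ^ n)) * F t)) := by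
    simp_rw [hInd]
    exact hPlim.mul_const _
  have key : (∏' n : ℕ, (1 - t * q ^ n)) * F t = 1 := tendsto_nhds_unique hlim2 hlim
  have hP0 : (∏' n : ℕ, (1 - t * q ^ n)) ≠ 0 := left_ne_zero_of_mul_eq_one key
  have hgoal : (∑' n : ℕ, t ^ n / qPoch q q n) = F t := rfl
  rw [hgoal, eq_div_iff hP0]
  linear_combination key
end

section
/- (Euler's second identity.) For complex numbers q, t with |q| < 1, ∑_{n=0}^∞ t^n q^{n(n-1)/2} / (q;q)_n = (-t;q)_∞. -/
open Finset

open Filter Topology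

namespace EulerAux

/-- The general term of Euler's series. -/
noncomputable def F (q t : ℂ) (n : ℕ) : ℂ := t ^ n * q ^ (n * (n - 1) / 2) / qPoch q q n

/-- Euler's series. -/
noncomputable def S (q t : ℂ) : ℂ := ∑' n : ℕ, F q t n

lemma tri (n : ℕ) : (n + 1) * n / 2 = n * (n - 1) / 2 + n := by
  rcases Nat.even_mul_succ_self n with ⟨k, hk⟩
  have h2 : n * (n + 1) = n * (n - 1) + 2 * n := by
    cases n with
    | zero => simp
    | succ m => simp only [Nat.add_sub_cancel]; ring
  have he : Even (n * (n - 1)) := by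
    rcases Nat.even_or_odd n with h | h
    · exact h.mul_right _
    · cases n with
      | zero => simp
      | succ m =>
        simp only [Nat.add_sub_cancel]
        exact (Nat.Odd.sub_odd h odd_one).mul_left _
  rcases he with ⟨j, hj⟩
  have hnk : n * (n + 1) = (n + 1) * n := Nat.mul_comm _ _
  omega

variable {q t : ℂ}

lemma factor_ne_zero (hq : ‖q‖ < 1) (i : ℕ) : (1 : ℂ) - q * q ^ i ≠ 0 := by
  intro h
  have h1 : q * q ^ i = 1 := by linear_combination -h
  have : ‖q * q ^ i‖ < 1 := by
    rw [norm_mul, norm_pow]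
    calc ‖q‖ * ‖q‖ ^ i ≤ ‖q‖ * 1 := by
          exact mul_le_mul_of_nonneg_left (pow_le_one₀ (norm_nonneg _) hq.le) (norm_nonneg _)
      _ = ‖q‖ := mul_one _
      _ < 1 := hq
  rw [h1] at this
  simp at this

lemma qPoch_ne_zero (hq : ‖q‖ < 1) (n : ℕ) : qPoch q q n ≠ 0 := by
  unfold qPoch
  exact Finset.prod_ne_zero_iff.mpr fun i _ => factor_ne_zero hq i

lemma qPoch_succ (n : ℕ) : qPoch q q (n + 1) = qPoch q q n * (1 - q * q ^ n) :=
  Finset.prod_range_succ _ _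

lemma F_zero : F q t 0 = 1 := by simp [F, qPoch]

lemma F_succ (hq : ‖q‖ < 1) (n : ℕ) :
    F q t (n + 1) = (t * q ^ n / (1 - q * q ^ n)) * F q t n := by
  unfold F
  rw [qPoch_succ, Nat.add_sub_cancel, tri, pow_add, pow_succ]
  field_simp [qPoch_ne_zero hq n, factor_ne_zero hq n]
  ring

lemma ratio_tendsto (hq : ‖q‖ < 1) :
    Tendsto (fun n : ℕ => ‖t * q ^ n / (1 - q * q ^ n)‖) atTop (𝓝 0) := by
  have hpow : Tendsto (fun n : ℕ => (q : ℂ) ^ n) atTop (𝓝 0) :=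
    tendsto_pow_atTop_nhds_zero_of_norm_lt_one hq
  have h1 : Tendsto (fun n : ℕ => t * q ^ n / (1 - q * q ^ n)) atTop (𝓝 0) := by
    have : Tendsto (fun n : ℕ => t * q ^ n / (1 - q * q ^ n)) atTop
        (𝓝 (t * 0 / (1 - q * 0))) := by
      apply Tendsto.div ((tendsto_const_nhds).mul hpow)
        ((tendsto_const_nhds).sub ((tendsto_const_nhds).mul hpow))
      simp
    simpa using this
  simpa using h1.norm

lemma ratio_eventually (hq : ‖q‖ < 1) :
    ∀ᶠ n : ℕ in atTop, ‖t * q ^ n / (1 - q * q ^ n)‖ ≤ 1 / 2 := by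
  have := (ratio_tendsto (t := t) hq).eventually (eventually_le_nhds (by norm_num : (0:ℝ) < 1/2))
  simpa using this

lemma summable_norm_F (hq : ‖q‖ < 1) : Summable (fun n => ‖F q t n‖) := by
  apply summable_of_ratio_norm_eventually_le (r := 1/2) (by norm_num)
  filter_upwards [ratio_eventually (t := t) hq] with n hn
  rw [Real.norm_eq_abs, Real.norm_eq_abs, abs_of_nonneg (norm_nonneg _),
    abs_of_nonneg (norm_nonneg _), F_succ hq, norm_mul]
  exact mul_le_mul_of_nonneg_right hn (norm_nonneg _)

lemma summable_F (hq : ‖q‖ < 1) : Summable (F q t) :=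
  (summable_norm_F hq).of_norm

/-- The functional equation `S t = (1 + t) * S (q t)`. -/
lemma S_funeq (hq : ‖q‖ < 1) : S q t = (1 + t) * S q (q * t) := by
  have hFt := summable_F (q := q) (t := t) hq
  have hFqt := summable_F (q := q) (t := q * t) hq
  have hd : ∀ n : ℕ, F q t (n + 1) - F q (q * t) (n + 1) = t * F q (q * t) n := by
    intro n
    unfold F
    rw [qPoch_succ, Nat.add_sub_cancel, tri, pow_add, pow_succ, pow_succ, mul_pow]
    field_simp [qPoch_ne_zero hq n, factor_ne_zero hq n]
    ring
  have key : S q t - S q (q * t) = t * S q (q * t) := by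
    calc S q t - S q (q * t) = ∑' n : ℕ, (F q t n - F q (q * t) n) :=
          (Summable.tsum_sub hFt hFqt).symm
      _ = (F q t 0 - F q (q * t) 0) + ∑' n : ℕ, (F q t (n + 1) - F q (q * t) (n + 1)) :=
          Summable.tsum_eq_zero_add (hFt.sub hFqt)
      _ = ∑' n : ℕ, t * F q (q * t) n := by
          rw [F_zero, F_zero, sub_self, zero_add]
          exact tsum_congr hd
      _ = t * S q (q * t) := tsum_mul_left
  linear_combination key

/-- Iterated functional equation. -/
lemma S_iter (hq : ‖q‖ < 1) (N : ℕ) :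
    S q t = (∏ i ∈ Finset.range N, (1 + t * q ^ i)) * S q (q ^ N * t) := by
  induction N with
  | zero => simp
  | succ n ih =>
    rw [ih, Finset.prod_range_succ, S_funeq (t := q ^ n * t) hq]
    have harg : q * (q ^ n * t) = q ^ (n + 1) * t := by ring
    rw [harg]
    ring

lemma norm_F_le (_hq : ‖q‖ < 1) {x : ℂ} (hx : ‖x‖ ≤ 1) (n : ℕ) :
    ‖F q x (n + 1)‖ ≤ ‖x‖ * ‖F q 1 (n + 1)‖ := by
  have h1 : F q x (n + 1) = x ^ (n + 1) * (q ^ ((n+1) * ((n+1) - 1) / 2) / qPoch q q (n+1)) := by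
    rw [F, mul_div_assoc]
  have h2 : F q 1 (n + 1) = q ^ ((n+1) * ((n+1) - 1) / 2) / qPoch q q (n+1) := by
    rw [F, one_pow, one_mul]
  rw [h1, h2, norm_mul, norm_pow]
  apply mul_le_mul_of_nonneg_right _ (norm_nonneg _)
  calc ‖x‖ ^ (n + 1) = ‖x‖ * ‖x‖ ^ n := by rw [pow_succ, mul_comm]
    _ ≤ ‖x‖ * 1 := mul_le_mul_of_nonneg_left (pow_le_one₀ (norm_nonneg _) hx) (norm_nonneg _)
    _ = ‖x‖ := mul_one _

set_option maxHeartbeats 1000000 in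
lemma S_near_one (hq : ‖q‖ < 1) {x : ℂ} (hx : ‖x‖ ≤ 1) :
    ‖S q x - 1‖ ≤ ‖x‖ * ∑' n : ℕ, ‖F q 1 (n + 1)‖ := by
  have hs : Summable (F q x) := summable_F hq
  have h0 : S q x = 1 + ∑' n : ℕ, F q x (n + 1) := by
    rw [S, Summable.tsum_eq_zero_add hs, F_zero]
  have hsn : Summable (fun n => ‖F q x (n + 1)‖) :=
    (summable_nat_add_iff 1).mpr (summable_norm_F hq)
  have hsn1 : Summable (fun n => ‖F q 1 (n + 1)‖) :=
    (summable_nat_add_iff 1).mpr (summable_norm_F hq)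
  calc ‖S q x - 1‖ = ‖∑' n : ℕ, F q x (n + 1)‖ := by rw [h0, add_sub_cancel_left]
    _ ≤ ∑' n : ℕ, ‖F q x (n + 1)‖ := norm_tsum_le_tsum_norm hsn
    _ ≤ ∑' n : ℕ, ‖x‖ * ‖F q 1 (n + 1)‖ :=
        Summable.tsum_le_tsum (fun n => norm_F_le hq hx n) hsn (hsn1.mul_left _)
    _ = ‖x‖ * ∑' n : ℕ, ‖F q 1 (n + 1)‖ := tsum_mul_left

lemma S_tendsto_one (hq : ‖q‖ < 1) :
    Tendsto (fun N : ℕ => S q (q ^ N * t)) atTop (𝓝 1) := by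
  rw [tendsto_iff_norm_sub_tendsto_zero]
  set M := ∑' n : ℕ, ‖F q 1 (n + 1)‖ with hM
  have hxto : Tendsto (fun N : ℕ => ‖q ^ N * t‖) atTop (𝓝 0) := by
    have := (tendsto_pow_atTop_nhds_zero_of_norm_lt_one hq).mul
      (tendsto_const_nhds (x := t))
    simpa using this.norm
  have hev : ∀ᶠ N : ℕ in atTop, ‖q ^ N * t‖ ≤ 1 :=
    hxto.eventually (eventually_le_nhds (by norm_num : (0:ℝ) < 1))
  apply squeeze_zero' (Eventually.of_forall fun N => norm_nonneg _)
    (g := fun N => ‖q ^ N * t‖ * M)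
  · filter_upwards [hev] with N hN
    exact S_near_one hq hN
  · have : Tendsto (fun N : ℕ => ‖q ^ N * t‖ * M) atTop (𝓝 (0 * M)) :=
      hxto.mul_const M
    simpa using this

lemma multipliable_prod (hq : ‖q‖ < 1) : Multipliable (fun n : ℕ => 1 + t * q ^ n) := by
  by_cases hz : ∃ m : ℕ, 1 + t * q ^ m = 0
  · obtain ⟨m, hm⟩ := hz
    refine ⟨0, ?_⟩
    rw [HasProd]
    apply Tendsto.congr' _ (tendsto_const_nhds (x := (0 : ℂ)))
    filter_upwards [Filter.eventually_ge_atTop ({m} : Finset ℕ)] with s hs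
    exact (Finset.prod_eq_zero (hs (Finset.mem_singleton_self m)) hm).symm
  · push_neg at hz
    have hlog : Summable (fun n : ℕ => Complex.log (1 + t * q ^ n)) := by
      have hto : Tendsto (fun n : ℕ => ‖t * q ^ n‖) atTop (𝓝 0) := by
        have := (tendsto_const_nhds (x := t)).mul
          (tendsto_pow_atTop_nhds_zero_of_norm_lt_one hq)
        simpa using this.norm
      have hev : ∀ᶠ n : ℕ in atTop, ‖t * q ^ n‖ ≤ 1 / 2 :=
        hto.eventually (eventually_le_nhds (by norm_num : (0:ℝ) < 1/2))
      apply Summable.of_norm_bounded_eventually_nat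
        (g := fun n => 3 / 2 * (‖t‖ * ‖q‖ ^ n))
      · exact ((summable_geometric_of_lt_one (norm_nonneg _) hq).mul_left _).mul_left _
      · filter_upwards [hev] with n hn
        calc ‖Complex.log (1 + t * q ^ n)‖ ≤ 3 / 2 * ‖t * q ^ n‖ :=
              Complex.norm_log_one_add_half_le_self hn
          _ = 3 / 2 * (‖t‖ * ‖q‖ ^ n) := by rw [norm_mul, norm_pow]
    exact Complex.multipliable_of_summable_log hlog

end EulerAux

/-- Euler's second identity: for `|q| < 1`,
`∑_{n≥0} tⁿ q^{n(n-1)/2} / (q;q)_n = (-t;q)_∞`. -/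
theorem euler_second_identity (q t : ℂ) (hq : ‖q‖ < 1) :
    ∑' n : ℕ, t ^ n * q ^ (n * (n - 1) / 2) / qPoch q q n =
      ∏' n : ℕ, (1 + t * q ^ n) := by
  have hq' : ‖q‖ < 1 := hq
  open EulerAux in
  have hmult := EulerAux.multipliable_prod (q := q) (t := t) hq'
  have h1 : Tendsto (fun N : ℕ => ∏ i ∈ Finset.range N, (1 + t * q ^ i)) Filter.atTop
      (nhds (∏' n : ℕ, (1 + t * q ^ n))) := hmult.hasProd.tendsto_prod_nat
  have h2 := EulerAux.S_tendsto_one (q := q) (t := t) hq'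
  have h3 : Tendsto (fun N : ℕ => (∏ i ∈ Finset.range N, (1 + t * q ^ i)) *
      EulerAux.S q (q ^ N * t)) Filter.atTop
      (nhds ((∏' n : ℕ, (1 + t * q ^ n)) * 1)) := h1.mul h2
  have h4 : Tendsto (fun _ : ℕ => EulerAux.S q t) Filter.atTop
      (nhds ((∏' n : ℕ, (1 + t * q ^ n)) * 1)) := by
    apply h3.congr
    intro N
    exact (EulerAux.S_iter (q := q) (t := t) hq' N).symm
  have h5 : EulerAux.S q t = (∏' n : ℕ, (1 + t * q ^ n)) * 1 :=
    tendsto_nhds_unique tendsto_const_nhds h4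
  rw [mul_one] at h5
  exact h5
end

section
/- (Jacobi triple product.) For complex numbers q, z with 0 < |q| < 1 and z ≠ 0, the doubly infinite series ∑_{n=-∞}^∞ q^{n^2} z^n converges and equals (q^2;q^2)_∞ · (-qz;q^2)_∞ · (-q/z;q^2)_∞. -/
open Finset Filter Complex Topology

namespace JTP

noncomputable def P (q : ℂ) (m : ℕ) : ℂ := ∏ j ∈ Finset.range m, (1 - q ^ 2 * (q ^ 2) ^ j)

noncomputable def G (q : ℂ) (m k : ℕ) : ℂ :=
  if k ≤ m then P q m / (P q k * P q (m - k)) else 0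

variable {q z : ℂ}

lemma factor_norm_lt (hq1 : ‖q‖ < 1) (j : ℕ) : ‖q ^ 2 * (q ^ 2) ^ j‖ < 1 := by
  have h0 : (0:ℝ) ≤ ‖q‖ := norm_nonneg q
  have : ‖q ^ 2 * (q ^ 2) ^ j‖ = (‖q‖) ^ (2 * (j + 1)) := by
    simp [norm_mul, norm_pow, ← pow_mul]; ring
  rw [this]
  exact pow_lt_one₀ h0 hq1 (by omega)

lemma factor_ne_zero (hq1 : ‖q‖ < 1) (j : ℕ) : (1 - q ^ 2 * (q ^ 2) ^ j) ≠ 0 := by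
  rw [sub_ne_zero]
  intro h
  have := factor_norm_lt (q := q) hq1 j
  rw [← h] at this; simp at this

/-- general summability: `∑ a^(n²) bⁿ` over `ℕ` for `|a| < 1`. -/
lemma aux_summable {a : ℂ} (b : ℂ) (ha : ‖a‖ < 1) :
    Summable (fun n : ℕ => a ^ (n ^ 2) * b ^ n) := by
  have h0 : (0:ℝ) ≤ ‖a‖ := norm_nonneg a
  apply summable_of_ratio_norm_eventually_le (r := 1/2) (by norm_num)
  have hten : Tendsto (fun n : ℕ => ‖b‖ * ‖a‖ * (‖a‖ ^ 2) ^ n)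
      atTop (𝓝 0) := by
    have := tendsto_pow_atTop_nhds_zero_of_lt_one (by positivity : (0:ℝ) ≤ ‖a‖ ^ 2)
      (by nlinarith : ‖a‖ ^ 2 < 1)
    simpa using this.const_mul (‖b‖ * ‖a‖)
  have hev : ∀ᶠ n in atTop,
      ‖b‖ * ‖a‖ * (‖a‖ ^ 2) ^ n ≤ 1/2 :=
    (hten.eventually_lt_const (by norm_num : (0:ℝ) < 1/2)).mono fun n hn => le_of_lt hn
  filter_upwards [hev] with n hn
  · have hnorm : ‖a ^ ((n+1) ^ 2) * b ^ (n+1)‖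
        = (‖b‖ * ‖a‖ * (‖a‖ ^ 2) ^ n) * ‖a ^ (n ^ 2) * b ^ n‖ := by
      simp only [norm_mul, norm_pow]
      rw [show (n+1)^2 = n^2 + (2*n+1) by ring, pow_add, ← pow_mul]
      ring
    rw [hnorm]
    have : ‖a ^ (n ^ 2) * b ^ n‖ ≥ 0 := norm_nonneg _
    nlinarith [norm_nonneg (a ^ (n ^ 2) * b ^ n)]

lemma w_summable (hq : q ≠ 0) (hz : z ≠ 0) (hq1 : ‖q‖ < 1) :
    Summable (fun n : ℤ => q ^ (n ^ 2) * z ^ n) := by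
  apply Summable.of_nat_of_neg
  · apply (aux_summable z hq1).congr
    intro n
    rw [show ((n:ℤ))^2 = ((n^2 : ℕ) : ℤ) by push_cast; ring, zpow_natCast, zpow_natCast]
  · apply (aux_summable z⁻¹ hq1).congr
    intro n
    rw [show ((-n:ℤ))^2 = ((n^2 : ℕ) : ℤ) by push_cast; ring, zpow_natCast,
      zpow_neg, ← inv_zpow, zpow_natCast]

section bounds
variable (q)

/-- uniform upper bound for `‖P q m‖`. -/
noncomputable def CU : ℝ := Real.exp (∑' j : ℕ, (‖q‖ ^ 2) * (‖q‖ ^ 2) ^ j)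

/-- uniform positive lower bound for `‖P q m‖`. -/
noncomputable def CL : ℝ :=
  Real.exp (∑' j : ℕ, Real.log (1 - (‖q‖ ^ 2) * (‖q‖ ^ 2) ^ j))

variable {q}

lemma r2_lt_one (hq1 : ‖q‖ < 1) : ‖q‖ ^ 2 < 1 := by
  have h0 : (0:ℝ) ≤ ‖q‖ := norm_nonneg q
  nlinarith

lemma r2_nonneg : (0:ℝ) ≤ ‖q‖ ^ 2 := by positivity

lemma geom_summable (hq1 : ‖q‖ < 1) :
    Summable (fun j : ℕ => (‖q‖ ^ 2) * (‖q‖ ^ 2) ^ j) :=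
  (summable_geometric_of_lt_one r2_nonneg (r2_lt_one hq1)).mul_left _

lemma term_lt_one (hq1 : ‖q‖ < 1) (j : ℕ) :
    (‖q‖ ^ 2) * (‖q‖ ^ 2) ^ j < 1 := by
  have h1 := r2_lt_one hq1
  have h2 : (‖q‖ ^ 2) ^ j ≤ 1 := pow_le_one₀ r2_nonneg h1.le
  nlinarith [r2_nonneg (q := q), pow_nonneg (r2_nonneg (q := q)) j]

lemma term_nonneg (j : ℕ) : (0:ℝ) ≤ (‖q‖ ^ 2) * (‖q‖ ^ 2) ^ j := by positivity

lemma abs_factor (j : ℕ) :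
    ‖q ^ 2 * (q ^ 2) ^ j‖ = (‖q‖ ^ 2) * (‖q‖ ^ 2) ^ j := by
  simp [map_mul, map_pow]

lemma log_summable (hq1 : ‖q‖ < 1) :
    Summable (fun j : ℕ => Real.log (1 - (‖q‖ ^ 2) * (‖q‖ ^ 2) ^ j)) := by
  set r2 := ‖q‖ ^ 2 with hr2
  apply Summable.of_norm_bounded (g := fun j => (1 - r2)⁻¹ * (r2 * r2 ^ j))
    ((geom_summable hq1).mul_left _)
  intro j
  have h1 : r2 * r2 ^ j < 1 := term_lt_one hq1 j
  have h2 : (0:ℝ) ≤ r2 * r2 ^ j := term_nonneg j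
  have hpos : (0:ℝ) < 1 - r2 * r2 ^ j := by linarith
  have hlog_nonpos : Real.log (1 - r2 * r2 ^ j) ≤ 0 :=
    Real.log_nonpos (by linarith) (by linarith)
  rw [Real.norm_eq_abs, abs_of_nonpos hlog_nonpos]
  -- -log(1-x) = log((1-x)⁻¹) ≤ (1-x)⁻¹ - 1 = x/(1-x)
  rw [← Real.log_inv]
  have hle := Real.log_le_sub_one_of_pos (inv_pos.mpr hpos)
  have heq : (1 - r2 * r2 ^ j)⁻¹ - 1 = (r2 * r2 ^ j) / (1 - r2 * r2 ^ j) := by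
    field_simp
    ring
  have hr2j : r2 * r2 ^ j ≤ r2 := by
    have h2' : r2 ^ j ≤ 1 := pow_le_one₀ r2_nonneg (r2_lt_one hq1).le
    nlinarith [r2_nonneg (q := q)]
  have hmono : (r2 * r2 ^ j) / (1 - r2 * r2 ^ j) ≤ (1 - r2)⁻¹ * (r2 * r2 ^ j) := by
    rw [div_eq_inv_mul]
    apply mul_le_mul_of_nonneg_right _ h2
    apply inv_anti₀
    · linarith [r2_lt_one hq1]
    · linarith
  linarith

lemma P_norm_le (hq1 : ‖q‖ < 1) (m : ℕ) : ‖P q m‖ ≤ CU q := by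
  set r2 := ‖q‖ ^ 2 with hr2
  have h1 : ‖P q m‖ ≤ ∏ j ∈ Finset.range m, (1 + r2 * r2 ^ j) := by
    rw [P, norm_prod]
    apply Finset.prod_le_prod (fun j _ => norm_nonneg _)
    intro j _
    calc ‖1 - q ^ 2 * (q ^ 2) ^ j‖ ≤ ‖(1:ℂ)‖ + ‖q ^ 2 * (q ^ 2) ^ j‖ := norm_sub_le _ _
      _ = 1 + r2 * r2 ^ j := by rw [norm_one, abs_factor]
  have h2 : ∏ j ∈ Finset.range m, (1 + r2 * r2 ^ j)
      ≤ ∏ j ∈ Finset.range m, Real.exp (r2 * r2 ^ j) := by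
    apply Finset.prod_le_prod (fun j _ => by positivity)
    intro j _
    linarith [Real.add_one_le_exp (r2 * r2 ^ j)]
  rw [← Real.exp_sum] at h2
  have h3 : ∑ j ∈ Finset.range m, r2 * r2 ^ j ≤ ∑' j : ℕ, r2 * r2 ^ j :=
    Summable.sum_le_tsum _ (fun j _ => term_nonneg j) (geom_summable hq1)
  calc ‖P q m‖ ≤ _ := h1
    _ ≤ _ := h2
    _ ≤ CU q := Real.exp_le_exp.mpr h3

lemma CL_pos : 0 < CL q := Real.exp_pos _

lemma CU_pos : 0 < CU q := Real.exp_pos _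

lemma P_norm_ge (hq1 : ‖q‖ < 1) (m : ℕ) : CL q ≤ ‖P q m‖ := by
  have hr2 : ∀ j : ℕ, (0:ℝ) < 1 - ‖q‖ ^ 2 * (‖q‖ ^ 2) ^ j :=
    fun j => by linarith [term_lt_one hq1 j]
  have h1 : ∏ j ∈ Finset.range m, (1 - ‖q‖ ^ 2 * (‖q‖ ^ 2) ^ j) ≤ ‖P q m‖ := by
    rw [P, norm_prod]
    apply Finset.prod_le_prod
    · intro j _; linarith [hr2 j]
    · intro j _
      calc 1 - ‖q‖ ^ 2 * (‖q‖ ^ 2) ^ j = ‖(1:ℂ)‖ - ‖q ^ 2 * (q ^ 2) ^ j‖ := by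
            rw [norm_one, abs_factor]
        _ ≤ ‖1 - q ^ 2 * (q ^ 2) ^ j‖ := by
            have := norm_sub_norm_le (1:ℂ) (q ^ 2 * (q ^ 2) ^ j)
            linarith
  have h2 : ∏ j ∈ Finset.range m, (1 - ‖q‖ ^ 2 * (‖q‖ ^ 2) ^ j)
      = Real.exp (∑ j ∈ Finset.range m,
          Real.log (1 - ‖q‖ ^ 2 * (‖q‖ ^ 2) ^ j)) := by
    rw [Real.exp_sum]
    apply Finset.prod_congr rfl
    intro j _
    rw [Real.exp_log (hr2 j)]
  have h3 : (∑' j : ℕ, Real.log (1 - ‖q‖ ^ 2 * (‖q‖ ^ 2) ^ j))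
      ≤ ∑ j ∈ Finset.range m, Real.log (1 - ‖q‖ ^ 2 * (‖q‖ ^ 2) ^ j) := by
    have hsplit := Summable.sum_add_tsum_nat_add (f := fun j : ℕ =>
      Real.log (1 - ‖q‖ ^ 2 * (‖q‖ ^ 2) ^ j)) m (log_summable hq1)
    have htail : (∑' j : ℕ,
        Real.log (1 - ‖q‖ ^ 2 * (‖q‖ ^ 2) ^ (j + m))) ≤ 0 := by
      apply tsum_nonpos
      intro j
      exact Real.log_nonpos (by linarith [term_lt_one hq1 (j + m)])
        (by linarith [term_nonneg (q := q) (j + m)])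
    linarith [hsplit]
  calc CL q ≤ Real.exp (∑ j ∈ Finset.range m,
        Real.log (1 - ‖q‖ ^ 2 * (‖q‖ ^ 2) ^ j)) :=
        Real.exp_le_exp.mpr h3
    _ = _ := h2.symm
    _ ≤ ‖P q m‖ := h1

lemma G_norm_le (hq1 : ‖q‖ < 1) (m k : ℕ) :
    ‖G q m k‖ ≤ CU q / (CL q * CL q) := by
  rw [G]
  split_ifs with h
  · rw [norm_div, norm_mul]
    apply div_le_div₀ CU_pos.le (P_norm_le hq1 m) (mul_pos CL_pos CL_pos)
    exact mul_le_mul (P_norm_ge hq1 k) (P_norm_ge hq1 (m - k)) CL_pos.le (norm_nonneg _)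
  · rw [norm_zero]
    exact le_of_lt (div_pos CU_pos (mul_pos CL_pos CL_pos))

end bounds

/-- A product with a zero factor has product zero. -/
lemma hasProd_zero_of_factor_zero {f : ℕ → ℂ} (m : ℕ) (hm : f m = 0) : HasProd f 0 := by
  have hev : ∀ᶠ s : Finset ℕ in atTop, ∏ i ∈ s, f i = 0 := by
    filter_upwards [eventually_ge_atTop ({m} : Finset ℕ)] with s hs
    exact Finset.prod_eq_zero (hs (Finset.mem_singleton_self m)) hm
  have : (fun s : Finset ℕ => ∏ i ∈ s, f i) =ᶠ[atTop] (fun _ => (0:ℂ)) := hev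
  exact Tendsto.congr' this.symm tendsto_const_nhds

lemma multipliable_one_add {c : ℕ → ℂ} (h : Summable c) (h0 : ∀ j, 1 + c j ≠ 0) :
    Multipliable (fun j => 1 + c j) := by
  exact multipliable_one_add_of_summable h.norm

lemma geom_c_summable (a : ℂ) (hq1 : ‖q‖ < 1) :
    Summable (fun j : ℕ => a * (q ^ 2) ^ j) := by
  apply Summable.mul_left
  apply summable_geometric_of_norm_lt_one
  calc ‖q ^ 2‖ = ‖q‖ ^ 2 := by simp [norm_pow]
    _ < 1 := r2_lt_one hq1

lemma P_tendsto (hq1 : ‖q‖ < 1) :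
    Tendsto (fun m => P q m) atTop (𝓝 (∏' j : ℕ, (1 - q ^ 2 * (q ^ 2) ^ j))) := by
  have hm : Multipliable (fun j : ℕ => 1 - q ^ 2 * (q ^ 2) ^ j) := by
    have := multipliable_one_add (c := fun j => -(q ^ 2 * (q ^ 2) ^ j))
      ((geom_c_summable (q ^ 2) hq1).neg.congr (fun j => by ring))
      (fun j => by simpa [sub_eq_add_neg] using factor_ne_zero hq1 j)
    exact this.congr (fun j => by ring)
  exact hm.hasProd.tendsto_prod_nat

lemma neg_one_zpow_inv (n : ℤ) : ((-1:ℂ) ^ n)⁻¹ = (-1:ℂ) ^ n := by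
  rcases Int.even_or_odd n with h | h
  · rw [h.neg_one_zpow]; norm_num
  · rw [h.neg_one_zpow]; norm_num

/-- vanishing case via the sign-flipping involution `n ↦ -c - n`. -/
lemma hasSum_zero_pairing (hq : q ≠ 0) (hz : z ≠ 0) (hq1 : ‖q‖ < 1)
    {c : ℤ} (hc : Odd c) (hzq : z = -q ^ c) :
    HasSum (fun n : ℤ => q ^ (n ^ 2) * z ^ n) 0 := by
  have hsum := w_summable hq hz hq1
  have hzp : ∀ m : ℤ, z ^ m = (-1:ℂ) ^ m * q ^ (c * m) := by
    intro m
    rw [hzq, show -q ^ c = (-1) * q ^ c by ring, mul_zpow, ← zpow_mul]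
  have hkey : ∀ n : ℤ, q ^ ((-c - n) ^ 2) * z ^ (-c - n) = -(q ^ (n ^ 2) * z ^ n) := by
    intro n
    rw [hzp, hzp]
    have hsign : (-1:ℂ) ^ (-c - n) = -((-1:ℂ) ^ n) := by
      rw [show -c - n = -(c + n) by ring, zpow_neg, zpow_add₀ (by norm_num : (-1:ℂ) ≠ 0),
        hc.neg_one_zpow, mul_inv, neg_one_zpow_inv]
      norm_num
    rw [hsign]
    rw [show q ^ ((-c - n) ^ 2) * (-(-1:ℂ) ^ n * q ^ (c * (-c - n)))
        = -((-1:ℂ) ^ n * (q ^ ((-c - n) ^ 2) * q ^ (c * (-c - n)))) by ring,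
      show q ^ (n ^ 2) * ((-1:ℂ) ^ n * q ^ (c * n))
        = (-1:ℂ) ^ n * (q ^ (n ^ 2) * q ^ (c * n)) by ring,
      ← zpow_add₀ hq, ← zpow_add₀ hq]
    rw [show (-c - n) ^ 2 + c * (-c - n) = n ^ 2 + c * n by ring]
  set w : ℤ → ℂ := fun n : ℤ => q ^ (n ^ 2) * z ^ n with hw
  have hS : ∑' n, w n = -∑' n, w n := by
    conv_lhs => rw [← Equiv.tsum_eq (Equiv.subLeft (-c)) w]
    have : ∀ n : ℤ, w (Equiv.subLeft (-c) n) = -w n := by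
      intro n
      simpa [Equiv.subLeft] using hkey n
    rw [tsum_congr this, tsum_neg]
  have hS0 : ∑' n, w n = 0 := by
    have h2 : (2:ℂ) * ∑' n, w n = 0 := by linear_combination hS
    simpa using h2
  simpa [hS0] using hsum.hasSum

lemma P_ne_zero (hq1 : ‖q‖ < 1) (m : ℕ) : P q m ≠ 0 :=
  Finset.prod_ne_zero_iff.mpr fun j _ => factor_ne_zero hq1 j

lemma P_succ (m : ℕ) : P q (m + 1) = P q m * (1 - q ^ 2 * (q ^ 2) ^ m) :=
  Finset.prod_range_succ _ _

lemma P_zero : P q 0 = 1 := rfl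

lemma G_zero (hq1 : ‖q‖ < 1) (m : ℕ) : G q m 0 = 1 := by
  simp [G, P_zero, div_self, one_mul, P_ne_zero hq1]

lemma G_top (m : ℕ) : G q m (m + 1) = 0 := by
  simp [G]

lemma G_pascal (hq1 : ‖q‖ < 1) {j m : ℕ} (hjm : j ≤ m) :
    G q (m + 1) (j + 1) = G q m (j + 1) + (q ^ 2) ^ (m - j) * G q m j := by
  rcases eq_or_lt_of_le hjm with rfl | hlt
  · simp [G, P_zero, Nat.sub_self, div_self, P_ne_zero hq1]
  · obtain ⟨d, rfl⟩ : ∃ d, m = j + d + 1 := ⟨m - j - 1, by omega⟩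
    have h1 : j + 1 ≤ j + d + 1 := by omega
    have h2 : j ≤ j + d + 1 := by omega
    simp only [G, if_pos (by omega : j + 1 ≤ j + d + 1 + 1), if_pos h1, if_pos h2]
    have e0 : j + d + 1 + 1 - (j + 1) = d + 1 := by omega
    have e1 : j + d + 1 - (j + 1) = d := by omega
    have e2 : j + d + 1 - j = d + 1 := by omega
    rw [e0, e1, e2]
    have key : (1 : ℂ) - q ^ 2 * (q ^ 2) ^ (j + d + 1)
        = (1 - q ^ 2 * (q ^ 2) ^ d) + (q ^ 2) ^ (d + 1) * (1 - q ^ 2 * (q ^ 2) ^ j) := by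
      ring
    rw [show P q (j + d + 1 + 1) = P q (j + d + 1) * (1 - q ^ 2 * (q ^ 2) ^ (j + d + 1)) from
      P_succ _, key, P_succ j, P_succ d]
    have n1 := P_ne_zero (q := q) hq1 (j + d + 1)
    have n2 := P_ne_zero (q := q) hq1 j
    have n3 := P_ne_zero (q := q) hq1 d
    have nj := factor_ne_zero (q := q) hq1 j
    have nd := factor_ne_zero (q := q) hq1 d
    field_simp

lemma two_choose_two (k : ℕ) : 2 * k.choose 2 + k = k * k := by
  rcases k with _ | i
  · rfl
  · rw [Nat.choose_two_right]
    simp only [Nat.add_sub_cancel]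
    have h1 : (i + 1) * (i + 1) = (i + 1) * i + (i + 1) := by ring
    have h2 : 2 ∣ (i + 1) * i := by
      rw [Nat.mul_comm]; exact (Nat.even_mul_succ_self i).two_dvd
    omega

lemma two_gauss (N : ℕ) : 2 * (∑ i ∈ Finset.range N, i) + N = N * N := by
  have := Finset.sum_range_id_mul_two N
  rcases N with _ | M
  · rfl
  · simp only [Nat.add_sub_cancel] at this
    have h1 : (M + 1) * (M + 1) = (M + 1) * M + (M + 1) := by ring
    omega

lemma qbinom (hq1 : ‖q‖ < 1) (x : ℂ) (m : ℕ) :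
    ∏ j ∈ Finset.range m, (1 + x * (q ^ 2) ^ j)
      = ∑ k ∈ Finset.range (m + 1), (q ^ 2) ^ (k.choose 2) * G q m k * x ^ k := by
  induction m with
  | zero => simp [G_zero hq1 0]
  | succ m ih =>
      rw [Finset.prod_range_succ, ih]
      rw [Finset.sum_range_succ' (fun k => (q ^ 2) ^ (k.choose 2) * G q (m + 1) k * x ^ k) (m + 1),
        Finset.sum_range_succ' (fun k => (q ^ 2) ^ (k.choose 2) * G q m k * x ^ k) m]
      simp only [show (0:ℕ).choose 2 = 0 from rfl, pow_zero, G_zero hq1, mul_one, one_mul]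
      have hsplit : ∀ j ∈ Finset.range (m + 1),
          (q ^ 2) ^ ((j + 1).choose 2) * G q (m + 1) (j + 1) * x ^ (j + 1)
            = (q ^ 2) ^ ((j + 1).choose 2) * G q m (j + 1) * x ^ (j + 1)
              + (q ^ 2) ^ m * x * ((q ^ 2) ^ (j.choose 2) * G q m j * x ^ j) := by
        intro j hj
        rw [Finset.mem_range] at hj
        rw [G_pascal hq1 (by omega : j ≤ m)]
        have hc : (j + 1).choose 2 = j.choose 2 + j := by
          rcases j with _ | i
          · rfl
          · rw [Nat.choose_two_right, Nat.choose_two_right]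
            simp only [Nat.add_sub_cancel]
            have h1 : (i + 1 + 1) * (i + 1) = (i + 1) * i + 2 * (i + 1) := by ring
            have h2 : 2 ∣ (i + 1) * i := by
              rw [Nat.mul_comm]; exact (Nat.even_mul_succ_self i).two_dvd
            omega
        have hpow : ((q:ℂ) ^ 2) ^ ((j+1).choose 2) * (q ^ 2) ^ (m - j)
            = (q ^ 2) ^ (j.choose 2) * (q ^ 2) ^ m := by
          rw [← pow_add, ← pow_add, hc]
          congr 1
          omega
        rw [mul_add, add_mul]
        congr 1
        calc (q ^ 2) ^ ((j+1).choose 2) * ((q^2)^(m-j) * G q m j) * x ^ (j+1)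
              = ((q ^ 2) ^ ((j+1).choose 2) * (q^2)^(m-j)) * G q m j * (x ^ j * x) := by
                rw [pow_succ]; ring
            _ = _ := by rw [hpow]; ring
      rw [Finset.sum_congr rfl hsplit, Finset.sum_add_distrib, ← Finset.mul_sum]
      rw [Finset.sum_range_succ' (fun k => (q ^ 2) ^ (k.choose 2) * G q m k * x ^ k) m]
      simp only [show (0:ℕ).choose 2 = 0 from rfl, pow_zero, G_zero hq1, mul_one, one_mul]
      rw [Finset.sum_range_succ (fun j => (q ^ 2) ^ ((j + 1).choose 2) * G q m (j + 1) * x ^ (j + 1)) m]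
      simp only [G_top, mul_zero, zero_mul, add_zero]
      ring

lemma fjtp (hq : q ≠ 0) (hz : z ≠ 0) (hq1 : ‖q‖ < 1) (N : ℕ) :
    (∏ j ∈ Finset.range N, (1 + q * z * (q ^ 2) ^ j)) *
      (∏ j ∈ Finset.range N, (1 + q / z * (q ^ 2) ^ j))
    = ∑ k ∈ Finset.range (2 * N + 1),
        G q (2 * N) k * (q ^ (((k : ℤ) - N) ^ 2) * z ^ ((k : ℤ) - N)) := by
  have hq2 : (q : ℂ) ^ 2 ≠ 0 := pow_ne_zero _ hq
  set x : ℂ := q * z * (q ^ 2) ^ (-(N : ℤ)) with hxdef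
  have hxq : x = q ^ (1 - 2 * (N : ℤ)) * z := by
    have h2 : ((q:ℂ) ^ 2) ^ (-(N:ℤ)) = q ^ ((-2) * (N:ℤ)) := by
      rw [show ((-2):ℤ) * (N:ℤ) = ((2:ℕ):ℤ) * (-(N:ℤ)) by push_cast; ring, zpow_mul, zpow_natCast]
    rw [hxdef, h2, show (1 : ℤ) - 2 * (N:ℤ) = 1 + (-2) * (N:ℤ) by ring, zpow_add₀ hq, zpow_one]
    ring
  have hx : ∀ k : ℕ, x ^ k = q ^ ((k : ℤ) - 2 * N * k) * z ^ (k : ℤ) := by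
    intro k
    rw [hxq, mul_pow, ← zpow_natCast (q ^ (1 - 2 * (N:ℤ))) k, ← zpow_mul, ← zpow_natCast z k]
    congr 1
    ring
  have hxne : x ≠ 0 := by
    rw [hxq]; exact mul_ne_zero (zpow_ne_zero _ hq) hz
  have key := qbinom hq1 x (2 * N)
  -- LHS of key: split the product
  rw [two_mul, Finset.prod_range_add] at key
  have hpart2 : ∀ i ∈ Finset.range N, (1 + x * (q ^ 2) ^ (N + i)) = 1 + q * z * (q ^ 2) ^ i := by
    intro i _
    congr 1
    rw [hxdef, pow_add]
    rw [show (q*z*((q:ℂ)^2)^(-(N:ℤ))) * ((q^2)^N * (q^2)^i) =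
      q * z * (q^2)^i * (((q^2)^(-(N:ℤ))) * (q^2)^N) by ring]
    rw [← zpow_natCast ((q:ℂ)^2) N, ← zpow_add₀ hq2]
    simp
  have hpart1 : ∀ i ∈ Finset.range N,
      (1 + x * (q ^ 2) ^ i) = (x * (q ^ 2) ^ i) * (1 + q / z * (q ^ 2) ^ (N - 1 - i)) := by
    intro i hi
    rw [Finset.mem_range] at hi
    have hcomb : x * (q ^ 2) ^ i * (q / z * (q ^ 2) ^ (N - 1 - i)) = 1 := by
      rw [hxdef]
      rw [show q * z * ((q:ℂ)^2)^(-(N:ℤ)) * (q^2)^i * (q / z * (q^2)^(N-1-i))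
          = (z / z) * (((q^2)^1 * ((q^2)^i * (q^2)^(N-1-i))) * ((q^2)^(-(N:ℤ)))) by ring]
      rw [div_self hz, ← pow_add, ← pow_add, show 1 + (i + (N - 1 - i)) = N by omega]
      rw [← zpow_natCast ((q:ℂ)^2) N, ← zpow_add₀ hq2]
      simp
    rw [mul_add, mul_one, hcomb]
    ring
  rw [Finset.prod_congr rfl hpart2, Finset.prod_congr rfl hpart1,
    Finset.prod_mul_distrib, Finset.prod_range_reflect (fun i => 1 + q / z * (q ^ 2) ^ i) N,
    Finset.prod_mul_distrib, Finset.prod_const, Finset.prod_pow_eq_pow_sum] at key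
  rw [Finset.card_range, ← two_mul N] at key
  -- key : x^N * Q^T * B_N * A_N = ∑ ...
  set T : ℕ := ∑ i ∈ Finset.range N, i with hT
  -- termwise identity
  have hterm : ∀ k ∈ Finset.range (2 * N + 1),
      (q ^ 2) ^ (k.choose 2) * G q (2 * N) k * x ^ k
        = (x ^ N * (q ^ 2) ^ T) * (G q (2 * N) k * (q ^ (((k : ℤ) - N) ^ 2) * z ^ ((k : ℤ) - N))) := by
    intro k hk
    rw [Finset.mem_range] at hk
    have e1 : ((q:ℂ) ^ 2) ^ (k.choose 2) = q ^ ((2 * k.choose 2 : ℕ) : ℤ) := by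
      rw [zpow_natCast, pow_mul]
    have e2 : ((q:ℂ) ^ 2) ^ T = q ^ ((2 * T : ℕ) : ℤ) := by
      rw [zpow_natCast, pow_mul]
    rw [e1, e2, hx k, hx N]
    rw [show q ^ ((2 * k.choose 2 : ℕ) : ℤ) * G q (2*N) k * (q ^ ((k : ℤ) - 2 * N * k) * z ^ (k:ℤ))
        = (q ^ ((2 * k.choose 2 : ℕ) : ℤ) * q ^ ((k : ℤ) - 2 * N * k)) * z ^ (k:ℤ) * G q (2*N) k by ring]
    rw [show q ^ ((N : ℤ) - 2 * N * N) * z ^ (N:ℤ) * q ^ ((2 * T : ℕ) : ℤ) *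
          (G q (2*N) k * (q ^ (((k : ℤ) - N) ^ 2) * z ^ ((k : ℤ) - N)))
        = (q ^ ((N : ℤ) - 2 * N * N) * q ^ ((2 * T : ℕ) : ℤ) * q ^ (((k : ℤ) - N) ^ 2)) *
          (z ^ (N:ℤ) * z ^ ((k : ℤ) - N)) * G q (2*N) k by ring]
    rw [← zpow_add₀ hq, ← zpow_add₀ hq, ← zpow_add₀ hq, ← zpow_add₀ hz]
    congr 2
    · congr 1
      have c1 : ((2 * k.choose 2 : ℕ) : ℤ) = (k:ℤ) * k - k := by
        have h' : 2 * ((k.choose 2 : ℕ) : ℤ) + k = (k:ℤ) * k := by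
          exact_mod_cast two_choose_two k
        push_cast
        omega
      have c2 : ((2 * T : ℕ) : ℤ) = (N:ℤ) * N - N := by
        have h' : 2 * ((T : ℕ) : ℤ) + N = (N:ℤ) * N := by
          exact_mod_cast two_gauss N
        push_cast
        omega
      rw [c1, c2]
      ring
    · congr 1
      ring
  rw [Finset.sum_congr rfl hterm, ← Finset.mul_sum] at key
  have hne : x ^ N * (q ^ 2) ^ T ≠ 0 :=
    mul_ne_zero (pow_ne_zero _ hxne) (pow_ne_zero _ hq2)
  refine mul_left_cancel₀ hne ?_
  linear_combination key

lemma tsum_coef (N : ℕ) (w : ℤ → ℂ) :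
    ∑' n : ℤ, (if n.natAbs ≤ N then G q (2 * N) ((n + N).toNat) else 0) * w n
      = ∑ k ∈ Finset.range (2 * N + 1), G q (2 * N) k * w ((k : ℤ) - N) := by
  rw [tsum_eq_sum (s := (Finset.range (2 * N + 1)).image (fun k : ℕ => (k : ℤ) - N)) ?_]
  · rw [Finset.sum_image (by intro a _ b _ hab; have h' : (a:ℤ) - N = (b:ℤ) - N := hab; omega)]
    apply Finset.sum_congr rfl
    intro k hk
    rw [Finset.mem_range] at hk
    rw [if_pos (by omega : ((k : ℤ) - N).natAbs ≤ N)]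
    have he : (((k : ℤ) - N) + N).toNat = k := by omega
    rw [he]
  · intro n hn
    rw [if_neg, zero_mul]
    intro hcon
    apply hn
    rw [Finset.mem_image]
    exact ⟨(n + N).toNat, Finset.mem_range.mpr (by omega), by omega⟩

theorem main (q z : ℂ) (hq0 : 0 < ‖q‖)
    (hq1 : ‖q‖ < 1) (hz : z ≠ 0) :
    HasSum (fun n : ℤ => q ^ (n ^ 2) * z ^ n)
      ((∏' n : ℕ, (1 - q ^ 2 * (q ^ 2) ^ n)) *
        (∏' n : ℕ, (1 + q * z * (q ^ 2) ^ n)) *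
        (∏' n : ℕ, (1 + q / z * (q ^ 2) ^ n))) := by
  have hq : q ≠ 0 := fun h => by simp [h] at hq0
  have hsum := w_summable hq hz hq1
  by_cases hA : ∃ m, 1 + q * z * (q ^ 2) ^ m = 0
  · obtain ⟨m, hm⟩ := hA
    have h1 : z * q ^ (2 * m + 1) = -1 := by
      have : q * z * (q ^ 2) ^ m = -1 := by linear_combination hm
      linear_combination this
    have hzq : z = -q ^ (-(2 * (m : ℤ) + 1)) := by
      rw [show -(2 * (m : ℤ) + 1) = -((2 * m + 1 : ℕ) : ℤ) by push_cast; ring,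
        zpow_neg, zpow_natCast]
      have h4 : (q : ℂ) ^ (2 * m + 1) ≠ 0 := pow_ne_zero _ hq
      field_simp
      linear_combination h1
    have h0 := hasSum_zero_pairing hq hz hq1 (c := -(2 * (m : ℤ) + 1))
      ⟨-(m : ℤ) - 1, by ring⟩ hzq
    have hAzero : (∏' n : ℕ, (1 + q * z * (q ^ 2) ^ n)) = 0 :=
      (hasProd_zero_of_factor_zero m hm).tprod_eq
    rw [hAzero, mul_zero, zero_mul]
    exact h0
  by_cases hB : ∃ m, 1 + q / z * (q ^ 2) ^ m = 0
  · obtain ⟨m, hm⟩ := hB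
    have h1 : q ^ (2 * m + 1) = -z := by
      have h2 : q / z * (q ^ 2) ^ m = -1 := by linear_combination hm
      have h3 : q * (q ^ 2) ^ m = -z := by
        field_simp at h2
        linear_combination h2
      linear_combination h3
    have hzq : z = -q ^ ((2 * (m : ℤ) + 1)) := by
      rw [show (2 * (m : ℤ) + 1) = ((2 * m + 1 : ℕ) : ℤ) by push_cast; ring, zpow_natCast]
      linear_combination h1
    have h0 := hasSum_zero_pairing hq hz hq1 (c := 2 * (m : ℤ) + 1) ⟨(m : ℤ), by ring⟩ hzq
    have hBzero : (∏' n : ℕ, (1 + q / z * (q ^ 2) ^ n)) = 0 :=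
      (hasProd_zero_of_factor_zero m hm).tprod_eq
    rw [hBzero, mul_zero]
    exact h0
  · push_neg at hA hB
    set w : ℤ → ℂ := fun n : ℤ => q ^ (n ^ 2) * z ^ n with hw
    set Pinf : ℂ := ∏' j : ℕ, (1 - q ^ 2 * (q ^ 2) ^ j) with hPinf
    set A : ℂ := ∏' n : ℕ, (1 + q * z * (q ^ 2) ^ n) with hA'
    set B : ℂ := ∏' n : ℕ, (1 + q / z * (q ^ 2) ^ n) with hB'
    have hPn : Pinf ≠ 0 := by
      have h1 : CL q ≤ ‖Pinf‖ :=
        ge_of_tendsto (P_tendsto hq1).norm (Eventually.of_forall (P_norm_ge hq1))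
      intro h
      rw [h, norm_zero] at h1
      exact absurd h1 (not_le.mpr CL_pos)
    have hmulA : Multipliable (fun j : ℕ => 1 + q * z * (q ^ 2) ^ j) :=
      multipliable_one_add (geom_c_summable (q * z) hq1) hA
    have hmulB : Multipliable (fun j : ℕ => 1 + q / z * (q ^ 2) ^ j) :=
      multipliable_one_add (geom_c_summable (q / z) hq1) hB
    -- dominated convergence
    have hpt : ∀ n : ℤ, Tendsto
        (fun N : ℕ => (if n.natAbs ≤ N then G q (2 * N) ((n + N).toNat) else 0) * w n)
        atTop (𝓝 (Pinf⁻¹ * w n)) := by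
      intro n
      apply Tendsto.mul_const
      have t1 : Tendsto (fun N : ℕ => P q (2 * N)) atTop (𝓝 Pinf) :=
        (P_tendsto hq1).comp
          (tendsto_atTop_mono (fun N : ℕ => Nat.le_mul_of_pos_left N (by norm_num)) tendsto_id)
      have t2 : Tendsto (fun N : ℕ => P q ((n + N).toNat)) atTop (𝓝 Pinf) :=
        (P_tendsto hq1).comp (tendsto_atTop_atTop.mpr fun b => ⟨b + n.natAbs, fun a ha => by omega⟩)
      have t3 : Tendsto (fun N : ℕ => P q (((N : ℤ) - n).toNat)) atTop (𝓝 Pinf) :=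
        (P_tendsto hq1).comp (tendsto_atTop_atTop.mpr fun b => ⟨b + n.natAbs, fun a ha => by omega⟩)
      have t4 : Tendsto (fun N : ℕ => P q (2 * N) / (P q ((n + N).toNat) * P q (((N : ℤ) - n).toNat)))
          atTop (𝓝 (Pinf / (Pinf * Pinf))) :=
        t1.div (t2.mul t3) (mul_ne_zero hPn hPn)
      have heq : Pinf / (Pinf * Pinf) = Pinf⁻¹ := by
        field_simp
      rw [heq] at t4
      apply t4.congr'
      filter_upwards [eventually_ge_atTop n.natAbs] with N hN
      have hpos : (n + (N : ℤ)).toNat ≤ 2 * N := by omega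
      have e2 : 2 * N - (n + (N : ℤ)).toNat = ((N : ℤ) - n).toNat := by omega
      rw [if_pos hN, G, if_pos hpos, e2]
    have hbound : ∀ (N : ℕ) (n : ℤ),
        ‖(if n.natAbs ≤ N then G q (2 * N) ((n + N).toNat) else 0) * w n‖
          ≤ (CU q / (CL q * CL q)) * ‖w n‖ := by
      intro N n
      rw [norm_mul]
      apply mul_le_mul_of_nonneg_right _ (norm_nonneg _)
      split_ifs with h
      · exact G_norm_le hq1 _ _
      · rw [norm_zero]
        exact le_of_lt (div_pos CU_pos (mul_pos CL_pos CL_pos))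
    have hdom := tendsto_tsum_of_dominated_convergence
      (f := fun (N : ℕ) (n : ℤ) =>
        (if n.natAbs ≤ N then G q (2 * N) ((n + N).toNat) else 0) * w n)
      (g := fun n : ℤ => Pinf⁻¹ * w n)
      (bound := fun n : ℤ => (CU q / (CL q * CL q)) * ‖w n‖)
      (hsum.norm.mul_left _) hpt (Eventually.of_forall fun N => hbound N)
    have h5 : Tendsto (fun N : ℕ => (∏ j ∈ Finset.range N, (1 + q * z * (q ^ 2) ^ j)) *
        (∏ j ∈ Finset.range N, (1 + q / z * (q ^ 2) ^ j))) atTop (𝓝 (Pinf⁻¹ * ∑' n, w n)) := by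
      rw [← tsum_mul_left]
      apply hdom.congr
      intro N
      rw [tsum_coef N w, ← fjtp hq hz hq1 N]
    have h6 : Tendsto (fun N : ℕ => (∏ j ∈ Finset.range N, (1 + q * z * (q ^ 2) ^ j)) *
        (∏ j ∈ Finset.range N, (1 + q / z * (q ^ 2) ^ j))) atTop (𝓝 (A * B)) :=
      (hmulA.hasProd.tendsto_prod_nat).mul (hmulB.hasProd.tendsto_prod_nat)
    have hkey : Pinf⁻¹ * ∑' n, w n = A * B := tendsto_nhds_unique h5 h6
    have hfinal : ∑' n, w n = Pinf * A * B := by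
      field_simp at hkey
      linear_combination hkey
    exact hfinal ▸ hsum.hasSum

end JTP

/-- Jacobi's triple product: for `0 < |q| < 1` and `z ≠ 0`, the doubly infinite series
`∑_{n∈ℤ} q^{n²} zⁿ` converges to `(q²;q²)_∞ (-qz;q²)_∞ (-q/z;q²)_∞`. -/
theorem jacobi_triple_product (q z : ℂ) (hq0 : 0 < ‖q‖)
    (hq1 : ‖q‖ < 1) (hz : z ≠ 0) :
    HasSum (fun n : ℤ => q ^ (n ^ 2) * z ^ n)
      ((∏' n : ℕ, (1 - q ^ 2 * (q ^ 2) ^ n)) *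
        (∏' n : ℕ, (1 + q * z * (q ^ 2) ^ n)) *
        (∏' n : ℕ, (1 + q / z * (q ^ 2) ^ n))) :=
  JTP.main q z hq0 hq1 hz
end

section
/- (Gauss.) For a complex number q with |q| < 1, ∑_{n=0}^∞ q^{n(n+1)/2} = (q^2;q^2)_∞ / (q;q^2)_∞. -/
open Complex Filter Finset Topology

namespace GaussThetaAux

/-- triangular numbers -/
def T (m : ℕ) : ℕ := m * (m + 1) / 2

lemma two_T (m : ℕ) : 2 * T m = m * (m + 1) := by
  rw [T, Nat.two_mul_div_two_of_even (Nat.even_mul_succ_self m)]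

lemma T_zero : T 0 = 0 := rfl

lemma T_succ (m : ℕ) : T (m + 1) = T m + (m + 1) := by
  have h1 := two_T m
  have h2 := two_T (m + 1)
  have h3 : 2 * T (m + 1) = 2 * T m + 2 * (m + 1) := by rw [h1, h2]; ring
  omega

lemma T_ge (m : ℕ) : m ≤ T m := by
  have := two_T m; nlinarith

/-- partial q-Pochhammer -/
noncomputable def P (q : ℂ) (n : ℕ) : ℂ := ∏ k ∈ Finset.range n, (1 - q ^ (k + 1))

lemma P_zero (q : ℂ) : P q 0 = 1 := rfl

lemma P_succ (q : ℂ) (n : ℕ) : P q (n + 1) = P q n * (1 - q ^ (n + 1)) := by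
  rw [P, Finset.prod_range_succ, P]

lemma abs_pow_lt {q : ℂ} (hq : ‖q‖ < 1) (k : ℕ) :
    ‖q ^ (k + 1)‖ < 1 := by
  rw [norm_pow]
  calc ‖q‖ ^ (k+1) ≤ ‖q‖ ^ 1 :=
        pow_le_pow_of_le_one (norm_nonneg q) hq.le (by omega)
    _ < 1 := by simpa using hq

lemma one_sub_ne {q : ℂ} (hq : ‖q‖ < 1) (k : ℕ) : 1 - q ^ (k + 1) ≠ 0 := by
  intro h
  have h1 : q ^ (k+1) = 1 := by linear_combination -h
  have h2 := abs_pow_lt hq k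
  rw [h1] at h2
  simp at h2

lemma P_ne_zero {q : ℂ} (hq : ‖q‖ < 1) (n : ℕ) : P q n ≠ 0 :=
  Finset.prod_ne_zero_iff.mpr fun k _ => one_sub_ne hq k

/-- Gaussian binomial coefficient as element of ℂ -/
noncomputable def B (q : ℂ) (N m : ℕ) : ℂ :=
  if m ≤ N then P q N / (P q m * P q (N - m)) else 0

lemma B_zero {q : ℂ} (hq : ‖q‖ < 1) (N : ℕ) : B q N 0 = 1 := by
  simp only [B, Nat.zero_le, if_pos, Nat.sub_zero, P_zero, one_mul]
  exact div_self (P_ne_zero hq N)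

lemma B_self {q : ℂ} (hq : ‖q‖ < 1) (N : ℕ) : B q N N = 1 := by
  simp only [B, le_refl, if_pos, Nat.sub_self, P_zero, mul_one]
  exact div_self (P_ne_zero hq N)

lemma B_of_gt (q : ℂ) {N m : ℕ} (h : N < m) : B q N m = 0 := by
  simp [B, Nat.not_le.mpr h]

lemma pascal {q : ℂ} (hq : ‖q‖ < 1) (N m : ℕ) :
    B q (N + 1) (m + 1) = B q N (m + 1) + q ^ (N - m) * B q N m := by
  rcases le_or_gt (m + 1) (N + 1) with h | h
  · rcases eq_or_lt_of_le h with h1 | h1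
    · -- m + 1 = N + 1
      have hm : m = N := by omega
      subst hm
      rw [B_self hq, B_of_gt q (by omega), B_self hq]
      simp
    · -- m + 1 ≤ N
      have hmN : m + 1 ≤ N := by omega
      obtain ⟨k, rfl⟩ : ∃ k, N = m + 1 + k := ⟨N - (m+1), by omega⟩
      rw [B, B, B, if_pos (by omega), if_pos (by omega), if_pos (by omega)]
      have e1 : m + 1 + k + 1 - (m + 1) = k + 1 := by omega
      have e2 : m + 1 + k - (m + 1) = k := by omega
      have e3 : m + 1 + k - m = k + 1 := by omega
      rw [e1, e2, e3]
      have hPm := P_ne_zero hq m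
      have hPm1 := P_ne_zero hq (m+1)
      have hPk := P_ne_zero hq k
      have hPk1 := P_ne_zero hq (k+1)
      rw [P_succ q (m + 1 + k), P_succ q k, P_succ q m]
      have key : (1 - q ^ (m + 1 + k + 1)) = (1 - q ^ (k + 1)) + q ^ (k + 1) * (1 - q ^ (m+1)) := by
        have : q ^ (k+1) * q ^ (m+1) = q ^ (m+1+k+1) := by
          rw [← pow_add]; ring_nf
        linear_combination -this
      have hk1 := one_sub_ne hq k
      have hm1 := one_sub_ne hq m
      field_simp
      ring_nf
      -- done by ring_nf
  · rw [B_of_gt q (by omega), B_of_gt q (by omega), B_of_gt q (by omega)]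
    simp

lemma qbt {q : ℂ} (hq : ‖q‖ < 1) (z : ℂ) (N : ℕ) :
    ∏ k ∈ Finset.range N, (1 + z * q ^ (k + 1))
      = ∑ m ∈ Finset.range (N + 1), q ^ (T m) * z ^ m * B q N m := by
  induction N with
  | zero => simp [T_zero, B_zero hq]
  | succ N ih =>
    rw [Finset.prod_range_succ, ih]
    have expand : (∑ m ∈ Finset.range (N+1), q ^ T m * z ^ m * B q N m) * (1 + z * q ^ (N+1))
        = (∑ m ∈ Finset.range (N+1), q ^ T m * z ^ m * B q N m)
          + ∑ m ∈ Finset.range (N+1), q ^ (T m + (N+1)) * z ^ (m+1) * B q N m := by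
      rw [mul_add, mul_one, Finset.sum_mul]
      congr 1
      refine Finset.sum_congr rfl fun m _ => ?_
      rw [pow_add, pow_succ]
      ring
    rw [expand]
    rw [Finset.sum_range_succ' (fun m => q ^ T m * z ^ m * B q (N+1) m) (N+1)]
    have hsplit : ∀ m ∈ Finset.range (N+1),
        q ^ T (m+1) * z ^ (m+1) * B q (N+1) (m+1)
        = q ^ T (m+1) * z ^ (m+1) * B q N (m+1)
          + q ^ (T m + (N+1)) * z ^ (m+1) * B q N m := by
      intro m hm
      rw [pascal hq N m]
      have hm' : m ≤ N := by simpa [Nat.lt_succ_iff] using Finset.mem_range.mp hm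
      have hpow : q ^ T (m+1) * q ^ (N - m) = q ^ (T m + (N+1)) := by
        rw [← pow_add]
        congr 1
        have := T_succ m
        omega
      calc q ^ T (m+1) * z ^ (m+1) * (B q N (m+1) + q ^ (N-m) * B q N m)
          = q ^ T (m+1) * z ^ (m+1) * B q N (m+1)
            + (q ^ T (m+1) * q ^ (N - m)) * z ^ (m+1) * B q N m := by ring
        _ = _ := by rw [hpow]
    rw [Finset.sum_congr rfl hsplit, Finset.sum_add_distrib]
    have hfirst : ∑ m ∈ Finset.range (N+1), q ^ T m * z ^ m * B q N m
        = (∑ m ∈ Finset.range (N+1), q ^ T (m+1) * z ^ (m+1) * B q N (m+1)) + 1 := by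
      have h2 : ∑ m ∈ Finset.range (N+2), q ^ T m * z ^ m * B q N m
          = (∑ m ∈ Finset.range (N+1), q ^ T (m+1) * z ^ (m+1) * B q N (m+1))
            + q ^ T 0 * z ^ 0 * B q N 0 := Finset.sum_range_succ' _ (N+1)
      rw [Finset.sum_range_succ, B_of_gt q (by omega)] at h2
      rw [T_zero, B_zero hq] at h2
      simpa using h2
    rw [hfirst, T_zero, B_zero hq]
    simp
    ring

/-- centered exponent: `T (m - n)` as a bilateral triangular number -/
def e (n m : ℕ) : ℕ := if n ≤ m then T (m - n) else T (n - m) - (n - m)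

def E (n : ℕ) : ℕ := T n - n

lemma cast_T (m : ℕ) : (2:ℤ) * (T m : ℤ) = (m : ℤ) * (m + 1) := by
  exact_mod_cast two_T m

lemma cast_E (n : ℕ) : (2:ℤ) * (E n : ℤ) = (n : ℤ) * n - n := by
  have h1 : (E n : ℤ) = (T n : ℤ) - n := by
    rw [E, Nat.cast_sub (T_ge n)]
  have h2 := cast_T n
  linarith

lemma e_int (n m : ℕ) : (E n : ℤ) + (T m : ℤ) - (n : ℤ) * m = (e n m : ℤ) := by
  have c1 := cast_T m
  have c3 := cast_E n
  rcases le_or_gt n m with h | h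
  · have hc : ((m - n : ℕ) : ℤ) = (m : ℤ) - n := by omega
    have c4 := cast_T (m - n)
    rw [hc] at c4
    rw [e, if_pos h]
    nlinarith [c1, c3, c4]
  · have hle : n - m ≤ T (n - m) := T_ge _
    have hc : ((n - m : ℕ) : ℤ) = (n : ℤ) - m := by omega
    have c4 := cast_T (n - m)
    rw [hc] at c4
    rw [e, if_neg (by omega)]
    have hcast : ((T (n - m) - (n - m) : ℕ) : ℤ) = (T (n-m) : ℤ) - ((n:ℤ) - m) := by
      rw [Nat.cast_sub hle, hc]
    rw [hcast]
    nlinarith [c1, c3, c4]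

lemma E_add (n : ℕ) : (E n : ℤ) + (T n : ℤ) = (n : ℤ) * n := by
  have := cast_T n
  have := cast_E n
  linarith

lemma sum_T (n : ℕ) : ∑ k ∈ Finset.range n, (k + 1) = T n := by
  induction n with
  | zero => simp [T_zero]
  | succ n ih => rw [Finset.sum_range_succ, ih, T_succ]

lemma central {q : ℂ} (hq : ‖q‖ < 1) (hq0 : q ≠ 0) (n : ℕ) :
    ∑ m ∈ Finset.range (2 * n + 1), q ^ (e n m) * B q (2 * n) m
      = (∏ j ∈ Finset.range n, (1 + q ^ (j + 1))) * ∏ j ∈ Finset.range n, (q ^ j + 1) := by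
  have h := qbt hq ((q⁻¹) ^ n) (2 * n)
  have key := congrArg (fun w => q ^ (E n) * w) h
  -- rewrite the RHS of key
  have hR : q ^ (E n) * ∑ m ∈ Finset.range (2*n + 1), q ^ T m * ((q⁻¹) ^ n) ^ m * B q (2*n) m
      = ∑ m ∈ Finset.range (2 * n + 1), q ^ (e n m) * B q (2 * n) m := by
    rw [Finset.mul_sum]
    refine Finset.sum_congr rfl fun m _ => ?_
    have hsc : q ^ (E n) * (q ^ T m * ((q⁻¹) ^ n) ^ m) = q ^ (e n m) := by
      have h1 : ((q⁻¹) ^ n) ^ m = q ^ (-((n : ℤ) * m)) := by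
        rw [inv_pow, inv_pow, ← pow_mul, ← zpow_natCast q (n * m), ← zpow_neg]
        norm_num
      rw [h1, ← zpow_natCast q (E n), ← zpow_natCast q (T m), ← zpow_natCast q (e n m),
        ← zpow_add₀ hq0, ← zpow_add₀ hq0, ← e_int n m]
      ring_nf
    calc q ^ E n * (q ^ T m * ((q⁻¹) ^ n) ^ m * B q (2*n) m)
        = (q ^ (E n) * (q ^ T m * ((q⁻¹) ^ n) ^ m)) * B q (2*n) m := by ring
      _ = _ := by rw [hsc]
  -- rewrite the LHS of key
  have hL : q ^ (E n) * ∏ k ∈ Finset.range (2*n), (1 + (q⁻¹) ^ n * q ^ (k + 1))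
      = (∏ j ∈ Finset.range n, (1 + q ^ (j + 1))) * ∏ j ∈ Finset.range n, (q ^ j + 1) := by
    have h2n : 2 * n = n + n := by ring
    rw [h2n, Finset.prod_range_add]
    have hhigh : ∀ k ∈ Finset.range n, (1 + (q⁻¹) ^ n * q ^ (n + k + 1)) = 1 + q ^ (k+1) := by
      intro k _
      congr 1
      rw [inv_pow, show n + k + 1 = n + (k+1) by ring, pow_add]
      field_simp
    rw [Finset.prod_congr rfl hhigh]
    have hlow : ∀ k ∈ Finset.range n, (1 + (q⁻¹) ^ n * q ^ (k + 1))
        = ((q⁻¹) ^ n * q ^ (k+1)) * (q ^ (n - 1 - k) + 1) := by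
      intro k hk
      have hk' : k < n := Finset.mem_range.mp hk
      have hcancel : (q⁻¹) ^ n * q ^ (k+1) * q ^ (n - 1 - k) = 1 := by
        rw [inv_pow, mul_assoc, ← pow_add]
        have : k + 1 + (n - 1 - k) = n := by omega
        rw [this]
        field_simp
      calc 1 + (q⁻¹) ^ n * q ^ (k + 1)
          = (q⁻¹) ^ n * q ^ (k+1) * q ^ (n - 1 - k) + (q⁻¹) ^ n * q ^ (k+1) * 1 := by
            rw [hcancel]; ring
        _ = _ := by ring
    rw [Finset.prod_congr rfl hlow, Finset.prod_mul_distrib, Finset.prod_mul_distrib,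
      Finset.prod_const, Finset.card_range, Finset.prod_pow_eq_pow_sum, sum_T,
      Finset.prod_range_reflect (fun j => q ^ j + 1) n]
    have hone : q ^ (E n) * (((q⁻¹) ^ n) ^ n * q ^ (T n)) = 1 := by
      have h1 : ((q⁻¹) ^ n) ^ n = q ^ (-((n : ℤ) * n)) := by
        rw [inv_pow, inv_pow, ← pow_mul, ← zpow_natCast q (n * n), ← zpow_neg]
        norm_num
      rw [h1, ← zpow_natCast q (E n), ← zpow_natCast q (T n), ← zpow_add₀ hq0, ← zpow_add₀ hq0]
      rw [show (E n : ℤ) + (-((n:ℤ) * n) + (T n : ℤ)) = 0 by have := E_add n; linarith]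
      simp
    calc q ^ E n * ((((q⁻¹) ^ n) ^ n * q ^ T n * ∏ j ∈ Finset.range n, (q ^ j + 1))
          * ∏ k ∈ Finset.range n, (1 + q ^ (k+1)))
        = (q ^ (E n) * (((q⁻¹) ^ n) ^ n * q ^ (T n))) * ((∏ j ∈ Finset.range n, (1 + q ^ (j + 1)))
            * ∏ j ∈ Finset.range n, (q ^ j + 1)) := by ring
      _ = _ := by rw [hone]; ring
  rw [hR, hL] at key
  exact key.symm

/-! ### Analytic infrastructure -/

lemma term_ne_zero {c t : ℂ} (hc : ‖c‖ < 1) (ht : ‖t‖ < 1) (n : ℕ) :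
    1 + c * t ^ n ≠ 0 := by
  intro h
  have h1 : c * t ^ n = -1 := by linear_combination h
  have h2 : ‖c * t ^ n‖ < 1 := by
    rw [norm_mul, norm_pow]
    calc ‖c‖ * ‖t‖ ^ n ≤ ‖c‖ * 1 := by
          refine mul_le_mul_of_nonneg_left ?_ (norm_nonneg c)
          exact pow_le_one₀ (norm_nonneg t) ht.le
      _ < 1 := by simpa using hc
  rw [h1] at h2
  simp at h2

lemma log_summable {c t : ℂ} (ht : ‖t‖ < 1) :
    Summable fun n : ℕ => Complex.log (1 + c * t ^ n) := by
  refine Summable.of_norm_bounded_eventually (g := fun n => 3/2 * (‖c‖ * ‖t‖ ^ n))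
    (by
      apply Summable.mul_left
      apply Summable.mul_left
      exact summable_geometric_of_lt_one (norm_nonneg t) ht) ?_
  rw [Nat.cofinite_eq_atTop]
  have htend : Tendsto (fun n : ℕ => ‖c‖ * ‖t‖ ^ n) atTop (𝓝 0) := by
    have := tendsto_pow_atTop_nhds_zero_of_lt_one (norm_nonneg t) ht
    simpa using this.const_mul (‖c‖)
  filter_upwards [htend.eventually (eventually_le_nhds (by norm_num : (0:ℝ) < 1/2))] with n hn
  have habs : ‖c * t ^ n‖ ≤ 1/2 := by
    rw [norm_mul, norm_pow]; exact hn
  have := Complex.norm_log_one_add_half_le_self (z := c * t ^ n) (by simpa using habs)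
  calc ‖Complex.log (1 + c * t ^ n)‖ ≤ 3/2 * ‖c * t ^ n‖ := this
    _ = 3/2 * (‖c‖ * ‖t‖ ^ n) := by
        rw [norm_mul, norm_pow]

lemma multipliable_one_add {c t : ℂ} (hc : ‖c‖ < 1) (ht : ‖t‖ < 1) :
    Multipliable (fun n : ℕ => 1 + c * t ^ n) := by
  exact Complex.multipliable_of_summable_log (log_summable ht)

lemma tprod_ne_zero {c t : ℂ} (hc : ‖c‖ < 1) (ht : ‖t‖ < 1) :
    (∏' n : ℕ, (1 + c * t ^ n)) ≠ 0 := by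
  have h2 := Complex.cexp_tsum_eq_tprod (f := fun n : ℕ => 1 + c * t ^ n)
    (fun n => term_ne_zero hc ht n) (log_summable ht)
  rw [← h2]
  exact Complex.exp_ne_zero _

section Limits

variable {q : ℂ} (hq : ‖q‖ < 1)

/-- the limit of the partial products `P q n` -/
noncomputable def Lq (q : ℂ) : ℂ := ∏' n : ℕ, (1 + (-q) * q ^ n)

lemma Lq_eq (q : ℂ) : Lq q = ∏' n : ℕ, (1 - q ^ (n+1)) := by
  refine tprod_congr fun n => ?_
  rw [pow_succ]
  ring

include hq

lemma P_tendsto : Tendsto (P q) atTop (𝓝 (Lq q)) := by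
  have hm := multipliable_one_add (c := -q) (t := q) (by simpa using hq) hq
  have := hm.hasProd.tendsto_prod_nat
  refine this.congr fun n => ?_
  rw [P]
  refine Finset.prod_congr rfl fun k _ => ?_
  rw [pow_succ]
  ring

lemma Lq_ne_zero : Lq q ≠ 0 :=
  tprod_ne_zero (by simpa using hq) hq

/-- uniform upper bound for the partial products -/
noncomputable def Mq (q : ℂ) : ℝ := Real.exp (∑' k : ℕ, ‖q‖ ^ (k+1))

omit hq in
lemma Mq_pos (q : ℂ) : 0 < Mq q := Real.exp_pos _

lemma P_le_Mq (n : ℕ) : ‖P q n‖ ≤ Mq q := by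
  have hsum : Summable fun k : ℕ => ‖q‖ ^ (k+1) := by
    have := summable_geometric_of_lt_one (norm_nonneg q) hq
    exact (summable_nat_add_iff 1).mpr this
  calc ‖P q n‖ = ∏ k ∈ Finset.range n, ‖1 - q ^ (k+1)‖ := by
        rw [P, norm_prod]
    _ ≤ ∏ k ∈ Finset.range n, Real.exp (‖q‖ ^ (k+1)) := by
        refine Finset.prod_le_prod (fun k _ => norm_nonneg _) fun k _ => ?_
        calc ‖1 - q ^ (k+1)‖ ≤ ‖(1:ℂ)‖ + ‖q ^ (k+1)‖ := by
              exact (norm_sub_le 1 (q ^ (k+1)))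
          _ = ‖q‖ ^ (k+1) + 1 := by rw [norm_one, norm_pow]; ring
          _ ≤ Real.exp (‖q‖ ^ (k+1)) := Real.add_one_le_exp _
    _ = Real.exp (∑ k ∈ Finset.range n, ‖q‖ ^ (k+1)) := by
        rw [Real.exp_sum]
    _ ≤ Mq q := by
        rw [Mq]
        apply Real.exp_le_exp.mpr
        exact Summable.sum_le_tsum _ (fun k _ => pow_nonneg (norm_nonneg q) _) hsum

lemma exists_c : ∃ c : ℝ, 0 < c ∧ ∀ n, c ≤ ‖P q n‖ := by
  have hL := (continuous_norm.tendsto (Lq q)).comp (P_tendsto hq)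
  have habs : 0 < ‖Lq q‖ := by
    simpa using (norm_pos_iff.mpr (Lq_ne_zero hq))
  have hev : ∀ᶠ n in atTop, ‖Lq q‖ / 2 ≤ ‖P q n‖ :=
    hL.eventually (eventually_ge_nhds (by linarith))
  obtain ⟨N, hN⟩ := hev.exists_forall_of_atTop
  refine ⟨min (‖Lq q‖ / 2)
    ((Finset.range (N+1)).inf' (by simp) fun n => ‖P q n‖), ?_, ?_⟩
  · apply lt_min (by linarith)
    rw [Finset.lt_inf'_iff]
    exact fun i _ => norm_pos_iff.mpr (P_ne_zero hq i)
  · intro n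
    rcases le_or_gt n N with h | h
    · refine le_trans (min_le_right _ _) ?_
      exact Finset.inf'_le _ (Finset.mem_range.mpr (by omega))
    · exact le_trans (min_le_left _ _) (hN n (by omega))

lemma tendsto_comp_P {g : ℕ → ℕ} (hg : Tendsto g atTop atTop) :
    Tendsto (fun n => P q (g n)) atTop (𝓝 (Lq q)) :=
  (P_tendsto hq).comp hg

lemma B_bound {c : ℝ} (hc0 : 0 < c) (hc : ∀ n, c ≤ ‖P q n‖) (N m : ℕ) :
    ‖B q N m‖ ≤ Mq q / (c * c) := by
  rcases le_or_gt m N with h | h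
  · rw [B, if_pos h, norm_div, norm_mul]
    apply div_le_div₀ (Mq_pos q).le (P_le_Mq hq N) (by positivity)
    exact mul_le_mul (hc m) (hc (N - m)) hc0.le (norm_nonneg _)
  · rw [B_of_gt q h, norm_zero]
    exact div_nonneg (Mq_pos q).le (by positivity)

lemma Btend1 (j : ℕ) :
    Tendsto (fun n => B q (2 * n) (n + j)) atTop (𝓝 (Lq q / (Lq q * Lq q))) := by
  have h2 : Tendsto (fun n : ℕ => P q (2 * n)) atTop (𝓝 (Lq q)) :=
    tendsto_comp_P hq (tendsto_atTop_atTop.mpr fun b => ⟨b, fun a ha => by omega⟩)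
  have h3 : Tendsto (fun n : ℕ => P q (n + j)) atTop (𝓝 (Lq q)) :=
    tendsto_comp_P hq (tendsto_atTop_atTop.mpr fun b => ⟨b, fun a ha => by omega⟩)
  have h4 : Tendsto (fun n : ℕ => P q (n - j)) atTop (𝓝 (Lq q)) :=
    tendsto_comp_P hq (tendsto_atTop_atTop.mpr fun b => ⟨b + j, fun a ha => by omega⟩)
  refine (h2.div (h3.mul h4) (mul_ne_zero (Lq_ne_zero hq) (Lq_ne_zero hq))).congr' ?_
  filter_upwards [eventually_ge_atTop j] with n hn
  rw [B, if_pos (by omega : n + j ≤ 2 * n), show 2*n - (n + j) = n - j by omega]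
  rfl

lemma Btend2 (j : ℕ) :
    Tendsto (fun n => B q (2 * n) (n - 1 - j)) atTop (𝓝 (Lq q / (Lq q * Lq q))) := by
  have h2 : Tendsto (fun n : ℕ => P q (2 * n)) atTop (𝓝 (Lq q)) :=
    tendsto_comp_P hq (tendsto_atTop_atTop.mpr fun b => ⟨b, fun a ha => by omega⟩)
  have h3 : Tendsto (fun n : ℕ => P q (n - 1 - j)) atTop (𝓝 (Lq q)) :=
    tendsto_comp_P hq (tendsto_atTop_atTop.mpr fun b => ⟨b + 1 + j, fun a ha => by omega⟩)
  have h4 : Tendsto (fun n : ℕ => P q (n + 1 + j)) atTop (𝓝 (Lq q)) :=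
    tendsto_comp_P hq (tendsto_atTop_atTop.mpr fun b => ⟨b, fun a ha => by omega⟩)
  refine (h2.div (h3.mul h4) (mul_ne_zero (Lq_ne_zero hq) (Lq_ne_zero hq))).congr' ?_
  filter_upwards [eventually_ge_atTop (j + 1)] with n hn
  rw [B, if_pos (by omega : n - 1 - j ≤ 2 * n), show 2*n - (n - 1 - j) = n + 1 + j by omega]
  rfl

lemma abs_q_pow_T_le (j : ℕ) : ‖q ^ T j‖ ≤ ‖q‖ ^ j := by
  rw [norm_pow]
  exact pow_le_pow_of_le_one (norm_nonneg q) hq.le (T_ge j)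

lemma psi_summable : Summable fun n : ℕ => q ^ T n := by
  refine Summable.of_norm_bounded (g := fun n => ‖q‖ ^ n)
    (summable_geometric_of_lt_one (norm_nonneg q) hq) fun n => ?_
  simpa using abs_q_pow_T_le hq n

/-- The second product in the centered identity. -/
noncomputable def Aq (q : ℂ) : ℂ := ∏' n : ℕ, (1 + q * q ^ n)

lemma Aq_tendsto : Tendsto (fun n => ∏ k ∈ Finset.range n, (1 + q ^ (k+1))) atTop (𝓝 (Aq q)) := by
  have hm := multipliable_one_add (c := q) (t := q) hq hq
  have := hm.hasProd.tendsto_prod_nat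
  refine this.congr fun n => ?_
  refine Finset.prod_congr rfl fun k _ => ?_
  rw [pow_succ]
  ring

lemma second_tendsto :
    Tendsto (fun n => ∏ j ∈ Finset.range n, (q ^ j + 1)) atTop (𝓝 (2 * Aq q)) := by
  rw [← Filter.tendsto_add_atTop_iff_nat 1]
  have heq : ∀ n : ℕ, (∏ j ∈ Finset.range (n + 1), (q ^ j + 1))
      = 2 * ∏ k ∈ Finset.range n, (1 + q ^ (k+1)) := by
    intro n
    rw [Finset.prod_range_succ']
    simp only [pow_zero]
    rw [mul_comm]
    norm_num
    refine Finset.prod_congr rfl fun k _ => by ring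
  refine (((Aq_tendsto hq).const_mul 2).congr fun n => (heq n).symm)

lemma psi_eq (hq0 : q ≠ 0) :
    ∑' n : ℕ, q ^ T n = Lq q * (Aq q * Aq q) := by
  obtain ⟨c, hc0, hc⟩ := exists_c hq
  set X : ℂ := Lq q / (Lq q * Lq q) with hX
  set F : ℕ → ℕ → ℂ := fun n j =>
    (if j ≤ n then q ^ T j * B q (2*n) (n+j) else 0)
      + (if j + 1 ≤ n then q ^ T j * B q (2*n) (n-1-j) else 0) with hF
  -- each ∑' j, F n j equals the centered sum
  have hS : ∀ n : ℕ, ∑' j, F n j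
      = ∑ m ∈ Finset.range (2 * n + 1), q ^ (e n m) * B q (2 * n) m := by
    intro n
    have hzero : ∀ j ∉ Finset.range (n + 1), F n j = 0 := by
      intro j hj
      rw [Finset.mem_range] at hj
      simp only [hF, if_neg (by omega : ¬ j ≤ n), if_neg (by omega : ¬ j + 1 ≤ n), add_zero]
    rw [tsum_eq_sum hzero]
    have hsplit : ∑ j ∈ Finset.range (n+1), F n j
        = (∑ j ∈ Finset.range (n+1), q ^ T j * B q (2*n) (n+j))
          + ∑ j ∈ Finset.range n, q ^ T j * B q (2*n) (n-1-j) := by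
      rw [hF]
      rw [Finset.sum_add_distrib]
      congr 1
      · refine Finset.sum_congr rfl fun j hj => ?_
        rw [Finset.mem_range] at hj
        rw [if_pos (by omega)]
      · rw [Finset.sum_range_succ, if_neg (by omega), add_zero]
        refine Finset.sum_congr rfl fun j hj => ?_
        rw [Finset.mem_range] at hj
        rw [if_pos (by omega)]
    rw [hsplit]
    have h2n1 : 2 * n + 1 = n + (n + 1) := by ring
    rw [h2n1, Finset.sum_range_add (fun m => q ^ e n m * B q (2*n) m) n (n+1)]
    rw [add_comm]
    congr 1
    · rw [← Finset.sum_range_reflect (fun m => q ^ e n m * B q (2*n) m) n]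
      refine Finset.sum_congr rfl fun j hj => ?_
      rw [Finset.mem_range] at hj
      have he : e n (n - 1 - j) = T j := by
        rw [e, if_neg (by omega)]
        rw [show n - (n - 1 - j) = j + 1 by omega, T_succ]
        omega
      rw [he]
    · refine Finset.sum_congr rfl fun k hk => ?_
      have he : e n (n + k) = T k := by rw [e, if_pos (by omega), Nat.add_sub_cancel_left]
      rw [he]
  -- limits of both sides
  have hLlim : Tendsto (fun n => ∑' j, F n j) atTop
      (𝓝 (∑' j : ℕ, (2 * X) * q ^ T j)) := by
    apply tendsto_tsum_of_dominated_convergence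
      (bound := fun j => 2 * (Mq q / (c * c)) * ‖q‖ ^ j)
    · apply Summable.mul_left
      exact summable_geometric_of_lt_one (norm_nonneg q) hq
    · intro j
      have h1 : Tendsto (fun n => q ^ T j * B q (2*n) (n+j)) atTop (𝓝 (q ^ T j * X)) :=
        (Btend1 hq j).const_mul _
      have h2 : Tendsto (fun n => q ^ T j * B q (2*n) (n-1-j)) atTop (𝓝 (q ^ T j * X)) :=
        (Btend2 hq j).const_mul _
      have h3 := h1.add h2
      have heq : q ^ T j * X + q ^ T j * X = (2 * X) * q ^ T j := by ring
      rw [heq] at h3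
      refine h3.congr' ?_
      filter_upwards [eventually_ge_atTop (j + 1)] with n hn
      simp only [hF]
      rw [if_pos (by omega : j ≤ n), if_pos (by omega : j + 1 ≤ n)]
    · apply Filter.Eventually.of_forall
      intro n j
      have hB1 := B_bound hq hc0 hc (2*n) (n+j)
      have hB2 := B_bound hq hc0 hc (2*n) (n-1-j)
      have hT := abs_q_pow_T_le hq j
      have hMc : (0:ℝ) ≤ Mq q / (c * c) := div_nonneg (Mq_pos q).le (by positivity)
      have habs1 : ∀ (m : ℕ), ‖q ^ T j * B q (2*n) m‖ ≤ (Mq q / (c*c)) * ‖q‖ ^ j := by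
        intro m
        rw [norm_mul]
        calc ‖q ^ T j‖ * ‖B q (2*n) m‖
            ≤ ‖q‖ ^ j * (Mq q / (c*c)) := by
              exact mul_le_mul hT (B_bound hq hc0 hc (2*n) m) (norm_nonneg _)
                (pow_nonneg (norm_nonneg q) j)
          _ = (Mq q / (c*c)) * ‖q‖ ^ j := by ring
      calc ‖F n j‖ ≤ ‖(if j ≤ n then q ^ T j * B q (2*n) (n+j) else 0)‖
            + ‖(if j + 1 ≤ n then q ^ T j * B q (2*n) (n-1-j) else 0)‖ := norm_add_le _ _
        _ ≤ (Mq q / (c*c)) * ‖q‖ ^ j + (Mq q / (c*c)) * ‖q‖ ^ j := by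
            apply add_le_add
            · split_ifs with h
              · exact habs1 _
              · simp only [norm_zero]
                exact mul_nonneg hMc (by positivity)
            · split_ifs with h
              · exact habs1 _
              · simp only [norm_zero]
                exact mul_nonneg hMc (by positivity)
        _ = 2 * (Mq q / (c * c)) * ‖q‖ ^ j := by ring
  have hRlim : Tendsto (fun n => (∏ j ∈ Finset.range n, (1 + q ^ (j+1)))
      * ∏ j ∈ Finset.range n, (q ^ j + 1)) atTop (𝓝 (Aq q * (2 * Aq q))) :=
    (Aq_tendsto hq).mul (second_tendsto hq)
  have hcongr : (fun n => ∑' j, F n j) = fun n => (∏ j ∈ Finset.range n, (1 + q ^ (j+1)))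
      * ∏ j ∈ Finset.range n, (q ^ j + 1) := by
    funext n
    rw [hS n, central hq hq0 n]
  rw [hcongr] at hLlim
  have huniq := tendsto_nhds_unique hLlim hRlim
  -- huniq : ∑' j, (2*X) * q^T j = Aq * (2*Aq)
  rw [tsum_mul_left] at huniq
  have hLne := Lq_ne_zero hq
  have hXval : X = (Lq q)⁻¹ := by
    rw [hX]
    field_simp
  rw [hXval] at huniq
  have hψ := psi_summable hq
  field_simp at huniq
  -- huniq should now give the result
  linear_combination huniq

end Limits

section Final

variable {q : ℂ} (hq : ‖q‖ < 1)

include hq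

lemma abs_neg_q : ‖-q‖ < 1 := by simpa using hq

lemma abs_q_sq : ‖q ^ 2‖ < 1 := by
  rw [norm_pow]
  exact pow_lt_one₀ (norm_nonneg q) hq (by norm_num)

lemma abs_neg_q_sq : ‖-(q ^ 2)‖ < 1 := by
  simpa using abs_q_sq hq

/-- odd-index product -/
noncomputable def Podd (q : ℂ) : ℂ := ∏' n : ℕ, (1 + (-q) * (q ^ 2) ^ n)

/-- even-index product -/
noncomputable def Peven (q : ℂ) : ℂ := ∏' n : ℕ, (1 + (-(q ^ 2)) * (q ^ 2) ^ n)

lemma Podd_ne_zero : Podd q ≠ 0 := tprod_ne_zero (abs_neg_q hq) (abs_q_sq hq)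

lemma Peven_ne_zero : Peven q ≠ 0 := tprod_ne_zero (abs_neg_q_sq hq) (abs_q_sq hq)

lemma Lq_split : Lq q = Podd q * Peven q := by
  rw [Lq_eq]
  have he : Multipliable fun k : ℕ => 1 - q ^ (2 * k + 1) := by
    refine (multipliable_one_add (abs_neg_q hq) (abs_q_sq hq)).congr fun k => ?_
    ring
  have ho : Multipliable fun k : ℕ => 1 - q ^ (2 * k + 1 + 1) := by
    refine (multipliable_one_add (abs_neg_q_sq hq) (abs_q_sq hq)).congr fun k => ?_
    ring
  have h := tprod_even_mul_odd (f := fun n : ℕ => 1 - q ^ (n + 1))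
    (by refine he.congr fun k => ?_; norm_num)
    (by refine ho.congr fun k => ?_; ring_nf)
  rw [← h]
  congr 1
  · rw [Podd]
    exact tprod_congr fun k => by ring
  · rw [Peven]
    exact tprod_congr fun k => by ring

lemma Lq_mul_Aq : Lq q * Aq q = Peven q := by
  rw [Lq, Aq, ← Multipliable.tprod_mul (multipliable_one_add (abs_neg_q hq) hq)
    (multipliable_one_add hq hq)]
  refine tprod_congr fun n => ?_
  ring

end Final

end GaussThetaAux

/-- Gauss: for `|q| < 1`, `∑_{n≥0} q^{n(n+1)/2} = (q²;q²)_∞ / (q;q²)_∞`. -/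
theorem gauss_triangular_theta (q : ℂ) (hq : ‖q‖ < 1) :
    ∑' n : ℕ, q ^ (n * (n + 1) / 2) =
      (∏' n : ℕ, (1 - q ^ 2 * (q ^ 2) ^ n)) / ∏' n : ℕ, (1 - q * (q ^ 2) ^ n) := by
  open GaussThetaAux in
  by_cases hq0 : q = 0
  · subst hq0
    have hL : ∑' n : ℕ, (0:ℂ) ^ (n * (n + 1) / 2) = 1 := by
      rw [tsum_eq_single 0 ?_]
      · norm_num
      · intro n hn
        apply zero_pow
        have h1 := GaussThetaAux.T_ge n
        have : GaussThetaAux.T n = n * (n + 1) / 2 := rfl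
        omega
    rw [hL]
    norm_num
  · have h1 := GaussThetaAux.psi_eq hq hq0
    have hPe : (∏' n : ℕ, (1 - q ^ 2 * (q ^ 2) ^ n)) = GaussThetaAux.Peven q := by
      rw [GaussThetaAux.Peven]
      exact tprod_congr fun n => by ring
    have hPo : (∏' n : ℕ, (1 - q * (q ^ 2) ^ n)) = GaussThetaAux.Podd q := by
      rw [GaussThetaAux.Podd]
      exact tprod_congr fun n => by ring
    rw [hPe, hPo]
    have hLs := GaussThetaAux.Lq_split hq
    have hLA := GaussThetaAux.Lq_mul_Aq hq
    have hPoddne := GaussThetaAux.Podd_ne_zero hq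
    have hPevenne := GaussThetaAux.Peven_ne_zero hq
    have hPA : GaussThetaAux.Podd q * GaussThetaAux.Aq q = 1 := by
      apply mul_left_cancel₀ hPevenne
      linear_combination (- GaussThetaAux.Aq q) * hLs + hLA
    rw [eq_div_iff hPoddne]
    have hψ : ∑' n : ℕ, q ^ (n * (n + 1) / 2) = ∑' n : ℕ, q ^ (GaussThetaAux.T n) := rfl
    rw [hψ, h1]
    linear_combination (GaussThetaAux.Aq q * GaussThetaAux.Podd q) * hLA
      + GaussThetaAux.Peven q * hPA
end

section
/- (Entrywise form of the main theorem, case j ≥ 1.) Let q be a real (or complex) number with 0 < |q| < 1. Then for all integers i ≥ 0 and j ≥ 1: -∑_{m=1}^{i} (q^{4(i-m)} / (1 - q^{16(i-m)+8})) · q^{(4m-1)(4j-1)} + ∑_{m=i+1}^{∞} (q^{12(m-i-1)+4} / (1 - q^{16(m-i-1)+8})) · q^{(4m-1)(4j-1)} = -∑_{n=0}^{j-1} (q^{12(j-n-1)+4} / (1 - q^{16(j-n-1)+8})) · q^{(4n+1)(4i+1)} + ∑_{n=j}^{∞} (q^{4(n-j)} / (1 - q^{16(n-j)+8})) · q^{(4n+1)(4i+1)}.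 -/
open Finset

/-! Auxiliary definitions: exponent functions and the index bijection. -/

/-- Exponent of the `(k,l)` term of the expanded second sum of the LHS. -/
def emA (i j k l : ℕ) : ℕ := 12 * k + 4 + (16 * k + 8) * l + (4 * (i + 1 + k) - 1) * (4 * j - 1)

/-- Exponent of the `(s,l)` term of the expanded first sum of the RHS (after reflection). -/
def emB (i j s l : ℕ) : ℕ := 12 * s + 4 + (16 * s + 8) * l + (4 * (j - 1 - s) + 1) * (4 * i + 1)

/-- Exponent of the `(k,l)` term of the expanded second sum of the RHS. -/
def emC (i j k l : ℕ) : ℕ := 4 * k + (16 * k + 8) * l + (4 * (j + k) + 1) * (4 * i + 1)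

/-- Exponent of the `(t,l)` term of the expanded first sum of the LHS (after reindexing). -/
def emD (i j t l : ℕ) : ℕ := 4 * t + (16 * t + 8) * l + (4 * (i - t) - 1) * (4 * j - 1)

/-- The exponent-preserving index bijection. -/
def phiMap (i j : ℕ) : ℕ × ℕ ⊕ ℕ × ℕ → ℕ × ℕ ⊕ ℕ × ℕ :=
  Sum.elim
    (fun p => if i ≤ j + p.2 then .inl (p.1, j + p.2 - i) else .inr (j + p.2, p.1 + j))
    (fun p => if p.1 < i then
        (if i ≤ p.2 + j then .inr (p.1, p.2 + j - i) else .inr (i - p.2 - 1, j - p.1 - 1))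
      else (if i ≤ p.2 then .inl (p.2 - i, p.1 - i) else .inr (i - p.2 - 1, j - p.1 - 1)))

/-- "Left" family of terms. -/
def fL (q : ℂ) (i j : ℕ) : ℕ × ℕ ⊕ ℕ × ℕ → ℂ :=
  Sum.elim (fun p => q ^ emA i j p.1 p.2)
    (fun p => if p.1 < j then q ^ emB i j p.1 p.2 else 0)

/-- "Right" family of terms. -/
def fR (q : ℂ) (i j : ℕ) : ℕ × ℕ ⊕ ℕ × ℕ → ℂ :=
  Sum.elim (fun p => q ^ emC i j p.1 p.2)
    (fun p => if p.1 < i then q ^ emD i j p.1 p.2 else 0)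

/-- "Good" indices: second-component indices in range. -/
def goodIdx (m : ℕ) : ℕ × ℕ ⊕ ℕ × ℕ → Prop :=
  Sum.elim (fun _ => True) (fun p => p.1 < m)

lemma phiMap_good (i j : ℕ) (x : ℕ × ℕ ⊕ ℕ × ℕ) (hx : goodIdx j x) :
    goodIdx i (phiMap i j x) := by
  rcases x with ⟨k, l⟩ | ⟨s, l⟩ <;>
    simp only [goodIdx, phiMap, Sum.elim_inl, Sum.elim_inr] at hx ⊢ <;>
    split_ifs <;> simp only [goodIdx, Sum.elim_inl, Sum.elim_inr] <;> omega

lemma phiMap_inv (i j : ℕ) (x : ℕ × ℕ ⊕ ℕ × ℕ) (hx : goodIdx i x) :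
    phiMap i j (phiMap j i x) = x := by
  rcases x with ⟨k, l⟩ | ⟨t, l⟩ <;>
    simp only [goodIdx, Sum.elim_inl, Sum.elim_inr] at hx <;>
    simp only [phiMap, Sum.elim_inl, Sum.elim_inr] <;>
    split_ifs <;>
    simp only [phiMap, Sum.elim_inl, Sum.elim_inr] <;>
    split_ifs <;>
    (try simp only [Sum.inl.injEq, Sum.inr.injEq, Prod.mk.injEq, reduceCtorEq,
      true_and, and_true]) <;>
    omega

lemma exponent_eq (q : ℂ) (i j : ℕ) (hj : 1 ≤ j) (y : ℕ × ℕ ⊕ ℕ × ℕ)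
    (hy : goodIdx i y) : fL q i j (phiMap j i y) = fR q i j y := by
  rcases y with ⟨k, l⟩ | ⟨t, l⟩
  · simp only [phiMap, Sum.elim_inl]
    split_ifs with h1
    · simp only [fL, fR, Sum.elim_inl]
      refine congrArg (fun n => q ^ n) ?_
      simp only [emA, emC]
      zify [h1, show (1:ℕ) ≤ 4 * (i + 1 + k) by omega, show (1:ℕ) ≤ 4 * j by omega]
      ring
    · simp only [fL, fR, Sum.elim_inl, Sum.elim_inr]
      rw [if_pos (show i + l < j by omega)]
      refine congrArg (fun n => q ^ n) ?_
      simp only [emB, emC]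
      zify [show i + l ≤ j - 1 by omega, show (1:ℕ) ≤ j from hj]
      ring
  · simp only [goodIdx, Sum.elim_inr] at hy
    simp only [phiMap, Sum.elim_inl, Sum.elim_inr]
    split_ifs with h1 h2 h3
    · -- t < j, j ≤ l + i : inr (t, l + i - j)
      simp only [fL, fR, Sum.elim_inr]
      rw [if_pos h1, if_pos hy]
      refine congrArg (fun n => q ^ n) ?_
      simp only [emB, emD]
      zify [h2, show t ≤ j - 1 by omega, show (1:ℕ) ≤ j from hj,
        show t ≤ i by omega, show (1:ℕ) ≤ 4 * (i - t) by omega,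
        show (1:ℕ) ≤ 4 * j by omega]
      ring
    · -- t < j, l + i < j : inr (j - l - 1, i - t - 1)
      simp only [fL, fR, Sum.elim_inr]
      rw [if_pos (show j - l - 1 < j by omega), if_pos hy]
      refine congrArg (fun n => q ^ n) ?_
      simp only [emB, emD]
      zify [show l ≤ j by omega, show (1:ℕ) ≤ j - l by omega,
        show l + 1 ≤ j by omega, show j - l - 1 ≤ j - 1 by omega,
        show (1:ℕ) ≤ j from hj, show t ≤ i by omega, show (1:ℕ) ≤ i - t by omega,
        show (1:ℕ) ≤ 4 * (i - t) by omega, show (1:ℕ) ≤ 4 * j by omega,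
        show j - 1 - (j - l - 1) = l by omega]
      ring
    · -- j ≤ t, j ≤ l : inl (l - j, t - j)
      simp only [fL, fR, Sum.elim_inl, Sum.elim_inr]
      rw [if_pos hy]
      refine congrArg (fun n => q ^ n) ?_
      simp only [emA, emD]
      zify [h3, show j ≤ t by omega, show t ≤ i by omega,
        show (1:ℕ) ≤ 4 * (i + 1 + (l - j)) by omega,
        show (1:ℕ) ≤ 4 * (i - t) by omega, show (1:ℕ) ≤ 4 * j by omega]
      ring
    · -- j ≤ t, l < j : inr (j - l - 1, i - t - 1)
      simp only [fL, fR, Sum.elim_inr]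
      rw [if_pos (show j - l - 1 < j by omega), if_pos hy]
      refine congrArg (fun n => q ^ n) ?_
      simp only [emB, emD]
      zify [show l ≤ j by omega, show (1:ℕ) ≤ j - l by omega,
        show l + 1 ≤ j by omega, show j - l - 1 ≤ j - 1 by omega,
        show (1:ℕ) ≤ j from hj, show t ≤ i by omega, show (1:ℕ) ≤ i - t by omega,
        show (1:ℕ) ≤ 4 * (i - t) by omega, show (1:ℕ) ≤ 4 * j by omega,
        show j - 1 - (j - l - 1) = l by omega]
      ring

lemma fR_ne_zero (q : ℂ) (hq : q ≠ 0) (i j : ℕ) (y : ℕ × ℕ ⊕ ℕ × ℕ) (hy : goodIdx i y) :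
    fR q i j y ≠ 0 := by
  rcases y with ⟨k, l⟩ | ⟨t, l⟩
  · exact pow_ne_zero _ hq
  · simp only [goodIdx, Sum.elim_inr] at hy
    simp only [fR, Sum.elim_inr, if_pos hy]
    exact pow_ne_zero _ hq

lemma fR_good (q : ℂ) (i j : ℕ) (y : ℕ × ℕ ⊕ ℕ × ℕ) (hy : fR q i j y ≠ 0) :
    goodIdx i y := by
  rcases y with ⟨k, l⟩ | ⟨t, l⟩
  · trivial
  · simp only [goodIdx, Sum.elim_inr]
    by_contra h
    exact hy (by simp [fR, if_neg h])

lemma fL_good (q : ℂ) (i j : ℕ) (x : ℕ × ℕ ⊕ ℕ × ℕ) (hx : fL q i j x ≠ 0) :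
    goodIdx j x := by
  rcases x with ⟨k, l⟩ | ⟨s, l⟩
  · trivial
  · simp only [goodIdx, Sum.elim_inr]
    by_contra h
    exact hx (by simp [fL, if_neg h])

/-- The core rearrangement: the two families have equal sums. -/
lemma core_tsum_eq (q : ℂ) (hq : q ≠ 0) (i j : ℕ) (hj : 1 ≤ j) :
    ∑' x, fL q i j x = ∑' y, fR q i j y := by
  refine tsum_eq_tsum_of_ne_zero_bij (fun y => phiMap j i y.1) ?_ ?_ ?_
  · intro y₁ y₂ h
    have g1 := fR_good q i j y₁.1 y₁.2
    have g2 := fR_good q i j y₂.1 y₂.2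
    have := congrArg (phiMap i j) h
    rw [phiMap_inv i j _ g1, phiMap_inv i j _ g2] at this
    exact Subtype.ext this
  · intro x hx
    have gx : goodIdx j x := fL_good q i j x hx
    refine ⟨⟨phiMap i j x, fR_ne_zero q hq i j _ (phiMap_good i j x gx)⟩, ?_⟩
    exact phiMap_inv j i x gx
  · intro y
    exact exponent_eq q i j hj y.1 (fR_good q i j y.1 y.2)

/-- Summability of masked geometric-type double families. -/
lemma summable_mask (q : ℂ) (hq : ‖q‖ < 1) (c : ℕ × ℕ → ℕ)
    (hc : ∀ p, p.1 + p.2 ≤ c p) (P : ℕ × ℕ → Prop) [DecidablePred P] :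
    Summable fun p => if P p then q ^ c p else 0 := by
  have hgeo : Summable fun n : ℕ => ‖q‖ ^ n :=
    summable_geometric_of_lt_one (norm_nonneg q) hq
  have hbase : Summable fun p : ℕ × ℕ => ‖q‖ ^ p.1 * ‖q‖ ^ p.2 :=
    hgeo.mul_of_nonneg hgeo (fun n => pow_nonneg (norm_nonneg q) n)
      (fun n => pow_nonneg (norm_nonneg q) n)
  refine Summable.of_norm (hbase.of_nonneg_of_le (fun p => norm_nonneg _) fun p => ?_)
  rw [← pow_add]
  by_cases h : P p
  · rw [if_pos h, norm_pow]
    exact pow_le_pow_of_le_one (norm_nonneg q) hq.le (hc p)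
  · rw [if_neg h, norm_zero]
    positivity

lemma summable_plain (q : ℂ) (hq : ‖q‖ < 1) (c : ℕ × ℕ → ℕ)
    (hc : ∀ p, p.1 + p.2 ≤ c p) : Summable fun p => q ^ c p := by
  have := summable_mask q hq c hc (fun _ => True)
  simpa using this

/-- Geometric expansion of a single term. -/
lemma geom_expand (q : ℂ) (hq : ‖q‖ < 1) (a M b : ℕ) (hM : M ≠ 0) :
    q ^ a / (1 - q ^ M) * q ^ b = ∑' l : ℕ, q ^ (a + M * l + b) := by
  have hr : ‖q ^ M‖ < 1 := by
    rw [norm_pow]; exact pow_lt_one₀ (norm_nonneg q) hq hM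
  calc q ^ a / (1 - q ^ M) * q ^ b = q ^ a * q ^ b * (1 - q ^ M)⁻¹ := by
        rw [div_eq_mul_inv]; ring
    _ = q ^ a * q ^ b * ∑' l : ℕ, (q ^ M) ^ l := by
        rw [tsum_geometric_of_norm_lt_one hr]
    _ = ∑' l : ℕ, q ^ a * q ^ b * (q ^ M) ^ l := (tsum_mul_left).symm
    _ = ∑' l : ℕ, q ^ (a + M * l + b) := tsum_congr fun l => by
        rw [← pow_mul, ← pow_add, ← pow_add]; congr 1; ring

/-- Splitting a sum over a sum type. -/
lemma hasSum_sum_type {α β : Type*} {f : α ⊕ β → ℂ}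
    (h1 : Summable fun a => f (.inl a)) (h2 : Summable fun b => f (.inr b)) :
    HasSum f ((∑' a, f (.inl a)) + ∑' b, f (.inr b)) := by
  have e1 : HasSum (f ∘ ((↑) : Set.range (Sum.inl : α → α ⊕ β) → α ⊕ β))
      (∑' a, f (.inl a)) := by
    rw [← (Equiv.ofInjective (Sum.inl : α → α ⊕ β) Sum.inl_injective).hasSum_iff]
    exact h1.hasSum
  have e2 : HasSum (f ∘ ((↑) : Set.range (Sum.inr : β → α ⊕ β) → α ⊕ β))
      (∑' b, f (.inr b)) := by
    rw [← (Equiv.ofInjective (Sum.inr : β → α ⊕ β) Sum.inr_injective).hasSum_iff]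
    exact h2.hasSum
  exact e1.add_isCompl Set.isCompl_range_inl_range_inr e2

/-- Entrywise form of the main theorem, case `j ≥ 1`: `(XB)_{ij} = (AX)_{ij}`.
The infinite sums `∑_{m=i+1}^∞` and `∑_{n=j}^∞` are written via the substitutions
`m = i+1+k` and `n = j+k` with `k` ranging over `ℕ`. -/
theorem entrywise_main_theorem_j_pos (q : ℂ) (hq0 : 0 < ‖q‖)
    (hq1 : ‖q‖ < 1) (i j : ℕ) (hj : 1 ≤ j) :
    -(∑ m ∈ Finset.Icc 1 i,
        q ^ (4 * (i - m)) / (1 - q ^ (16 * (i - m) + 8)) * q ^ ((4 * m - 1) * (4 * j - 1)))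
      + ∑' k : ℕ,
          q ^ (12 * k + 4) / (1 - q ^ (16 * k + 8)) * q ^ ((4 * (i + 1 + k) - 1) * (4 * j - 1)) =
    -(∑ n ∈ Finset.range j,
        q ^ (12 * (j - n - 1) + 4) / (1 - q ^ (16 * (j - n - 1) + 8)) *
          q ^ ((4 * n + 1) * (4 * i + 1)))
      + ∑' k : ℕ,
          q ^ (4 * k) / (1 - q ^ (16 * k + 8)) * q ^ ((4 * (j + k) + 1) * (4 * i + 1)) := by
  have hqne : q ≠ 0 := by
    intro h; rw [h] at hq0; simp at hq0
  have hq : ‖q‖ < 1 := hq1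
  -- summability of the four double families
  have hcA : ∀ p : ℕ × ℕ, p.1 + p.2 ≤ emA i j p.1 p.2 := by
    intro ⟨a, b⟩
    have h := Nat.le_mul_of_pos_left b (show 0 < 16 * a + 8 by omega)
    simp only [emA]; omega
  have hcB : ∀ p : ℕ × ℕ, p.1 + p.2 ≤ emB i j p.1 p.2 := by
    intro ⟨a, b⟩
    have h := Nat.le_mul_of_pos_left b (show 0 < 16 * a + 8 by omega)
    simp only [emB]; omega
  have hcC : ∀ p : ℕ × ℕ, p.1 + p.2 ≤ emC i j p.1 p.2 := by
    intro ⟨a, b⟩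
    have h := Nat.le_mul_of_pos_left b (show 0 < 16 * a + 8 by omega)
    simp only [emC]; omega
  have hcD : ∀ p : ℕ × ℕ, p.1 + p.2 ≤ emD i j p.1 p.2 := by
    intro ⟨a, b⟩
    have h := Nat.le_mul_of_pos_left b (show 0 < 16 * a + 8 by omega)
    simp only [emD]; omega
  have sA : Summable fun p : ℕ × ℕ => q ^ emA i j p.1 p.2 :=
    summable_plain q hq _ hcA
  have sB : Summable fun p : ℕ × ℕ => if p.1 < j then q ^ emB i j p.1 p.2 else 0 :=
    summable_mask q hq _ hcB _
  have sC : Summable fun p : ℕ × ℕ => q ^ emC i j p.1 p.2 :=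
    summable_plain q hq _ hcC
  have sD : Summable fun p : ℕ × ℕ => if p.1 < i then q ^ emD i j p.1 p.2 else 0 :=
    summable_mask q hq _ hcD _
  -- the four sums as tsums over ℕ × ℕ
  have h1 : (∑' k : ℕ,
      q ^ (12 * k + 4) / (1 - q ^ (16 * k + 8)) * q ^ ((4 * (i + 1 + k) - 1) * (4 * j - 1)))
      = ∑' p : ℕ × ℕ, fL q i j (.inl p) := by
    calc (∑' k : ℕ, q ^ (12 * k + 4) / (1 - q ^ (16 * k + 8)) *
          q ^ ((4 * (i + 1 + k) - 1) * (4 * j - 1)))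
        = ∑' k : ℕ, ∑' l : ℕ, q ^ emA i j k l :=
          tsum_congr fun k => geom_expand q hq _ _ _ (by omega)
      _ = ∑' p : ℕ × ℕ, fL q i j (.inl p) := (Summable.tsum_prod' sA sA.prod_factor).symm
  have h3 : (∑' k : ℕ,
      q ^ (4 * k) / (1 - q ^ (16 * k + 8)) * q ^ ((4 * (j + k) + 1) * (4 * i + 1)))
      = ∑' p : ℕ × ℕ, fR q i j (.inl p) := by
    calc (∑' k : ℕ, q ^ (4 * k) / (1 - q ^ (16 * k + 8)) *
          q ^ ((4 * (j + k) + 1) * (4 * i + 1)))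
        = ∑' k : ℕ, ∑' l : ℕ, q ^ emC i j k l :=
          tsum_congr fun k => geom_expand q hq _ _ _ (by omega)
      _ = ∑' p : ℕ × ℕ, fR q i j (.inl p) := (Summable.tsum_prod' sC sC.prod_factor).symm
  have h2 : (∑ n ∈ Finset.range j,
      q ^ (12 * (j - n - 1) + 4) / (1 - q ^ (16 * (j - n - 1) + 8)) *
        q ^ ((4 * n + 1) * (4 * i + 1)))
      = ∑' p : ℕ × ℕ, fL q i j (.inr p) := by
    rw [← Finset.sum_range_reflect]
    have step1 : ∀ s ∈ Finset.range j,
        q ^ (12 * (j - (j - 1 - s) - 1) + 4) / (1 - q ^ (16 * (j - (j - 1 - s) - 1) + 8)) *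
          q ^ ((4 * (j - 1 - s) + 1) * (4 * i + 1))
        = ∑' l : ℕ, q ^ emB i j s l := by
      intro s hs
      rw [Finset.mem_range] at hs
      rw [show j - (j - 1 - s) - 1 = s by omega]
      exact geom_expand q hq _ _ _ (by omega)
    rw [Finset.sum_congr rfl step1]
    have step2 : (∑' p : ℕ × ℕ, fL q i j (.inr p))
        = ∑' s : ℕ, ∑' l : ℕ, (if s < j then q ^ emB i j s l else 0) :=
      Summable.tsum_prod' sB sB.prod_factor
    rw [step2]
    have step3 : (∑' s : ℕ, ∑' l : ℕ, (if s < j then q ^ emB i j s l else 0))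
        = ∑' s : ℕ, (if s < j then ∑' l : ℕ, q ^ emB i j s l else 0) := by
      refine tsum_congr fun s => ?_
      by_cases h : s < j
      · simp only [if_pos h]
      · simp only [if_neg h, tsum_zero]
    rw [step3]
    rw [tsum_eq_sum (s := Finset.range j)
      (by intro b hb; rw [Finset.mem_range] at hb; exact if_neg hb)]
    exact (Finset.sum_congr rfl fun s hs => by
      rw [Finset.mem_range] at hs; rw [if_pos hs]).symm
  have h4 : (∑ m ∈ Finset.Icc 1 i,
      q ^ (4 * (i - m)) / (1 - q ^ (16 * (i - m) + 8)) * q ^ ((4 * m - 1) * (4 * j - 1)))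
      = ∑' p : ℕ × ℕ, fR q i j (.inr p) := by
    have reindex : (∑ m ∈ Finset.Icc 1 i,
        q ^ (4 * (i - m)) / (1 - q ^ (16 * (i - m) + 8)) * q ^ ((4 * m - 1) * (4 * j - 1)))
        = ∑ t ∈ Finset.range i,
          q ^ (4 * t) / (1 - q ^ (16 * t + 8)) * q ^ ((4 * (i - t) - 1) * (4 * j - 1)) := by
      refine Finset.sum_nbij' (fun m => i - m) (fun t => i - t) ?_ ?_ ?_ ?_ ?_
      · intro m hm; rw [Finset.mem_Icc] at hm; simp only [Finset.mem_range]; omega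
      · intro t ht; rw [Finset.mem_range] at ht; simp only [Finset.mem_Icc]; omega
      · intro m hm; rw [Finset.mem_Icc] at hm; omega
      · intro t ht; rw [Finset.mem_range] at ht; omega
      · intro m hm
        rw [Finset.mem_Icc] at hm
        rw [show i - (i - m) = m by omega]
    rw [reindex]
    have step1 : ∀ t ∈ Finset.range i,
        q ^ (4 * t) / (1 - q ^ (16 * t + 8)) * q ^ ((4 * (i - t) - 1) * (4 * j - 1))
        = ∑' l : ℕ, q ^ emD i j t l := by
      intro t ht
      exact geom_expand q hq _ _ _ (by omega)
    rw [Finset.sum_congr rfl step1]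
    have step2 : (∑' p : ℕ × ℕ, fR q i j (.inr p))
        = ∑' t : ℕ, ∑' l : ℕ, (if t < i then q ^ emD i j t l else 0) :=
      Summable.tsum_prod' sD sD.prod_factor
    rw [step2]
    have step3 : (∑' t : ℕ, ∑' l : ℕ, (if t < i then q ^ emD i j t l else 0))
        = ∑' t : ℕ, (if t < i then ∑' l : ℕ, q ^ emD i j t l else 0) := by
      refine tsum_congr fun t => ?_
      by_cases h : t < i
      · simp only [if_pos h]
      · simp only [if_neg h, tsum_zero]
    rw [step3]
    rw [tsum_eq_sum (s := Finset.range i)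
      (by intro b hb; rw [Finset.mem_range] at hb; exact if_neg hb)]
    exact (Finset.sum_congr rfl fun t ht => by
      rw [Finset.mem_range] at ht; rw [if_pos ht]).symm
  -- combine
  have key : (∑' p : ℕ × ℕ, fL q i j (.inl p)) + (∑' p : ℕ × ℕ, fL q i j (.inr p))
      = (∑' p : ℕ × ℕ, fR q i j (.inl p)) + (∑' p : ℕ × ℕ, fR q i j (.inr p)) := by
    have hL : Summable fun p : ℕ × ℕ => fL q i j (.inl p) := sA
    have hL' : Summable fun p : ℕ × ℕ => fL q i j (.inr p) := sB
    have hR : Summable fun p : ℕ × ℕ => fR q i j (.inl p) := sC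
    have hR' : Summable fun p : ℕ × ℕ => fR q i j (.inr p) := sD
    rw [← (hasSum_sum_type hL hL').tsum_eq, ← (hasSum_sum_type hR hR').tsum_eq]
    exact core_tsum_eq q hqne i j hj
  rw [h1, h2, h3, h4]
  linear_combination key
end

section
/- (First half of the key computation.) Let q be a complex number with 0 < |q| < 1, and let i ≥ 0 and j ≥ 1 be integers. Then ∑_{n=j}^{∞} (q^{4(n-j)} / (1 - q^{16(n-j)+8})) · q^{(4n+1)(4i+1)} - ∑_{m=i+1}^{∞} (q^{12(m-i-1)+4} / (1 - q^{16(m-i-1)+8})) · q^{(4m-1)(4j-1)} = ε · q^{16ij+4j-4i+1} · ∑_{l=min(i,j)}^{max(i,j)-1} q^{8l} / (1 - q^{16l+8}), where ε = -1 if i > j and ε = 1 otherwise. -/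
open Finset

lemma den_norm (q : ℂ) (hq : ‖q‖ < 1) (n : ℕ) (hn : 1 ≤ n) :
    1 - ‖q‖ ≤ ‖1 - q ^ n‖ := by
  have hqn : ‖q ^ n‖ ≤ ‖q‖ := by
    rw [norm_pow]
    calc ‖q‖ ^ n ≤ ‖q‖ ^ 1 := pow_le_pow_of_le_one (norm_nonneg q) hq.le hn
      _ = ‖q‖ := pow_one _
  have := norm_sub_norm_le (1 : ℂ) (q ^ n)
  simp only [norm_one] at this
  linarith

lemma den_ne (q : ℂ) (hq : ‖q‖ < 1) (n : ℕ) (hn : 1 ≤ n) :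
    1 - q ^ n ≠ 0 := by
  intro h
  have := den_norm q hq n hn
  rw [h, norm_zero] at this
  linarith

lemma summable_A (q : ℂ) (hq : ‖q‖ < 1) (a : ℕ) :
    Summable (fun k : ℕ => q ^ ((16 * a + 8) * k + 8 * a) / (1 - q ^ (16 * k + 8))) := by
  apply Summable.of_norm
  refine Summable.of_nonneg_of_le (fun k => norm_nonneg _) (fun k => ?_)
    ((summable_geometric_of_lt_one (norm_nonneg q) hq).mul_right (1 / (1 - ‖q‖)))
  · 
    rw [norm_div, norm_pow]
    have h1 : ‖q‖ ^ ((16 * a + 8) * k + 8 * a) ≤ ‖q‖ ^ k := by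
      apply pow_le_pow_of_le_one (norm_nonneg q) hq.le
      nlinarith
    have h2 : (0:ℝ) < 1 - ‖q‖ := by linarith
    have h3 := den_norm q hq (16 * k + 8) (by omega)
    rw [mul_one_div]
    exact div_le_div₀ (by positivity) h1 h2 h3

lemma step_A (q : ℂ) (hq : ‖q‖ < 1) (b : ℕ) :
    (∑' k : ℕ, q ^ ((16 * b + 8) * k + 8 * b) / (1 - q ^ (16 * k + 8)))
      - (∑' k : ℕ, q ^ ((16 * (b+1) + 8) * k + 8 * (b+1)) / (1 - q ^ (16 * k + 8)))
    = q ^ (8 * b) / (1 - q ^ (16 * b + 8)) := by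
  rw [← Summable.tsum_sub (summable_A q hq b) (summable_A q hq (b+1))]
  have hterm : ∀ k : ℕ, q ^ ((16 * b + 8) * k + 8 * b) / (1 - q ^ (16 * k + 8))
      - q ^ ((16 * (b+1) + 8) * k + 8 * (b+1)) / (1 - q ^ (16 * k + 8))
      = (q ^ (16 * b + 8)) ^ k * q ^ (8 * b) := by
    intro k
    have hne := den_ne q hq (16 * k + 8) (by omega)
    have he : (16 * (b+1) + 8) * k + 8 * (b+1) = ((16 * b + 8) * k + 8 * b) + (16 * k + 8) := by ring
    rw [he, div_sub_div_same, pow_add q ((16 * b + 8) * k + 8 * b) (16 * k + 8),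
      ← mul_one_sub, mul_div_assoc, div_self hne, mul_one, pow_add, pow_mul]
  rw [tsum_congr hterm, tsum_mul_right, tsum_geometric_of_norm_lt_one (by
    rw [norm_pow]; exact pow_lt_one₀ (norm_nonneg q) hq (by omega)),
    inv_mul_eq_div]

lemma telescope_A (q : ℂ) (hq : ‖q‖ < 1) (a b : ℕ) (hab : a ≤ b) :
    (∑' k : ℕ, q ^ ((16 * a + 8) * k + 8 * a) / (1 - q ^ (16 * k + 8)))
      - (∑' k : ℕ, q ^ ((16 * b + 8) * k + 8 * b) / (1 - q ^ (16 * k + 8)))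
    = ∑ l ∈ Finset.Ico a b, q ^ (8 * l) / (1 - q ^ (16 * l + 8)) := by
  induction b, hab using Nat.le_induction with
  | base => simp
  | succ b hab ih =>
    rw [Finset.sum_Ico_succ_top (by omega), ← ih, ← step_A q hq b]
    ring

/-- First half of the key computation. The infinite sums `∑_{n=j}^∞` and `∑_{m=i+1}^∞`
are written via the substitutions `n = j+k` and `m = i+1+k` with `k` ranging over `ℕ`. -/
theorem key_computation_first_half (q : ℂ) (hq0 : 0 < ‖q‖)
    (hq1 : ‖q‖ < 1) (i j : ℕ) (hj : 1 ≤ j) :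
    (∑' k : ℕ, q ^ (4 * k) / (1 - q ^ (16 * k + 8)) * q ^ ((4 * (j + k) + 1) * (4 * i + 1)))
      - ∑' k : ℕ,
          q ^ (12 * k + 4) / (1 - q ^ (16 * k + 8)) * q ^ ((4 * (i + 1 + k) - 1) * (4 * j - 1)) =
    (if i > j then (-1 : ℂ) else 1) *
      q ^ (16 * (i : ℤ) * (j : ℤ) + 4 * (j : ℤ) - 4 * (i : ℤ) + 1) *
        ∑ l ∈ Finset.Ico (min i j) (max i j), q ^ (8 * l) / (1 - q ^ (16 * l + 8)) := by
  have hq : ‖q‖ < 1 := hq1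
  have hqne : q ≠ 0 := by
    intro h; rw [h] at hq0; simp at hq0
  obtain ⟨m, rfl⟩ : ∃ m, j = m + 1 := ⟨j - 1, by omega⟩
  set d : ℤ := 16 * (i : ℤ) * ((m : ℕ) + 1 : ℕ) + 4 * ((m : ℕ) + 1 : ℕ) - 4 * (i : ℤ) + 1 with hd
  have h1 : (∑' k : ℕ, q ^ (4 * k) / (1 - q ^ (16 * k + 8))
        * q ^ ((4 * ((m + 1) + k) + 1) * (4 * i + 1)))
      = q ^ d * ∑' k : ℕ, q ^ ((16 * i + 8) * k + 8 * i) / (1 - q ^ (16 * k + 8)) := by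
    rw [← tsum_mul_left]
    refine tsum_congr fun k => ?_
    rw [div_mul_eq_mul_div, ← pow_add, ← mul_div_assoc]
    congr 1
    rw [← zpow_natCast q ((16 * i + 8) * k + 8 * i),
      ← zpow_natCast q (4 * k + (4 * ((m + 1) + k) + 1) * (4 * i + 1)), ← zpow_add₀ hqne]
    congr 1
    push_cast [hd]
    ring
  have h2 : (∑' k : ℕ, q ^ (12 * k + 4) / (1 - q ^ (16 * k + 8))
        * q ^ ((4 * (i + 1 + k) - 1) * (4 * (m + 1) - 1)))
      = q ^ d * ∑' k : ℕ, q ^ ((16 * (m+1) + 8) * k + 8 * (m+1)) / (1 - q ^ (16 * k + 8)) := by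
    rw [← tsum_mul_left]
    refine tsum_congr fun k => ?_
    have e1 : 4 * (i + 1 + k) - 1 = 4 * (i + k) + 3 := by omega
    have e2 : 4 * (m + 1) - 1 = 4 * m + 3 := by omega
    rw [e1, e2, div_mul_eq_mul_div, ← pow_add, ← mul_div_assoc]
    congr 1
    rw [← zpow_natCast q ((16 * (m+1) + 8) * k + 8 * (m+1)),
      ← zpow_natCast q (12 * k + 4 + (4 * (i + k) + 3) * (4 * m + 3)), ← zpow_add₀ hqne]
    congr 1
    push_cast [hd]
    ring
  rw [h1, h2, ← mul_sub]
  by_cases hij : i ≤ m + 1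
  · rw [if_neg (by omega), min_eq_left hij, max_eq_right hij, one_mul,
      ← telescope_A q hq i (m + 1) hij]
  · rw [if_pos (by omega), min_eq_right (by omega), max_eq_left (by omega),
      ← telescope_A q hq (m + 1) i (by omega)]
    ring
end

section
/- (Second half of the key computation.) Let q be a complex number with 0 < |q| < 1, and let i ≥ 0 and j ≥ 1 be integers. Then ∑_{m=1}^{i} (q^{4(i-m)} / (1 - q^{16(i-m)+8})) · q^{(4m-1)(4j-1)} - ∑_{n=0}^{j-1} (q^{12(j-n-1)+4} / (1 - q^{16(j-n-1)+8})) · q^{(4n+1)(4i+1)} = ε · q^{16ij+4j-4i+1} · ∑_{l=min(i,j)}^{max(i,j)-1} q^{8l} / (1 - q^{16l+8}), where ε = -1 if j > i and ε = 1 otherwise. -/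
open Finset

private lemma geom_aux (x : ℂ) (hx : x ≠ 0) (h1 : (1:ℂ) - x ≠ 0) (e : ℕ) :
    (x ^ (-(e:ℤ)) - 1) / (1 - x) = ∑ s ∈ Finset.range e, x ^ (-(s:ℤ)-1) := by
  induction e with
  | zero => simp
  | succ n ih =>
    rw [Finset.sum_range_succ, ← ih]
    have h2 : x ^ (-(n:ℤ)-1) * x = x ^ (-(n:ℤ)) := by
      rw [← zpow_add_one₀ hx]
      ring_nf
    have key : x ^ (-((n:ℕ)+1:ℕ):ℤ) - 1 = (x ^ (-(n:ℤ)) - 1) + (x ^ (-(n:ℤ)-1)) * (1 - x) := by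
      rw [mul_one_sub, h2]
      have : (-((n:ℕ)+1:ℕ):ℤ) = -(n:ℤ)-1 := by push_cast; ring
      rw [this]
      ring
    rw [key, add_div, mul_div_cancel_right₀ _ h1]

private lemma expand_aux (q : ℂ) (hq : q ≠ 0) (k : ℕ)
    (hDk : (1:ℂ) - q ^ (16*k+8) ≠ 0) (B : ℤ) (e : ℕ) :
    (q ^ (B - 8*(e:ℤ)*(2*(k:ℤ)+1)) - q ^ B) / (1 - q ^ (16*k+8))
      = ∑ s ∈ Finset.range e, q ^ (B - 8*((s:ℤ)+1)*(2*(k:ℤ)+1)) := by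
  have hy : (q:ℂ) ^ (16*k+8 : ℕ) = q ^ ((16*(k:ℤ)+8)) := by
    rw [← zpow_natCast]
    norm_cast
  have hyne : q ^ ((16*(k:ℤ)+8)) ≠ 0 := zpow_ne_zero _ hq
  have h1 : q ^ (B - 8*(e:ℤ)*(2*(k:ℤ)+1)) - q ^ B
      = q ^ B * ((q ^ ((16*(k:ℤ)+8))) ^ (-(e:ℤ)) - 1) := by
    rw [mul_sub_one, ← zpow_mul, ← zpow_add₀ hq]
    congr 2
    ring
  rw [hy, h1, mul_div_assoc, geom_aux _ hyne (hy ▸ hDk), Finset.mul_sum]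
  refine Finset.sum_congr rfl fun s _ => ?_
  rw [← zpow_mul, ← zpow_add₀ hq]
  congr 1
  ring

private lemma helper_aux (q : ℂ) (hq : q ≠ 0)
    (hD : ∀ k : ℕ, (1:ℂ) - q ^ (16*k+8) ≠ 0)
    (i j : ℕ) (hij : i ≤ j) (a b c : ℕ → ℤ)
    (hab : ∀ k : ℕ, a k = b k - 8*((j:ℤ) - (i:ℤ))*(2*(k:ℤ)+1))
    (hcb : ∀ l : ℕ, c l = b l + 8*(i:ℤ)*(2*(l:ℤ)+1))
    (hkey : ∀ k s : ℕ, b k - 8*((s:ℤ)+1)*(2*(k:ℤ)+1)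
      = c (s+i) - 8*((k:ℤ)+1)*(2*((s:ℤ)+(i:ℤ))+1)) :
    (∑ k ∈ Finset.range i, q ^ (a k) / (1 - q ^ (16*k+8)))
      - ∑ k ∈ Finset.range j, q ^ (b k) / (1 - q ^ (16*k+8))
      = -∑ l ∈ Finset.Ico i j, q ^ (c l) / (1 - q ^ (16*l+8)) := by
  have hsplit : ∑ k ∈ Finset.range j, q ^ (b k) / (1 - q ^ (16*k+8))
      = (∑ k ∈ Finset.range i, q ^ (b k) / (1 - q ^ (16*k+8)))
        + ∑ k ∈ Finset.Ico i j, q ^ (b k) / (1 - q ^ (16*k+8)) := by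
    simp only [Finset.range_eq_Ico]
    rw [← Finset.sum_Ico_consecutive _ (Nat.zero_le i) hij]
  have main : ∑ k ∈ Finset.range i, (q ^ (a k) - q ^ (b k)) / (1 - q ^ (16*k+8))
      = ∑ l ∈ Finset.Ico i j, (q ^ (b l) - q ^ (c l)) / (1 - q ^ (16*l+8)) := by
    have lhs_eq : ∑ k ∈ Finset.range i, (q ^ (a k) - q ^ (b k)) / (1 - q ^ (16*k+8))
        = ∑ k ∈ Finset.range i, ∑ s ∈ Finset.range (j-i),
            q ^ (b k - 8*((s:ℤ)+1)*(2*(k:ℤ)+1)) := by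
      refine Finset.sum_congr rfl fun k _ => ?_
      rw [← expand_aux q hq k (hD k) (b k) (j-i)]
      congr 2
      rw [hab k]
      have : ((j-i : ℕ) : ℤ) = (j:ℤ) - (i:ℤ) := by omega
      rw [this]
    have rhs_eq : ∑ l ∈ Finset.Ico i j, (q ^ (b l) - q ^ (c l)) / (1 - q ^ (16*l+8))
        = ∑ l ∈ Finset.Ico i j, ∑ t ∈ Finset.range i,
            q ^ (c l - 8*((t:ℤ)+1)*(2*(l:ℤ)+1)) := by
      refine Finset.sum_congr rfl fun l _ => ?_
      rw [← expand_aux q hq l (hD l) (c l) i]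
      congr 2
      rw [hcb l]
      ring
    rw [lhs_eq, rhs_eq, ← Finset.sum_product', ← Finset.sum_product']
    refine Finset.sum_nbij' (fun p => (p.2 + i, p.1)) (fun p => (p.2, p.1 - i)) ?_ ?_ ?_ ?_ ?_
    · intro p hp
      simp only [Finset.mem_product, Finset.mem_range, Finset.mem_Ico] at hp ⊢
      omega
    · intro p hp
      simp only [Finset.mem_product, Finset.mem_range, Finset.mem_Ico] at hp ⊢
      omega
    · intro p hp
      simp only [Finset.mem_product, Finset.mem_range] at hp
      ext <;> simp
    · intro p hp
      simp only [Finset.mem_product, Finset.mem_range, Finset.mem_Ico] at hp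
      ext <;> simp <;> omega
    · intro p hp
      simp only
      congr 1
      have := hkey p.1 p.2
      push_cast at this ⊢
      linarith [this]
  calc (∑ k ∈ Finset.range i, q ^ (a k) / (1 - q ^ (16*k+8)))
      - ∑ k ∈ Finset.range j, q ^ (b k) / (1 - q ^ (16*k+8))
      = (∑ k ∈ Finset.range i, (q ^ (a k) - q ^ (b k)) / (1 - q ^ (16*k+8)))
        - ∑ k ∈ Finset.Ico i j, q ^ (b k) / (1 - q ^ (16*k+8)) := by
        rw [hsplit]
        simp_rw [sub_div, Finset.sum_sub_distrib]
        ring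
    _ = (∑ l ∈ Finset.Ico i j, (q ^ (b l) - q ^ (c l)) / (1 - q ^ (16*l+8)))
        - ∑ k ∈ Finset.Ico i j, q ^ (b k) / (1 - q ^ (16*k+8)) := by rw [main]
    _ = -∑ l ∈ Finset.Ico i j, q ^ (c l) / (1 - q ^ (16*l+8)) := by
        simp_rw [sub_div, Finset.sum_sub_distrib]
        ring

/-- Second half of the key computation. -/
theorem key_computation_second_half (q : ℂ) (hq0 : 0 < ‖q‖)
    (hq1 : ‖q‖ < 1) (i j : ℕ) (hj : 1 ≤ j) :
    (∑ m ∈ Finset.Icc 1 i,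
        q ^ (4 * (i - m)) / (1 - q ^ (16 * (i - m) + 8)) * q ^ ((4 * m - 1) * (4 * j - 1)))
      - ∑ n ∈ Finset.range j,
          q ^ (12 * (j - n - 1) + 4) / (1 - q ^ (16 * (j - n - 1) + 8)) *
            q ^ ((4 * n + 1) * (4 * i + 1)) =
    (if j > i then (-1 : ℂ) else 1) *
      q ^ (16 * (i : ℤ) * (j : ℤ) + 4 * (j : ℤ) - 4 * (i : ℤ) + 1) *
        ∑ l ∈ Finset.Ico (min i j) (max i j), q ^ (8 * l) / (1 - q ^ (16 * l + 8)) := by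
  have hqne : q ≠ 0 := by
    intro h
    rw [h] at hq0
    simp at hq0
  have hD : ∀ k : ℕ, (1:ℂ) - q ^ (16*k+8) ≠ 0 := by
    intro k h
    have h1 : q ^ (16*k+8) = 1 := by
      have := sub_eq_zero.mp h
      exact this.symm
    have h2 : ‖q‖ ^ (16*k+8) = 1 := by
      rw [← norm_pow, h1, norm_one]
    have h3 : ‖q‖ ^ (16*k+8) < 1 :=
      pow_lt_one₀ (norm_nonneg q) hq1 (by omega)
    linarith
  set E1 : ℕ → ℤ := fun k => 16*(j:ℤ)*((i:ℤ)-(k:ℤ)) + 8*(k:ℤ) - 4*(i:ℤ) - 4*(j:ℤ) + 1 with hE1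
  set E2 : ℕ → ℤ := fun k => 16*(i:ℤ)*((j:ℤ)-(k:ℤ)) + 8*(k:ℤ) + 4*(j:ℤ) - 12*(i:ℤ) + 1 with hE2
  set E3 : ℕ → ℤ := fun l => 16*(i:ℤ)*(j:ℤ) + 4*(j:ℤ) - 4*(i:ℤ) + 8*(l:ℤ) + 1 with hE3
  have hS1 : (∑ m ∈ Finset.Icc 1 i,
        q ^ (4 * (i - m)) / (1 - q ^ (16 * (i - m) + 8)) * q ^ ((4 * m - 1) * (4 * j - 1)))
      = ∑ k ∈ Finset.range i, q ^ (E1 k) / (1 - q ^ (16*k+8)) := by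
    refine Finset.sum_nbij' (fun m => i - m) (fun k => i - k) ?_ ?_ ?_ ?_ ?_
    · intro m hm
      simp only [Finset.mem_Icc] at hm
      simp only [Finset.mem_range]
      omega
    · intro k hk
      simp only [Finset.mem_range] at hk
      simp only [Finset.mem_Icc]
      omega
    · intro m hm
      simp only [Finset.mem_Icc] at hm
      omega
    · intro k hk
      simp only [Finset.mem_range] at hk
      omega
    · intro m hm
      simp only [Finset.mem_Icc] at hm
      rw [div_mul_eq_mul_div, ← pow_add, ← zpow_natCast q]
      congr 1
      rw [hE1]
      simp only
      push_cast [Nat.cast_sub hm.2, Nat.cast_sub (show 1 ≤ 4*m by omega),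
        Nat.cast_sub (show 1 ≤ 4*j by omega), Nat.cast_sub (show m ≤ i from hm.2)]
      ring
  have hS2 : (∑ n ∈ Finset.range j,
        q ^ (12 * (j - n - 1) + 4) / (1 - q ^ (16 * (j - n - 1) + 8)) *
          q ^ ((4 * n + 1) * (4 * i + 1)))
      = ∑ k ∈ Finset.range j, q ^ (E2 k) / (1 - q ^ (16*k+8)) := by
    refine Finset.sum_nbij' (fun n => j - 1 - n) (fun k => j - 1 - k) ?_ ?_ ?_ ?_ ?_
    · intro n hn
      simp only [Finset.mem_range] at hn ⊢
      omega
    · intro k hk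
      simp only [Finset.mem_range] at hk ⊢
      omega
    · intro n hn
      simp only [Finset.mem_range] at hn
      omega
    · intro k hk
      simp only [Finset.mem_range] at hk
      omega
    · intro n hn
      simp only [Finset.mem_range] at hn
      have he : j - n - 1 = j - 1 - n := by omega
      rw [he, div_mul_eq_mul_div, ← pow_add, ← zpow_natCast q]
      congr 1
      rw [hE2]
      simp only
      push_cast [show ((j-1-n:ℕ):ℤ) = (j:ℤ)-1-(n:ℤ) by omega]
      ring
  rw [hS1, hS2]
  rcases lt_or_ge i j with hlt | hge
  · have hab : ∀ k : ℕ, E1 k = E2 k - 8*((j:ℤ) - (i:ℤ))*(2*(k:ℤ)+1) := by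
      intro k; simp only [hE1, hE2]; ring
    have hcb : ∀ l : ℕ, E3 l = E2 l + 8*(i:ℤ)*(2*(l:ℤ)+1) := by
      intro l; simp only [hE2, hE3]; ring
    have hkey : ∀ k s : ℕ, E2 k - 8*((s:ℤ)+1)*(2*(k:ℤ)+1)
        = E3 (s+i) - 8*((k:ℤ)+1)*(2*((s:ℤ)+(i:ℤ))+1) := by
      intro k s; simp only [hE2, hE3]; push_cast; ring
    rw [helper_aux q hqne hD i j hlt.le E1 E2 E3 hab hcb hkey,
      if_pos hlt, min_eq_left hlt.le, max_eq_right hlt.le, neg_one_mul, neg_mul, neg_inj]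
    refine Eq.trans ?_ (Finset.mul_sum _ _ _).symm
    refine Finset.sum_congr rfl fun l _ => ?_
    rw [← mul_div_assoc]
    congr 1
    rw [← zpow_natCast q (8*l), ← zpow_add₀ hqne]
    congr 1
    simp only [hE3]
    push_cast
    ring
  · have hab : ∀ k : ℕ, E2 k = E1 k - 8*((i:ℤ) - (j:ℤ))*(2*(k:ℤ)+1) := by
      intro k; simp only [hE1, hE2]; ring
    have hcb : ∀ l : ℕ, E3 l = E1 l + 8*(j:ℤ)*(2*(l:ℤ)+1) := by
      intro l; simp only [hE1, hE3]; ring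
    have hkey : ∀ k s : ℕ, E1 k - 8*((s:ℤ)+1)*(2*(k:ℤ)+1)
        = E3 (s+j) - 8*((k:ℤ)+1)*(2*((s:ℤ)+(j:ℤ))+1) := by
      intro k s; simp only [hE1, hE3]; push_cast; ring
    have key := helper_aux q hqne hD j i hge E2 E1 E3 hab hcb hkey
    rw [← neg_sub, key, neg_neg, if_neg (not_lt.mpr hge), min_eq_right hge, max_eq_left hge,
      one_mul]
    refine Eq.trans ?_ (Finset.mul_sum _ _ _).symm
    refine Finset.sum_congr rfl fun l _ => ?_
    rw [← mul_div_assoc]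
    congr 1
    rw [← zpow_natCast q (8*l), ← zpow_add₀ hqne]
    congr 1
    simp only [hE3]
    push_cast
    ring
end

section
/- (Gauss's Eureka theorem.) Every natural number is the sum of three triangular numbers: for every m ∈ ℕ there exist natural numbers a, b, c such that m = a(a+1)/2 + b(b+1)/2 + c(c+1)/2. -/
open scoped NumberTheorySymbols

open Matrix

namespace Eureka

abbrev M3 := Matrix (Fin 3) (Fin 3) ℤ
abbrev M2 := Matrix (Fin 2) (Fin 2) ℤ

variable {nn : ℕ}

/-- integral quadratic form attached to a square integer matrix -/
def QF (A : Matrix (Fin nn) (Fin nn) ℤ) (v : Fin nn → ℤ) : ℤ := v ⬝ᵥ A.mulVec v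

lemma QF_congr (A U : Matrix (Fin nn) (Fin nn) ℤ) (v : Fin nn → ℤ) :
    QF (Uᵀ * A * U) v = QF A (U.mulVec v) := by
  rw [QF, QF, Matrix.mul_assoc, ← Matrix.mulVec_mulVec, Matrix.dotProduct_mulVec,
    Matrix.vecMul_transpose, ← Matrix.mulVec_mulVec]

lemma mulVec_ne_zero (U : Matrix (Fin nn) (Fin nn) ℤ) (hU : IsUnit U.det)
    (v : Fin nn → ℤ) (hv : v ≠ 0) : U.mulVec v ≠ 0 := by
  intro h
  apply hv
  have h2 : U.adjugate.mulVec (U.mulVec v) = 0 := by rw [h]; simp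
  rw [Matrix.mulVec_mulVec, Matrix.adjugate_mul] at h2
  funext i
  have h3 := congrFun h2 i
  simp [Matrix.smul_mulVec] at h3
  rcases Int.isUnit_iff.mp hU with h1 | h1 <;> rw [h1] at h3 <;> simpa using h3

lemma sym_congr (A U : Matrix (Fin nn) (Fin nn) ℤ) (hsym : Aᵀ = A) :
    (Uᵀ * A * U)ᵀ = Uᵀ * A * U := by
  simp [Matrix.transpose_mul, Matrix.mul_assoc, hsym]

lemma pos_congr (A U : Matrix (Fin nn) (Fin nn) ℤ) (hU : IsUnit U.det)
    (hpos : ∀ v, v ≠ 0 → 0 < QF A v) :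
    ∀ v, v ≠ 0 → 0 < QF (Uᵀ * A * U) v := by
  intro v hv
  rw [QF_congr]
  exact hpos _ (mulVec_ne_zero U hU v hv)

lemma det_congr (A U : Matrix (Fin nn) (Fin nn) ℤ) (hU : IsUnit U.det) :
    (Uᵀ * A * U).det = A.det := by
  rw [Matrix.det_mul, Matrix.det_mul, Matrix.det_transpose]
  rcases Int.isUnit_iff.mp hU with h1 | h1 <;> rw [h1] <;> ring

lemma rep_congr (A U : Matrix (Fin nn) (Fin nn) ℤ) (hU : IsUnit U.det) (n : ℤ)
    (hrep : ∃ v, QF A v = n) : ∃ v, QF (Uᵀ * A * U) v = n := by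
  obtain ⟨v, hv⟩ := hrep
  refine ⟨U⁻¹.mulVec v, ?_⟩
  rw [QF_congr, Matrix.mulVec_mulVec, Matrix.mul_nonsing_inv _ hU]
  simpa using hv

lemma min_congr (A U : Matrix (Fin nn) (Fin nn) ℤ) (hU : IsUnit U.det) (m : ℤ)
    (hmin : ∀ v, v ≠ 0 → m ≤ QF A v) :
    ∀ v, v ≠ 0 → m ≤ QF (Uᵀ * A * U) v := by
  intro v hv
  rw [QF_congr]
  exact hmin _ (mulVec_ne_zero U hU v hv)

/-- the minimum of a positive definite integral form is attained -/
lemma exists_min [NeZero nn] (A : Matrix (Fin nn) (Fin nn) ℤ)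
    (hpos : ∀ v, v ≠ 0 → 0 < QF A v) :
    ∃ v : Fin nn → ℤ, v ≠ 0 ∧ ∀ w : Fin nn → ℤ, w ≠ 0 → QF A v ≤ QF A w := by
  classical
  set S : Set ℕ := {k : ℕ | ∃ v : Fin nn → ℤ, v ≠ 0 ∧ QF A v = (k : ℤ)} with hS
  have h0 : (fun i => if i = 0 then (1:ℤ) else 0) ≠ (0 : Fin nn → ℤ) := by
    intro h; have := congrFun h 0; simp at this
  have hne : S.Nonempty :=
    ⟨(QF A _).toNat, _, h0, (Int.toNat_of_nonneg (le_of_lt (hpos _ h0))).symm⟩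
  obtain ⟨v, hv, hQv⟩ := Nat.sInf_mem hne
  refine ⟨v, hv, fun w hw => ?_⟩
  have hwS : (QF A w).toNat ∈ S := ⟨w, hw, (Int.toNat_of_nonneg (le_of_lt (hpos _ hw))).symm⟩
  have h5 := Nat.sInf_le hwS
  have h6 := hpos w hw
  rw [hQv]
  omega

lemma QF_smul (A : Matrix (Fin nn) (Fin nn) ℤ) (d : ℤ) (w : Fin nn → ℤ) :
    QF A (d • w) = d ^ 2 * QF A w := by
  rw [QF, QF, Matrix.mulVec_smul, smul_dotProduct, dotProduct_smul, smul_eq_mul, smul_eq_mul]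
  ring

lemma min_scaling (A : Matrix (Fin nn) (Fin nn) ℤ)
    (hpos : ∀ v, v ≠ 0 → 0 < QF A v)
    (v : Fin nn → ℤ) (hv : v ≠ 0) (hmin : ∀ w, w ≠ 0 → QF A v ≤ QF A w)
    (d : ℤ) (hd : 2 ≤ d) (w : Fin nn → ℤ) (hvw : v = d • w) : False := by
  have hw : w ≠ 0 := by
    intro h; apply hv; rw [hvw, h]; simp
  have h1 : QF A v = d ^ 2 * QF A w := by rw [hvw, QF_smul]
  have h2 := hmin w hw
  have h3 := hpos w hw
  have h4 : (4:ℤ) ≤ d ^ 2 := by nlinarith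
  have h5 : 4 * QF A w ≤ d ^ 2 * QF A w := mul_le_mul_of_nonneg_right h4 h3.le
  linarith

lemma min_primitive2 (A : Matrix (Fin 2) (Fin 2) ℤ)
    (hpos : ∀ v, v ≠ 0 → 0 < QF A v)
    (v : Fin 2 → ℤ) (hv : v ≠ 0) (hmin : ∀ w, w ≠ 0 → QF A v ≤ QF A w) :
    Int.gcd (v 0) (v 1) = 1 := by
  set d : ℕ := Int.gcd (v 0) (v 1) with hd
  have hd0 : d ≠ 0 := by
    intro h
    apply hv
    have h3 := Int.gcd_eq_zero_iff.mp h
    funext i; fin_cases i <;> simp [h3.1, h3.2]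
  by_contra hne
  have h2 : 2 ≤ (d : ℤ) := by omega
  obtain ⟨w0, hw0⟩ : (d : ℤ) ∣ v 0 := Int.gcd_dvd_left _ _
  obtain ⟨w1, hw1⟩ : (d : ℤ) ∣ v 1 := Int.gcd_dvd_right _ _
  refine min_scaling A hpos v hv hmin (d : ℤ) h2 ![w0, w1] ?_
  funext i; fin_cases i <;> simp [hw0, hw1]

lemma min_primitive3 (A : Matrix (Fin 3) (Fin 3) ℤ)
    (hpos : ∀ v, v ≠ 0 → 0 < QF A v)
    (v : Fin 3 → ℤ) (hv : v ≠ 0) (hmin : ∀ w, w ≠ 0 → QF A v ≤ QF A w) :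
    Int.gcd (Int.gcd (v 0) (v 1)) (v 2) = 1 := by
  set d : ℕ := Int.gcd (Int.gcd (v 0) (v 1)) (v 2) with hd
  have hd0 : d ≠ 0 := by
    intro h
    apply hv
    have h2 : Int.gcd (v 0) (v 1) = 0 ∧ v 2 = 0 := by
      have := Int.gcd_eq_zero_iff.mp h
      constructor
      · have h4 := this.1; simp [Int.natCast_eq_zero] at h4; exact Int.gcd_eq_zero_iff.mpr h4
      · exact this.2
    have h3 := Int.gcd_eq_zero_iff.mp h2.1
    funext i; fin_cases i <;> simp [h3.1, h3.2, h2.2]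
  by_contra hne
  have h2 : 2 ≤ (d : ℤ) := by omega
  obtain ⟨w0, hw0⟩ : (d : ℤ) ∣ v 0 := dvd_trans (Int.gcd_dvd_left _ _) (Int.gcd_dvd_left _ _)
  obtain ⟨w1, hw1⟩ : (d : ℤ) ∣ v 1 := dvd_trans (Int.gcd_dvd_left _ _) (Int.gcd_dvd_right _ _)
  obtain ⟨w2, hw2⟩ : (d : ℤ) ∣ v 2 := Int.gcd_dvd_right _ _
  refine min_scaling A hpos v hv hmin (d : ℤ) h2 ![w0, w1, w2] ?_
  funext i; fin_cases i <;> simp [hw0, hw1, hw2]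

lemma exists_shift (a b : ℤ) (ha : 0 < a) : ∃ s : ℤ, 2 * |b + a * s| ≤ a := by
  have key : ∀ x : ℤ, -a ≤ 2 * x → 2 * x ≤ a → 2 * |x| ≤ a := by
    intro x hx1 hx2
    rcases abs_cases x with ⟨h, _⟩ | ⟨h, _⟩ <;> omega
  have h1 := Int.emod_nonneg b (ne_of_gt ha)
  have h2 := Int.emod_lt_of_pos b ha
  have hmod : ∀ s : ℤ, b + a * s = b % a + a * (s + b / a) := by
    intro s
    rw [Int.emod_def]; ring
  by_cases hc : 2 * (b % a) ≤ a
  · refine ⟨-(b / a), key _ ?_ ?_⟩ <;> rw [hmod] <;> simp <;> omega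
  · refine ⟨-(b / a) - 1, key _ ?_ ?_⟩ <;> rw [hmod] <;> ring_nf <;> omega

lemma QF2_apply (A : Matrix (Fin 2) (Fin 2) ℤ) (x y : ℤ) :
    QF A ![x, y] = A 0 0 * x^2 + (A 0 1 + A 1 0) * (x * y) + A 1 1 * y^2 := by
  simp [QF, Matrix.mulVec, dotProduct, Fin.sum_univ_two]
  ring

lemma QF3_apply (A : Matrix (Fin 3) (Fin 3) ℤ) (x y z : ℤ) :
    QF A ![x, y, z] = A 0 0 * x^2 + A 1 1 * y^2 + A 2 2 * z^2
      + (A 0 1 + A 1 0) * (x*y) + (A 0 2 + A 2 0) * (x*z) + (A 1 2 + A 2 1) * (y*z) := by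
  simp [QF, Matrix.mulVec, dotProduct, Fin.sum_univ_three]
  ring

lemma col2 (U : Matrix (Fin 2) (Fin 2) ℤ) : U.mulVec ![1, 0] = ![U 0 0, U 1 0] := by
  funext i; fin_cases i <;> simp [Matrix.mulVec, dotProduct, Fin.sum_univ_two]

lemma col3 (U : Matrix (Fin 3) (Fin 3) ℤ) : U.mulVec ![1, 0, 0] = ![U 0 0, U 1 0, U 2 0] := by
  funext i; fin_cases i <;> simp [Matrix.mulVec, dotProduct, Fin.sum_univ_three]

lemma e2_ne : (![1, 0] : Fin 2 → ℤ) ≠ 0 := by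
  intro h; have := congrFun h 0; simp at this

lemma e3_ne : (![1, 0, 0] : Fin 3 → ℤ) ≠ 0 := by
  intro h; have := congrFun h 0; simp at this

lemma complete2 (p q : ℤ) (h : Int.gcd p q = 1) :
    ∃ U : M2, IsUnit U.det ∧ U 0 0 = p ∧ U 1 0 = q := by
  refine ⟨!![p, -(Int.gcdB p q); q, Int.gcdA p q], ?_, rfl, rfl⟩
  have hb := Int.gcd_eq_gcd_ab p q
  rw [h] at hb
  have : (!![p, -(Int.gcdB p q); q, Int.gcdA p q] : M2).det = 1 := by
    rw [Matrix.det_fin_two]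
    push_cast at hb
    simp
    linarith [hb]
  rw [this]; exact isUnit_one

lemma complete3 (p q r : ℤ) (h : Int.gcd (Int.gcd p q) r = 1) :
    ∃ U : M3, IsUnit U.det ∧ U 0 0 = p ∧ U 1 0 = q ∧ U 2 0 = r := by
  by_cases hd : Int.gcd p q = 0
  · -- p = q = 0, r = ±1
    have hp : p = 0 := by have := Int.gcd_eq_zero_iff.mp hd; exact this.1
    have hq : q = 0 := by have := Int.gcd_eq_zero_iff.mp hd; exact this.2
    have hr : r.natAbs = 1 := by
      rw [hd] at h; simpa [Int.gcd] using h
    refine ⟨!![p, 1, 0; q, 0, 1; r, 0, 0], ?_, rfl, rfl, rfl⟩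
    have : (!![p, 1, 0; q, 0, 1; r, 0, 0] : M3).det = r := by
      rw [Matrix.det_fin_three]
      simp
    rw [this]
    refine Int.isUnit_iff.mpr ?_
    rcases Int.natAbs_eq r with h1 | h1 <;> omega
  · have hd0 : (Int.gcd p q : ℤ) ≠ 0 := by exact_mod_cast hd
    set d : ℤ := (Int.gcd p q : ℤ) with hddef
    obtain ⟨p', hp'⟩ : d ∣ p := Int.gcd_dvd_left _ _
    obtain ⟨q', hq'⟩ : d ∣ q := Int.gcd_dvd_right _ _
    set u : ℤ := Int.gcdA p q with hu
    set vv : ℤ := Int.gcdB p q with hvv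
    have hbez1 : p * u + q * vv = d := (Int.gcd_eq_gcd_ab p q).symm
    have hq1 : u * p' + vv * q' = 1 := by
      have : d * (u * p' + vv * q') = d * 1 := by
        rw [mul_one]
        calc d * (u * p' + vv * q') = p * u + q * vv := by rw [hp', hq']; ring
        _ = d := hbez1
      exact mul_left_cancel₀ hd0 this
    set α : ℤ := Int.gcdA d r with hα
    set β : ℤ := Int.gcdB d r with hβ
    have hbez2 : d * α + r * β = 1 := by
      have h2 := Int.gcd_eq_gcd_ab d r
      rw [show Int.gcd d r = 1 from h] at h2
      push_cast at h2
      linarith [h2]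
    refine ⟨!![p, -vv, -β*p'; q, u, -β*q'; r, 0, α], ?_, rfl, rfl, rfl⟩
    have hdet : (!![p, -vv, -β*p'; q, u, -β*q'; r, 0, α] : M3).det = 1 := by
      rw [Matrix.det_fin_three]
      simp only [Matrix.of_apply, Matrix.cons_val', Matrix.cons_val_zero, Matrix.cons_val_one,
        Matrix.head_cons, Matrix.empty_val', Matrix.cons_val_fin_one, Matrix.head_fin_const,
        Matrix.cons_val_two, Matrix.tail_cons]
      linear_combination α * hbez1 + (r * β) * hq1 + hbez2
    rw [hdet]; exact isUnit_one


/-- Reduction of a positive binary form: equivalent form with reduced coefficients,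
whose leading entry is the minimum of the original form. -/
lemma binary_reduce (G : Matrix (Fin 2) (Fin 2) ℤ) (hsym : Gᵀ = G)
    (hpos : ∀ v, v ≠ 0 → 0 < QF G v) :
    ∃ H U : Matrix (Fin 2) (Fin 2) ℤ, IsUnit U.det ∧ H = Uᵀ * G * U ∧ Hᵀ = H ∧
      0 < H 0 0 ∧ 2 * |H 0 1| ≤ H 0 0 ∧ H 0 0 ≤ H 1 1 ∧
      (∃ u, u ≠ 0 ∧ QF G u = H 0 0) ∧ (∀ u, u ≠ 0 → H 0 0 ≤ QF H u) := by
  obtain ⟨w, hw, hmin⟩ := exists_min G hpos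
  have hprim := min_primitive2 G hpos w hw hmin
  obtain ⟨U₁, hU₁, hU₁00, hU₁10⟩ := complete2 (w 0) (w 1) hprim
  set B : Matrix (Fin 2) (Fin 2) ℤ := U₁ᵀ * G * U₁ with hB
  have hBw : B 0 0 = QF G w := by
    have h1 : QF B ![1, 0] = QF G w := by
      rw [hB, QF_congr, col2, hU₁00, hU₁10]
      congr 1
      funext i; fin_cases i <;> simp
    rw [← h1, QF2_apply]; ring
  have hB00pos : 0 < B 0 0 := by rw [hBw]; exact hpos w hw
  obtain ⟨s, hs⟩ := exists_shift (B 0 0) (B 0 1) hB00pos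
  set U₂ : Matrix (Fin 2) (Fin 2) ℤ := !![1, s; 0, 1] with hU₂def
  have hU₂ : IsUnit U₂.det := by
    have : U₂.det = 1 := by rw [hU₂def, Matrix.det_fin_two]; simp
    rw [this]; exact isUnit_one
  set H : Matrix (Fin 2) (Fin 2) ℤ := U₂ᵀ * B * U₂ with hH
  set U : Matrix (Fin 2) (Fin 2) ℤ := U₁ * U₂ with hU
  have hUdet : IsUnit U.det := by
    rw [hU, Matrix.det_mul]; exact hU₁.mul hU₂
  have hHU : H = Uᵀ * G * U := by
    rw [hH, hB, hU, Matrix.transpose_mul]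
    noncomm_ring
  have hHsym : Hᵀ = H := by rw [hHU]; exact sym_congr G U hsym
  have hBsym : Bᵀ = B := sym_congr G U₁ hsym
  have hB10 : B 1 0 = B 0 1 := by
    have h := congrFun (congrFun hBsym 1) 0
    simpa [Matrix.transpose_apply] using h.symm
  have hU₂t : U₂ᵀ = !![1, 0; s, 1] := by
    rw [hU₂def]
    ext i j
    fin_cases i <;> fin_cases j <;> simp [Matrix.transpose_apply]
  have hH00 : H 0 0 = B 0 0 := by
    rw [hH, hU₂t, hU₂def]
    simp [Matrix.mul_apply, Matrix.vecMul, dotProduct, Fin.sum_univ_two]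
  have hH01 : H 0 1 = B 0 1 + B 0 0 * s := by
    rw [hH, hU₂t, hU₂def]
    simp [Matrix.mul_apply, Matrix.vecMul, dotProduct, Fin.sum_univ_two]
    ring
  have hminH : ∀ u, u ≠ 0 → B 0 0 ≤ QF H u := by
    intro u hu
    rw [hHU, QF_congr, hBw]
    exact hmin _ (mulVec_ne_zero U hUdet u hu)
  have hH11 : H 0 0 ≤ H 1 1 := by
    have h1 : QF H ![0, 1] = H 1 1 := by rw [QF2_apply]; ring
    have h2 : (![0, 1] : Fin 2 → ℤ) ≠ 0 := by
      intro h; have := congrFun h 1; simp at this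
    have := hminH _ h2
    rw [h1] at this
    omega
  exact ⟨H, U, hUdet, hHU, hHsym, by omega, by rw [hH01, hH00]; exact hs, hH11,
    ⟨w, hw, by rw [← hBw, hH00]⟩, fun u hu => le_trans (le_of_eq hH00) (hminH u hu)⟩

/-- a positive definite binary integral form of determinant 1 represents only
sums of two squares -/
lemma binary_rep (G : Matrix (Fin 2) (Fin 2) ℤ) (hsym : Gᵀ = G)
    (hpos : ∀ v, v ≠ 0 → 0 < QF G v) (hdet : G.det = 1) (k : ℤ)
    (hrep : ∃ u, QF G u = k) : ∃ x y : ℤ, k = x^2 + y^2 := by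
  obtain ⟨H, U, hUdet, hHU, hHsym, hH00, hH01, hH11, _, _⟩ := binary_reduce G hsym hpos
  have hHdet : H.det = 1 := by rw [hHU, det_congr G U hUdet, hdet]
  have hH10 : H 1 0 = H 0 1 := by conv_lhs => rw [← hHsym]; simp
  rw [Matrix.det_fin_two, hH10] at hHdet
  -- 4 = 4*H00*H11 - (2*H01)^2 ≥ 4*H00^2 - H00^2 = 3*H00^2 ⇒ H00 = 1
  have habs := abs_nonneg (H 0 1)
  have hsq : (2 * |H 0 1|)^2 = 4 * (H 0 1 * H 0 1) := by
    rcases abs_cases (H 0 1) with ⟨h, _⟩ | ⟨h, _⟩ <;> rw [h] <;> ring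
  have h1 : H 0 0 = 1 := by nlinarith
  have h2 : H 0 1 = 0 := by
    rw [h1] at hH01
    rcases abs_cases (H 0 1) with ⟨h, _⟩ | ⟨h, _⟩ <;> omega
  have h3 : H 1 1 = 1 := by rw [h1, h2] at hHdet; linarith
  obtain ⟨u, hu⟩ := rep_congr G U hUdet k hrep
  rw [← hHU] at hu
  refine ⟨u 0, u 1, ?_⟩
  have hueq : u = ![u 0, u 1] := by funext i; fin_cases i <;> simp
  rw [← hu, hueq, QF2_apply, h1, h2, hH10, h2, h3]
  simp

set_option maxHeartbeats 1000000 in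
/-- A positive definite integral ternary form of determinant 1 represents only
sums of three squares. -/
theorem ternary_rep (A : M3) (hsym : Aᵀ = A) (hpos : ∀ v, v ≠ 0 → 0 < QF A v)
    (hdet : A.det = 1) (n : ℤ) (hrep : ∃ v, QF A v = n) :
    ∃ x y z : ℤ, n = x^2 + y^2 + z^2 := by
  obtain ⟨w, hw, hmin⟩ := exists_min A hpos
  have hprim := min_primitive3 A hpos w hw hmin
  obtain ⟨U₁, hU₁, h00, h10, h20⟩ := complete3 (w 0) (w 1) (w 2) hprim
  obtain ⟨B, hB⟩ : ∃ B : M3, B = U₁ᵀ * A * U₁ := ⟨_, rfl⟩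
  have hBw : B 0 0 = QF A w := by
    have h1 : QF B ![1, 0, 0] = QF A w := by
      rw [hB, QF_congr, col3, h00, h10, h20]
      congr 1
      funext i; fin_cases i <;> simp
    rw [← h1, QF3_apply]; ring
  have hapos : 0 < B 0 0 := by rw [hBw]; exact hpos w hw
  obtain ⟨s, hs⟩ := exists_shift (B 0 0) (B 0 1) hapos
  obtain ⟨t, ht⟩ := exists_shift (B 0 0) (B 0 2) hapos
  obtain ⟨U₂, hU₂def⟩ : ∃ U₂ : M3, U₂ = !![1, s, t; 0, 1, 0; 0, 0, 1] := ⟨_, rfl⟩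
  have hU₂ : IsUnit U₂.det := by
    have h1 : U₂.det = 1 := by
      rw [hU₂def, Matrix.det_fin_three]
      simp only [Matrix.of_apply, Matrix.cons_val', Matrix.cons_val_zero, Matrix.cons_val_one,
        Matrix.head_cons, Matrix.empty_val', Matrix.cons_val_fin_one, Matrix.head_fin_const,
        Matrix.cons_val_two, Matrix.tail_cons]
      ring
    rw [h1]; exact isUnit_one
  obtain ⟨C, hC⟩ : ∃ C : M3, C = U₂ᵀ * B * U₂ := ⟨_, rfl⟩
  obtain ⟨U, hU⟩ : ∃ U : M3, U = U₁ * U₂ := ⟨_, rfl⟩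
  have hUdet : IsUnit U.det := by rw [hU, Matrix.det_mul]; exact hU₁.mul hU₂
  have hCU : C = Uᵀ * A * U := by
    rw [hC, hB, hU, Matrix.transpose_mul]
    noncomm_ring
  have hCsym : Cᵀ = C := by rw [hCU]; exact sym_congr A U hsym
  have hCpos : ∀ v, v ≠ 0 → 0 < QF C v := by rw [hCU]; exact pos_congr A U hUdet hpos
  have hCdet : C.det = 1 := by rw [hCU, det_congr A U hUdet, hdet]
  have hCmin : ∀ u, u ≠ 0 → B 0 0 ≤ QF C u := by
    intro u hu
    rw [hCU, QF_congr, hBw]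
    exact hmin _ (mulVec_ne_zero U hUdet u hu)
  have hCrep : ∃ v, QF C v = n := by rw [hCU]; exact rep_congr A U hUdet n hrep
  have hU₂t : U₂ᵀ = !![1, 0, 0; s, 1, 0; t, 0, 1] := by
    rw [hU₂def]
    ext i j
    fin_cases i <;> fin_cases j <;> rfl
  have hC00 : C 0 0 = B 0 0 := by
    rw [hC, hU₂t, hU₂def]
    simp [Matrix.mul_apply, Matrix.vecMul, dotProduct, Fin.sum_univ_three,
      Matrix.vecHead, Matrix.vecTail]
  have hC01 : C 0 1 = B 0 1 + B 0 0 * s := by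
    rw [hC, hU₂t, hU₂def]
    simp [Matrix.mul_apply, Matrix.vecMul, dotProduct, Fin.sum_univ_three,
      Matrix.vecHead, Matrix.vecTail]
    ring
  have hC02 : C 0 2 = B 0 2 + B 0 0 * t := by
    rw [hC, hU₂t, hU₂def]
    simp [Matrix.mul_apply, Matrix.vecMul, dotProduct, Fin.sum_univ_three,
      Matrix.vecHead, Matrix.vecTail]
    ring
  have hCmin' : ∀ u, u ≠ 0 → C 0 0 ≤ QF C u := by rw [hC00]; exact hCmin
  have hapos' : 0 < C 0 0 := by rw [hC00]; exact hapos
  have hbred : 2 * |C 0 1| ≤ C 0 0 := by rw [hC01, hC00]; exact hs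
  have hcred : 2 * |C 0 2| ≤ C 0 0 := by rw [hC02, hC00]; exact ht
  clear hC hCU hCmin hC00 hC01 hC02 hBw hapos hs ht hU₂t hU₂ hUdet hU hU₂def hB
    hU₁ h00 h10 h20 hmin hw hprim hrep hdet hpos hsym
  clear U U₁ U₂ B w A s t
  -- now work only with C
  have hC10 : C 1 0 = C 0 1 := by
    have h := congrFun (congrFun hCsym 1) 0
    simpa [Matrix.transpose_apply] using h.symm
  have hC20 : C 2 0 = C 0 2 := by
    have h := congrFun (congrFun hCsym 2) 0
    simpa [Matrix.transpose_apply] using h.symm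
  have hC21 : C 2 1 = C 1 2 := by
    have h := congrFun (congrFun hCsym 2) 1
    simpa [Matrix.transpose_apply] using h.symm
  have hQC : ∀ x y z : ℤ, QF C ![x, y, z] =
      C 0 0*x^2 + C 1 1*y^2 + C 2 2*z^2
        + 2*(C 0 1)*(x*y) + 2*(C 0 2)*(x*z) + 2*(C 1 2)*(y*z) := by
    intro x y z
    rw [QF3_apply, hC10, hC20, hC21]
    ring
  obtain ⟨G, hGdef⟩ : ∃ G : M2, G =
      !![C 0 0*C 1 1 - C 0 1^2, C 0 0*C 1 2 - C 0 1*C 0 2;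
         C 0 0*C 1 2 - C 0 1*C 0 2, C 0 0*C 2 2 - C 0 2^2] := ⟨_, rfl⟩
  have hGsym : Gᵀ = G := by
    rw [hGdef]
    ext i j
    fin_cases i <;> fin_cases j <;> rfl
  have hQG : ∀ y z : ℤ, QF G ![y, z] =
      (C 0 0*C 1 1 - C 0 1^2)*y^2 + (C 0 0*C 2 2 - C 0 2^2)*z^2
        + 2*(C 0 0*C 1 2 - C 0 1*C 0 2)*(y*z) := by
    intro y z
    rw [QF2_apply, hGdef]
    simp [Matrix.vecHead, Matrix.vecTail]
    ring
  have hdetC : C.det = C 0 0*(C 1 1*C 2 2 - C 1 2^2) - C 0 1*(C 0 1*C 2 2 - C 1 2*C 0 2)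
      + C 0 2*(C 0 1*C 1 2 - C 1 1*C 0 2) := by
    rw [Matrix.det_fin_three, hC10, hC20, hC21]
    ring
  have hdetG : G.det = C 0 0 := by
    rw [Matrix.det_fin_two, hGdef]
    simp [Matrix.vecHead, Matrix.vecTail]
    have h1 : C 0 0 * C.det = C 0 0 * 1 := by rw [hCdet]
    rw [hdetC] at h1
    nlinarith [h1]
  have hKI : ∀ x y z : ℤ, C 0 0 * QF C ![x, y, z]
      = (C 0 0*x + C 0 1*y + C 0 2*z)^2 + QF G ![y, z] := by
    intro x y z
    rw [hQC, hQG]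
    ring
  have hGbound : ∀ u : Fin 2 → ℤ, u ≠ 0 → 3 * (C 0 0)^2 ≤ 4 * QF G u := by
    intro u hu
    have hueq : u = ![u 0, u 1] := by funext i; fin_cases i <;> simp
    obtain ⟨x, hx⟩ := exists_shift (C 0 0) (C 0 1 * u 0 + C 0 2 * u 1) hapos'
    have hvne : (![x, u 0, u 1] : Fin 3 → ℤ) ≠ 0 := by
      intro h
      apply hu
      funext i
      fin_cases i
      · simpa using congrFun h 1
      · simpa using congrFun h 2
    have h1 := hCmin' _ hvne
    have h2 := hKI x (u 0) (u 1)
    have hl : C 0 1 * u 0 + C 0 2 * u 1 + C 0 0 * x = C 0 0*x + C 0 1*(u 0) + C 0 2*(u 1) := by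
      ring
    rw [hl] at hx
    have h3 : 4 * (C 0 0*x + C 0 1*(u 0) + C 0 2*(u 1))^2 ≤ (C 0 0)^2 := by
      have h5 := abs_nonneg (C 0 0*x + C 0 1*(u 0) + C 0 2*(u 1))
      nlinarith [sq_abs (C 0 0*x + C 0 1*(u 0) + C 0 2*(u 1))]
    have h4 : C 0 0 * C 0 0 ≤ C 0 0 * QF C ![x, u 0, u 1] :=
      mul_le_mul_of_nonneg_left h1 hapos'.le
    rw [hueq]
    nlinarith
  have hGpos : ∀ u, u ≠ 0 → 0 < QF G u := by
    intro u hu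
    have := hGbound u hu
    nlinarith
  -- use binary reduction to show C 0 0 = 1
  obtain ⟨H, V, hVdet, hHV, hHsym, hH00pos, hH01red, hH0011, hHmin, _⟩ :=
    binary_reduce G hGsym hGpos
  have hHdet : H.det = C 0 0 := by rw [hHV, det_congr G V hVdet, hdetG]
  have hH10 : H 1 0 = H 0 1 := by
    have h := congrFun (congrFun hHsym 1) 0
    simpa [Matrix.transpose_apply] using h.symm
  rw [Matrix.det_fin_two, hH10] at hHdet
  obtain ⟨u₀, hu₀ne, hu₀⟩ := hHmin
  have hminbd : 3 * (C 0 0)^2 ≤ 4 * H 0 0 := by rw [← hu₀]; exact hGbound u₀ hu₀ne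
  have hsqH : (2 * |H 0 1|)^2 = 4 * (H 0 1 * H 0 1) := by
    rcases abs_cases (H 0 1) with ⟨h, _⟩ | ⟨h, _⟩ <;> rw [h] <;> ring
  have hdet4 : 3 * (H 0 0)^2 ≤ 4 * C 0 0 := by nlinarith [abs_nonneg (H 0 1)]
  have ha1 : C 0 0 = 1 := by nlinarith
  have hb0 : C 0 1 = 0 := by
    rw [ha1] at hbred
    rcases abs_cases (C 0 1) with ⟨h, _⟩ | ⟨h, _⟩ <;> omega
  have hc0 : C 0 2 = 0 := by
    rw [ha1] at hcred
    rcases abs_cases (C 0 2) with ⟨h, _⟩ | ⟨h, _⟩ <;> omega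
  have hGdet1 : G.det = 1 := by rw [hdetG, ha1]
  obtain ⟨v, hv⟩ := hCrep
  have hveq : v = ![v 0, v 1, v 2] := by funext i; fin_cases i <;> simp
  have hsplit : n = (v 0)^2 + QF G ![v 1, v 2] := by
    rw [← hv, hveq, hQC, hQG, ha1, hb0, hc0]
    simp
    ring
  obtain ⟨x, y, hxy⟩ := binary_rep G hGsym hGpos hGdet1 (QF G ![v 1, v 2]) ⟨_, rfl⟩
  exact ⟨v 0, x, y, by rw [hsplit, hxy]; ring⟩

theorem exists_data (m : ℕ) : ∃ (p h t s : ℕ),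
    0 < p ∧ 2*p + 1 = (8*m+3) * h ∧ (8*m+3) * t^2 + 1 = 2*p*s := by
  obtain ⟨N, hNdef⟩ : ∃ N : ℕ, N = 8*m+3 := ⟨_, rfl⟩
  rw [← hNdef]
  have hN3 : 3 ≤ N := by omega
  have hNodd' : N % 2 = 1 := by omega
  have h4 : N % 4 = 3 := by omega
  have h8 : N % 8 = 3 := by omega
  obtain ⟨r, hrdef⟩ : ∃ r : ℕ, r = (N-1)/2 := ⟨_, rfl⟩
  have hr : 2*r + 1 = N := by omega
  -- coprimality facts
  have h2N : Nat.Coprime 2 N := (Nat.prime_two.coprime_iff_not_dvd).mpr (by omega)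
  have c4N : Nat.Coprime 4 N := by
    have h := h2N.pow_left 2
    norm_num at h
    exact h
  have hrN : Nat.Coprime r N := by
    have h2 : Nat.gcd r N ∣ N := Nat.gcd_dvd_right r N
    have h5 : N = 2*r+1 := by omega
    have h6 : Nat.gcd r N ∣ 2*r := Dvd.dvd.mul_left (Nat.gcd_dvd_left r N) 2
    have h7 : Nat.gcd r N ∣ 1 := by
      have h2' : Nat.gcd r N ∣ 2*r+1 := by rw [← h5]; exact h2
      have h9 := Nat.dvd_sub h2' h6
      simpa using h9
    exact Nat.dvd_one.mp h7
  -- CRT: k ≡ 1 mod 4, k ≡ r mod N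
  obtain ⟨k, hk1, hk2⟩ := Nat.chineseRemainder c4N 1 r
  have ck4 : Nat.Coprime k 4 := by
    have hmod : k % 4 = 1 := by
      have := hk1; rwa [Nat.ModEq] at this
    have hke : k = 1 + 4 * (k / 4) := by omega
    rw [hke]
    exact (Nat.coprime_add_mul_left_left 1 4 _).mpr (Nat.coprime_one_left 4)
  have ckN : Nat.Coprime k N := by
    have hmod : k % N = r % N := hk2
    have e1 : Nat.gcd N k = Nat.gcd N r := by
      rw [Nat.gcd_rec N k, Nat.gcd_rec N r, hmod]
    have e2 : Nat.gcd k N = 1 := by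
      rw [Nat.gcd_comm, e1, Nat.gcd_comm]
      exact hrN
    exact e2
  have ck : Nat.Coprime k (4*N) := Nat.Coprime.mul_right ck4 ckN
  -- Dirichlet
  haveI : NeZero (4*N) := ⟨by omega⟩
  have hunit : IsUnit ((k : ZMod (4*N))) := (ZMod.isUnit_iff_coprime k (4*N)).mpr ck
  obtain ⟨p, hpgt, hpp, hpa⟩ := Nat.forall_exists_prime_gt_and_eq_mod hunit N
  haveI : Fact p.Prime := ⟨hpp⟩
  have hpk : p ≡ k [MOD 4*N] := (ZMod.natCast_eq_natCast_iff p k (4*N)).mp hpa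
  have hp4 : p % 4 = 1 := by
    have h1 : p ≡ k [MOD 4] := hpk.of_dvd ⟨N, rfl⟩
    have h2 : p ≡ 1 [MOD 4] := h1.trans hk1
    have := h2
    rwa [Nat.ModEq, Nat.one_mod_eq_one.mpr (by norm_num)] at this
  have hpN : p ≡ r [MOD N] := (hpk.of_dvd ⟨4, by ring⟩).trans hk2
  have hdvd2p1 : N ∣ 2*p+1 := by
    have h1 : 2*p+1 ≡ 2*r+1 [MOD N] := (hpN.mul_left 2).add_right 1
    rw [hr] at h1
    have h2 : (2*p+1) % N = N % N := h1
    rw [Nat.mod_self] at h2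
    exact Nat.dvd_of_mod_eq_zero h2
  have hpodd : p % 2 = 1 := by
    rcases hpp.eq_two_or_odd with h | h
    · omega
    · exact h
  have hpndvd : ¬ (p ∣ N) := fun hdvd => by
    have := Nat.le_of_dvd (by omega) hdvd
    omega
  -- Jacobi symbol computation
  have hNoddO : Odd N := Nat.odd_iff.mpr hNodd'
  have j1 : J(-1 | N) = -1 := by
    rw [jacobiSym.at_neg_one hNoddO]
    exact ZMod.χ₄_nat_three_mod_four h4
  have j2 : J(2 | N) = -1 := by
    rw [jacobiSym.at_two hNoddO, ZMod.χ₈_nat_eq_if_mod_eight]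
    simp [h8, hNodd']
  have j3 : J(((2*p : ℕ) : ℤ) | N) = J(-1 | N) := by
    apply jacobiSym.mod_left'
    have h1 : ((2*p : ℕ) : ℤ) ≡ -1 [ZMOD (N:ℕ)] := by
      rw [Int.modEq_iff_dvd]
      have hd : ((N:ℕ):ℤ) ∣ ((2*p+1 : ℕ) : ℤ) := Int.natCast_dvd_natCast.mpr hdvd2p1
      push_cast at hd ⊢
      have he : (-1 - 2*(p:ℤ)) = -(2*(p:ℤ)+1) := by ring
      rw [he]
      exact dvd_neg.mpr hd
    exact h1
  have j4 : J((p : ℕ) | N) = 1 := by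
    have h1 : ((2*p : ℕ) : ℤ) = (2 : ℤ) * (p : ℕ) := by push_cast; ring
    rw [h1, jacobiSym.mul_left, j2, j1] at j3
    linarith
  have j5 : J((N : ℕ) | p) = 1 := by
    rw [← jacobiSym.quadratic_reciprocity_one_mod_four hp4 hNoddO]
    exact j4
  have j6 : J(-(N:ℤ) | p) = 1 := by
    rw [show -(N:ℤ) = -1 * (N:ℕ) by push_cast; ring, jacobiSym.mul_left,
      jacobiSym.at_neg_one (Nat.odd_iff.mpr hpodd), ZMod.χ₄_nat_one_mod_four hp4, j5]
    ring
  have hsq : IsSquare ((-(N:ℤ) : ℤ) : ZMod p) := ZMod.isSquare_of_jacobiSym_eq_one j6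
  -- construct t
  have hNp0 : ((N : ℕ) : ZMod p) ≠ 0 := by
    rw [Ne, ZMod.natCast_eq_zero_iff]
    exact hpndvd
  obtain ⟨rz, hrz⟩ := hsq
  have hrz' : -((N : ℕ) : ZMod p) = rz * rz := by
    rw [Int.cast_neg, Int.cast_natCast] at hrz
    exact hrz
  have hrz0 : rz ≠ 0 := by
    intro h
    rw [h, mul_zero, neg_eq_zero] at hrz'
    exact hNp0 hrz'
  have htz : ((N : ℕ) : ZMod p) * (rz⁻¹)^2 = -1 := by
    have hNeq : ((N:ℕ) : ZMod p) = -(rz*rz) := by rw [← hrz']; ring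
    have hinv : rz * rz⁻¹ = 1 := mul_inv_cancel₀ hrz0
    rw [hNeq]
    calc -(rz*rz) * (rz⁻¹)^2 = -((rz*rz⁻¹)*(rz*rz⁻¹)) := by ring
    _ = -1 := by rw [hinv]; ring
  obtain ⟨t₀, ht₀⟩ : ∃ x : ℕ, x = (rz⁻¹).val := ⟨_, rfl⟩
  have hdvdp : p ∣ N * t₀^2 + 1 := by
    have h1 : ((N * t₀^2 + 1 : ℕ) : ZMod p) = 0 := by
      push_cast
      rw [ht₀, ZMod.natCast_rightInverse rz⁻¹, htz]
      ring
    exact (ZMod.natCast_eq_zero_iff _ p).mp h1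
  obtain ⟨t1, ht1def⟩ : ∃ x : ℕ, x = if t₀ % 2 = 1 then t₀ else t₀ + p := ⟨_, rfl⟩
  have ht1odd : t1 % 2 = 1 := by
    rw [ht1def]; split <;> omega
  have ht1dvd : p ∣ N * t1^2 + 1 := by
    rw [ht1def]; split
    · exact hdvdp
    · have he : N * (t₀ + p)^2 + 1 = (N * t₀^2 + 1) + p * (2*N*t₀ + N*p) := by ring
      rw [he]
      exact dvd_add hdvdp ⟨2*N*t₀ + N*p, rfl⟩
  have heven : 2 ∣ N * t1^2 + 1 := by
    have h1 : t1^2 % 2 = 1 := by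
      have := Nat.pow_mod t1 2 2
      rw [ht1odd] at this
      simpa using this
    have h2 : (N * t1^2) % 2 = 1 := by
      rw [Nat.mul_mod, hNodd', h1]
    omega
  have h2p : 2*p ∣ N * t1^2 + 1 :=
    Nat.Coprime.mul_dvd_of_dvd_of_dvd
      ((Nat.prime_two.coprime_iff_not_dvd).mpr (by omega)) heven ht1dvd
  obtain ⟨s, hs⟩ := h2p
  obtain ⟨h, hh⟩ := hdvd2p1
  exact ⟨p, h, t1, s, hpp.pos, hh, hs⟩


lemma sq_mod8 (u : ℕ) :
    (u % 2 = 1 ∧ u^2 % 8 = 1) ∨ (u % 2 = 0 ∧ (u^2 % 8 = 0 ∨ u^2 % 8 = 4)) := by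
  have h := Nat.pow_mod u 2 8
  have hpar : u % 8 % 2 = u % 2 := Nat.mod_mod_of_dvd u (by norm_num)
  have h8 : u % 8 = 0 ∨ u % 8 = 1 ∨ u % 8 = 2 ∨ u % 8 = 3 ∨ u % 8 = 4 ∨ u % 8 = 5 ∨
      u % 8 = 6 ∨ u % 8 = 7 := by omega
  rcases h8 with h8|h8|h8|h8|h8|h8|h8|h8 <;> rw [h8] at h hpar <;> norm_num at h hpar <;> omega

set_option maxHeartbeats 1000000 in
theorem sum_three_squares (m : ℕ) :
    ∃ x y z : ℤ, 8*(m:ℤ)+3 = x^2 + y^2 + z^2 := by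
  obtain ⟨p, h, t, s, hp, hh, hs⟩ := exists_data m
  have hhz : 2*(p:ℤ)+1 = (8*(m:ℤ)+3)*(h:ℤ) := by exact_mod_cast hh
  have hsz : (8*(m:ℤ)+3)*(t:ℤ)^2 + 1 = 2*(p:ℤ)*(s:ℤ) := by exact_mod_cast hs
  have hpz : (0:ℤ) < (p:ℤ) := by exact_mod_cast hp
  obtain ⟨A, hA⟩ : ∃ A : M3,
      A = !![8*(m:ℤ)+3, 1, 0; 1, (h:ℤ), (t:ℤ); 0, (t:ℤ), (s:ℤ)] := ⟨_, rfl⟩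
  have hsym : Aᵀ = A := by
    rw [hA]; ext i j; fin_cases i <;> fin_cases j <;> rfl
  have hdet : A.det = 1 := by
    rw [hA, Matrix.det_fin_three]
    simp only [Matrix.of_apply, Matrix.cons_val', Matrix.cons_val_zero, Matrix.cons_val_one,
      Matrix.head_cons, Matrix.empty_val', Matrix.cons_val_fin_one, Matrix.head_fin_const,
      Matrix.cons_val_two, Matrix.tail_cons]
    linear_combination (-(s:ℤ))*hhz - hsz
  have hQA : ∀ x y z : ℤ, QF A ![x, y, z] =
      (8*(m:ℤ)+3)*x^2 + (h:ℤ)*y^2 + (s:ℤ)*z^2 + 2*(x*y) + 2*(t:ℤ)*(y*z) := by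
    intro x y z
    rw [QF3_apply, hA]
    simp only [Matrix.of_apply, Matrix.cons_val', Matrix.cons_val_zero, Matrix.cons_val_one,
      Matrix.head_cons, Matrix.empty_val', Matrix.cons_val_fin_one, Matrix.head_fin_const,
      Matrix.cons_val_two, Matrix.tail_cons]
    ring
  have key : ∀ x y z : ℤ,
      2*(p:ℤ)*(8*(m:ℤ)+3)*((8*(m:ℤ)+3)*x^2 + (h:ℤ)*y^2 + (s:ℤ)*z^2 + 2*(x*y) + 2*(t:ℤ)*(y*z))
        = 2*(p:ℤ)*((8*(m:ℤ)+3)*x+y)^2 + (2*(p:ℤ)*y+(8*(m:ℤ)+3)*(t:ℤ)*z)^2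
          + (8*(m:ℤ)+3)*z^2 := by
    intro x y z
    linear_combination (-2*(p:ℤ)*y^2) * hhz + (-(8*(m:ℤ)+3)*z^2) * hsz
  have hpos : ∀ v, v ≠ 0 → 0 < QF A v := by
    intro v hv
    obtain ⟨x, y, z, hxyz⟩ : ∃ x y z, v = ![x, y, z] :=
      ⟨v 0, v 1, v 2, by funext i; fin_cases i <;> simp⟩
    subst hxyz
    rw [hQA]
    by_contra hle
    push_neg at hle
    have hpos2 : (0:ℤ) < 2*(p:ℤ)*(8*(m:ℤ)+3) := by positivity
    have hQ2 : 2*(p:ℤ)*(8*(m:ℤ)+3) *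
        ((8*(m:ℤ)+3)*x^2 + (h:ℤ)*y^2 + (s:ℤ)*z^2 + 2*(x*y) + 2*(t:ℤ)*(y*z)) ≤ 0 :=
      mul_nonpos_of_nonneg_of_nonpos hpos2.le hle
    have hk := key x y z
    have h2a := sq_nonneg ((8*(m:ℤ)+3)*x+y)
    have h2b := sq_nonneg (2*(p:ℤ)*y+(8*(m:ℤ)+3)*(t:ℤ)*z)
    have hz2 : z^2 ≤ 0 := by
      nlinarith [hk, hQ2, mul_nonneg hpz.le h2a, h2b,
        mul_nonneg (show (0:ℤ) ≤ 8*(m:ℤ)+2 by positivity) (sq_nonneg z), sq_nonneg z]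
    have hz0 : z = 0 := pow_eq_zero_iff two_ne_zero |>.mp (le_antisymm hz2 (sq_nonneg z))
    subst hz0
    have hy2 : y^2 ≤ 0 := by
      nlinarith [hk, hQ2, mul_nonneg hpz.le h2a, sq_nonneg y,
        mul_nonneg (show (0:ℤ) ≤ 4*(p:ℤ)^2 - 1 by nlinarith) (sq_nonneg y)]
    have hy0 : y = 0 := pow_eq_zero_iff two_ne_zero |>.mp (le_antisymm hy2 (sq_nonneg y))
    subst hy0
    have hx2 : x^2 ≤ 0 := by
      nlinarith [hk, hQ2, hpz, sq_nonneg x,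
        mul_nonneg (mul_nonneg hpz.le (show (0:ℤ) ≤ 2*(8*(m:ℤ)+3)^2 - 1 by nlinarith))
          (sq_nonneg x)]
    have hx0 : x = 0 := pow_eq_zero_iff two_ne_zero |>.mp (le_antisymm hx2 (sq_nonneg x))
    subst hx0
    apply hv
    funext i
    fin_cases i <;> rfl
  have hrep : QF A ![1, 0, 0] = 8*(m:ℤ)+3 := by
    rw [hQA]; ring
  exact ternary_rep A hsym hpos hdet (8*(m:ℤ)+3) ⟨![1,0,0], hrep⟩

end Eureka

/-- Gauss's Eureka theorem: every natural number is the sum of three triangular numbers. -/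
theorem gauss_eureka (m : ℕ) :
    ∃ a b c : ℕ, m = a * (a + 1) / 2 + b * (b + 1) / 2 + c * (c + 1) / 2 := by
  obtain ⟨x, y, z, hxyz⟩ := Eureka.sum_three_squares m
  have hxyzn : 8*m+3 = x.natAbs^2 + y.natAbs^2 + z.natAbs^2 := by
    have h1 : ((8*m+3 : ℕ) : ℤ) = ((x.natAbs^2 + y.natAbs^2 + z.natAbs^2 : ℕ) : ℤ) := by
      push_cast
      rw [sq_abs, sq_abs, sq_abs]
      linarith [hxyz]
    exact_mod_cast h1
  have pa := Eureka.sq_mod8 x.natAbs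
  have pb := Eureka.sq_mod8 y.natAbs
  have pc := Eureka.sq_mod8 z.natAbs
  have hodd : x.natAbs % 2 = 1 ∧ y.natAbs % 2 = 1 ∧ z.natAbs % 2 = 1 := by omega
  have ha : x.natAbs = 2*(x.natAbs/2)+1 := by omega
  have hb : y.natAbs = 2*(y.natAbs/2)+1 := by omega
  have hc : z.natAbs = 2*(z.natAbs/2)+1 := by omega
  obtain ⟨a', ha'⟩ : ∃ u, u = x.natAbs/2 := ⟨_, rfl⟩
  obtain ⟨b', hb'⟩ : ∃ u, u = y.natAbs/2 := ⟨_, rfl⟩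
  obtain ⟨c', hc'⟩ : ∃ u, u = z.natAbs/2 := ⟨_, rfl⟩
  rw [← ha'] at ha
  rw [← hb'] at hb
  rw [← hc'] at hc
  have hsa : x.natAbs^2 = 4*(a'*(a'+1)) + 1 := by rw [ha]; ring
  have hsb : y.natAbs^2 = 4*(b'*(b'+1)) + 1 := by rw [hb]; ring
  have hsc : z.natAbs^2 = 4*(c'*(c'+1)) + 1 := by rw [hc]; ring
  obtain ⟨A, hA⟩ := Nat.even_mul_succ_self a'
  obtain ⟨B, hB⟩ := Nat.even_mul_succ_self b'
  obtain ⟨C, hC⟩ := Nat.even_mul_succ_self c'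
  exact ⟨a', b', c', by omega⟩
end

section
/- For every even positive integer n, the number of ordered quadruples of integers representing 2n as a sum of four squares equals the number for n: r_4(2n) = r_4(n) whenever n is even. -/
lemma sq_emod_four (x : ℤ) : x ^ 2 % 4 = if Even x then 0 else 1 := by
  rcases Int.even_or_odd x with ⟨y, rfl⟩ | ⟨y, rfl⟩
  · obtain ⟨t, ht⟩ : ∃ t, (y + y) ^ 2 = 4 * t := ⟨y ^ 2, by ring⟩
    rw [ht, if_pos ⟨y, rfl⟩]
    omega
  · obtain ⟨t, ht⟩ : ∃ t, (2 * y + 1) ^ 2 = 4 * t + 1 := ⟨y ^ 2 + y, by ring⟩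
    rw [ht, if_neg (by simp [Int.even_add_one, parity_simps])]
    omega

lemma same_parity {a b c d : ℤ} (h : (4 : ℤ) ∣ a ^ 2 + b ^ 2 + c ^ 2 + d ^ 2) :
    Even (a + b) ∧ Even (a - b) ∧ Even (c + d) ∧ Even (c - d) := by
  obtain ⟨k, hk⟩ := h
  have ha := sq_emod_four a
  have hb := sq_emod_four b
  have hc := sq_emod_four c
  have hd := sq_emod_four d
  generalize hA : a ^ 2 = A at hk ha
  generalize hB : b ^ 2 = B at hk hb
  generalize hC : c ^ 2 = C at hk hc
  generalize hD : d ^ 2 = D at hk hd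
  have key : (Even a ↔ Even b) ∧ (Even c ↔ Even d) := by
    by_cases Ha : Even a <;> by_cases Hb : Even b <;>
    by_cases Hc : Even c <;> by_cases Hd : Even d <;>
    simp only [Ha, Hb, Hc, Hd, if_true, if_false] at ha hb hc hd <;>
    simp only [Ha, Hb, Hc, Hd, iff_true, iff_false, true_and, and_true] <;>
    first
      | tauto
      | omega
  exact ⟨(Int.even_add).2 (by tauto), (Int.even_sub).2 (by tauto),
    (Int.even_add).2 (by tauto), (Int.even_sub).2 (by tauto)⟩

/-- For every even positive integer `n`, `r₄(2n) = r₄(n)`. -/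
theorem r_four_doubling_even (n : ℕ) (hn : 0 < n) (heven : Even n) :
    Nat.card {x : ℤ × ℤ × ℤ × ℤ //
        (2 * n : ℤ) = x.1 ^ 2 + x.2.1 ^ 2 + x.2.2.1 ^ 2 + x.2.2.2 ^ 2} =
      Nat.card {x : ℤ × ℤ × ℤ × ℤ //
        (n : ℤ) = x.1 ^ 2 + x.2.1 ^ 2 + x.2.2.1 ^ 2 + x.2.2.2 ^ 2} := by
  obtain ⟨m, hm⟩ := heven
  let f : {x : ℤ × ℤ × ℤ × ℤ //
        (n : ℤ) = x.1 ^ 2 + x.2.1 ^ 2 + x.2.2.1 ^ 2 + x.2.2.2 ^ 2} →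
      {x : ℤ × ℤ × ℤ × ℤ //
        (2 * n : ℤ) = x.1 ^ 2 + x.2.1 ^ 2 + x.2.2.1 ^ 2 + x.2.2.2 ^ 2} :=
    fun x => ⟨(x.1.1 + x.1.2.1, x.1.1 - x.1.2.1, x.1.2.2.1 + x.1.2.2.2,
        x.1.2.2.1 - x.1.2.2.2), by
      have h := x.2
      simp only at h ⊢
      linear_combination (2 : ℤ) * h⟩
  have hbij : Function.Bijective f := by
    constructor
    · rintro ⟨⟨a, b, c, d⟩, h⟩ ⟨⟨a', b', c', d'⟩, h'⟩ heq
      simp only [f, Subtype.mk.injEq, Prod.mk.injEq] at heq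
      ext <;> simp <;> omega
    · rintro ⟨⟨p, q, r, s⟩, h⟩
      simp only at h
      have hdvd : (4 : ℤ) ∣ p ^ 2 + q ^ 2 + r ^ 2 + s ^ 2 := by
        refine ⟨m, ?_⟩
        rw [← h, hm]
        push_cast
        ring
      obtain ⟨⟨a, hA⟩, ⟨b, hB⟩, ⟨c, hC⟩, ⟨d, hD⟩⟩ := same_parity hdvd
      have hp : p = a + b := by omega
      have hq : q = a - b := by omega
      have hr : r = c + d := by omega
      have hs : s = c - d := by omega
      refine ⟨⟨(a, b, c, d), ?_⟩, ?_⟩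
      · simp only
        have h2 : (2 : ℤ) * n = 2 * (a ^ 2 + b ^ 2 + c ^ 2 + d ^ 2) := by
          rw [h, hp, hq, hr, hs]; ring
        linarith
      · simp only [f, Subtype.mk.injEq, Prod.mk.injEq]
        exact ⟨hp.symm, hq.symm, hr.symm, hs.symm⟩
  exact (Nat.card_congr (Equiv.ofBijective f hbij)).symm
end

section
/- For every odd positive integer n, the number of ordered quadruples of integers representing 2n as a sum of four squares equals three times the number for n: r_4(2n) = 3 · r_4(n) whenever n is odd. -/
private def sol (m : ℤ) : Set (ℤ × ℤ × ℤ × ℤ) :=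
  {x | m = x.1 ^ 2 + x.2.1 ^ 2 + x.2.2.1 ^ 2 + x.2.2.2 ^ 2}

private lemma mem_sol {m : ℤ} {x : ℤ × ℤ × ℤ × ℤ} :
    x ∈ sol m ↔ m = x.1 ^ 2 + x.2.1 ^ 2 + x.2.2.1 ^ 2 + x.2.2.2 ^ 2 := Iff.rfl

private lemma sol_finite (m : ℤ) : (sol m).Finite := by
  apply Set.Finite.subset (Set.finite_Icc ((-m, -m, -m, -m) : ℤ × ℤ × ℤ × ℤ) (m, m, m, m))
  rintro ⟨a, b, c, d⟩ h
  simp only [mem_sol] at h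
  simp only [Set.mem_Icc, Prod.mk_le_mk, Prod.le_def]
  refine ⟨⟨?_, ?_, ?_, ?_⟩, ?_, ?_, ?_, ?_⟩ <;>
    nlinarith [Int.le_self_sq a, Int.le_self_sq (-a), Int.le_self_sq b, Int.le_self_sq (-b),
      Int.le_self_sq c, Int.le_self_sq (-c), Int.le_self_sq d, Int.le_self_sq (-d),
      sq_nonneg a, sq_nonneg b, sq_nonneg c, sq_nonneg d]

private lemma sq_mod_four (y : ℤ) : y ^ 2 % 4 = y % 2 := by
  rcases Int.even_or_odd y with ⟨k, hk⟩ | ⟨k, hk⟩ <;> subst hk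
  · rw [show (k + k) ^ 2 = k ^ 2 * 4 by ring, Int.mul_emod_left,
      show k + k = k * 2 by ring, Int.mul_emod_left]
  · rw [show (2 * k + 1) ^ 2 = 1 + (k ^ 2 + k) * 4 by ring,
      show 2 * k + 1 = 1 + k * 2 by ring, Int.add_mul_emod_self_right, Int.add_mul_emod_self_right]
    decide

private lemma parity_sum {m y₁ y₂ y₃ y₄ : ℤ} (hm : m % 2 = 1)
    (h : 2 * m = y₁ ^ 2 + y₂ ^ 2 + y₃ ^ 2 + y₄ ^ 2) :
    y₁ % 2 + y₂ % 2 + y₃ % 2 + y₄ % 2 = 2 := by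
  have s₁ := sq_mod_four y₁; have s₂ := sq_mod_four y₂
  have s₃ := sq_mod_four y₃; have s₄ := sq_mod_four y₄
  have hs : (y₁ ^ 2 + y₂ ^ 2 + y₃ ^ 2 + y₄ ^ 2) % 4 = 2 := by rw [← h]; omega
  obtain ⟨a₁, e₁⟩ : ∃ a, y₁ ^ 2 = a := ⟨_, rfl⟩
  obtain ⟨a₂, e₂⟩ : ∃ a, y₂ ^ 2 = a := ⟨_, rfl⟩
  obtain ⟨a₃, e₃⟩ : ∃ a, y₃ ^ 2 = a := ⟨_, rfl⟩
  obtain ⟨a₄, e₄⟩ : ∃ a, y₄ ^ 2 = a := ⟨_, rfl⟩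
  rw [e₁] at s₁ hs; rw [e₂] at s₂ hs; rw [e₃] at s₃ hs; rw [e₄] at s₄ hs
  omega

/-- For every odd positive integer `n`, `r₄(2n) = 3 · r₄(n)`. -/
theorem r_four_doubling_odd (n : ℕ) (hn : 0 < n) (hodd : Odd n) :
    Nat.card {x : ℤ × ℤ × ℤ × ℤ //
        (2 * n : ℤ) = x.1 ^ 2 + x.2.1 ^ 2 + x.2.2.1 ^ 2 + x.2.2.2 ^ 2} =
      3 * Nat.card {x : ℤ × ℤ × ℤ × ℤ //
        (n : ℤ) = x.1 ^ 2 + x.2.1 ^ 2 + x.2.2.1 ^ 2 + x.2.2.2 ^ 2} := by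
  have hm : (n : ℤ) % 2 = 1 := by
    obtain ⟨k, hk⟩ := hodd; subst hk; push_cast; omega
  have h1 : Nat.card {x : ℤ × ℤ × ℤ × ℤ //
      (2 * n : ℤ) = x.1 ^ 2 + x.2.1 ^ 2 + x.2.2.1 ^ 2 + x.2.2.2 ^ 2}
      = (sol (2 * (n : ℤ))).ncard := Nat.card_coe_set_eq _
  have h2 : Nat.card {x : ℤ × ℤ × ℤ × ℤ //
      (n : ℤ) = x.1 ^ 2 + x.2.1 ^ 2 + x.2.2.1 ^ 2 + x.2.2.2 ^ 2}
      = (sol ((n : ℤ))).ncard := Nat.card_coe_set_eq _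
  rw [h1, h2]
  set A : Set (ℤ × ℤ × ℤ × ℤ) := {y ∈ sol (2 * (n : ℤ)) | y.1 % 2 = y.2.1 % 2} with hA
  set B : Set (ℤ × ℤ × ℤ × ℤ) := {y ∈ sol (2 * (n : ℤ)) | y.1 % 2 = y.2.2.1 % 2} with hB
  set C : Set (ℤ × ℤ × ℤ × ℤ) := {y ∈ sol (2 * (n : ℤ)) | y.1 % 2 = y.2.2.2 % 2} with hC
  have hAf : A.Finite := (sol_finite _).subset (Set.sep_subset _ _)
  have hBf : B.Finite := (sol_finite _).subset (Set.sep_subset _ _)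
  have hCf : C.Finite := (sol_finite _).subset (Set.sep_subset _ _)
  -- the three sets cover the solutions of 2n
  have cover : sol (2 * (n : ℤ)) = A ∪ B ∪ C := by
    ext y
    simp only [hA, hB, hC, Set.mem_union, Set.mem_sep_iff]
    constructor
    · intro hy
      have hp := parity_sum hm (mem_sol.mp hy)
      have : y.1 % 2 = y.2.1 % 2 ∨ y.1 % 2 = y.2.2.1 % 2 ∨ y.1 % 2 = y.2.2.2 % 2 := by omega
      tauto
    · rintro ((⟨h, -⟩ | ⟨h, -⟩) | ⟨h, -⟩) <;> exact h
  -- pairwise disjoint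
  have dAB : Disjoint A B := by
    rw [Set.disjoint_left]
    rintro y ⟨hy, h12⟩ ⟨-, h13⟩
    have hp := parity_sum hm (mem_sol.mp hy)
    omega
  have dAC : Disjoint A C := by
    rw [Set.disjoint_left]
    rintro y ⟨hy, h12⟩ ⟨-, h14⟩
    have hp := parity_sum hm (mem_sol.mp hy)
    omega
  have dBC : Disjoint B C := by
    rw [Set.disjoint_left]
    rintro y ⟨hy, h13⟩ ⟨-, h14⟩
    have hp := parity_sum hm (mem_sol.mp hy)
    omega
  have hU : (sol (2 * (n : ℤ))).ncard = A.ncard + B.ncard + C.ncard := by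
    rw [cover, Set.ncard_union_eq (Set.disjoint_union_left.mpr ⟨dAC, dBC⟩) (hAf.union hBf) hCf,
      Set.ncard_union_eq dAB hAf hBf]
  -- B is a permuted copy of A
  have hB_eq : B = (fun y : ℤ × ℤ × ℤ × ℤ => (y.1, y.2.2.1, y.2.1, y.2.2.2)) '' A := by
    ext ⟨y₁, y₂, y₃, y₄⟩
    simp only [hA, hB, Set.mem_sep_iff, mem_sol, Set.mem_image, Prod.mk.injEq, Prod.exists]
    constructor
    · rintro ⟨hy, hp⟩
      exact ⟨y₁, y₃, y₂, y₄, ⟨by linear_combination hy, hp⟩, rfl, rfl, rfl, rfl⟩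
    · rintro ⟨a, b, c, d, ⟨hy, hp⟩, rfl, rfl, rfl, rfl⟩
      exact ⟨by linear_combination hy, hp⟩
  have hC_eq : C = (fun y : ℤ × ℤ × ℤ × ℤ => (y.1, y.2.2.1, y.2.2.2, y.2.1)) '' A := by
    ext ⟨y₁, y₂, y₃, y₄⟩
    simp only [hA, hC, Set.mem_sep_iff, mem_sol, Set.mem_image, Prod.mk.injEq, Prod.exists]
    constructor
    · rintro ⟨hy, hp⟩
      exact ⟨y₁, y₄, y₂, y₃, ⟨by linear_combination hy, hp⟩, rfl, rfl, rfl, rfl⟩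
    · rintro ⟨a, b, c, d, ⟨hy, hp⟩, rfl, rfl, rfl, rfl⟩
      exact ⟨by linear_combination hy, hp⟩
  -- A is in bijection with the solutions of n
  have hA_eq : A = (fun x : ℤ × ℤ × ℤ × ℤ =>
      (x.1 + x.2.1, x.1 - x.2.1, x.2.2.1 + x.2.2.2, x.2.2.1 - x.2.2.2)) '' sol ((n : ℤ)) := by
    ext y
    simp only [hA, Set.mem_sep_iff, mem_sol, Set.mem_image, Prod.ext_iff]
    constructor
    · rintro ⟨hy, hp⟩
      have hp2 := parity_sum hm hy
      obtain ⟨a, ha⟩ : ∃ a, y.1 + y.2.1 = 2 * a := ⟨(y.1 + y.2.1) / 2, by omega⟩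
      obtain ⟨b, hb⟩ : ∃ b, y.1 - y.2.1 = 2 * b := ⟨(y.1 - y.2.1) / 2, by omega⟩
      obtain ⟨c, hc⟩ : ∃ c, y.2.2.1 + y.2.2.2 = 2 * c := ⟨(y.2.2.1 + y.2.2.2) / 2, by omega⟩
      obtain ⟨d, hd⟩ : ∃ d, y.2.2.1 - y.2.2.2 = 2 * d := ⟨(y.2.2.1 - y.2.2.2) / 2, by omega⟩
      refine ⟨(a, b, c, d), ?_, ?_⟩
      · show (n : ℤ) = a ^ 2 + b ^ 2 + c ^ 2 + d ^ 2
        have h4 : (4 : ℤ) * (n : ℤ) = 4 * (a ^ 2 + b ^ 2 + c ^ 2 + d ^ 2) := by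
          linear_combination 2 * hy + (y.1 + y.2.1 + 2 * a) * ha + (y.1 - y.2.1 + 2 * b) * hb +
            (y.2.2.1 + y.2.2.2 + 2 * c) * hc + (y.2.2.1 - y.2.2.2 + 2 * d) * hd
        exact mul_left_cancel₀ (by norm_num) h4
      · show a + b = y.1 ∧ a - b = y.2.1 ∧ c + d = y.2.2.1 ∧ c - d = y.2.2.2
        exact ⟨by omega, by omega, by omega, by omega⟩
    · rintro ⟨x, hx, hx1, hx2, hx3, hx4⟩
      constructor
      · rw [← hx1, ← hx2, ← hx3, ← hx4]
        linear_combination 2 * hx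
      · rw [← hx1, ← hx2]
        omega
  have hBn : B.ncard = A.ncard := by
    rw [hB_eq]
    apply Set.ncard_image_of_injective
    rintro ⟨x₁, x₂, x₃, x₄⟩ ⟨z₁, z₂, z₃, z₄⟩ h
    simp only [Prod.mk.injEq] at h ⊢
    obtain ⟨h1, h2, h3, h4⟩ := h
    exact ⟨h1, h3, h2, h4⟩
  have hCn : C.ncard = A.ncard := by
    rw [hC_eq]
    apply Set.ncard_image_of_injective
    rintro ⟨x₁, x₂, x₃, x₄⟩ ⟨z₁, z₂, z₃, z₄⟩ h
    simp only [Prod.mk.injEq] at h ⊢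
    obtain ⟨h1, h2, h3, h4⟩ := h
    exact ⟨h1, h4, h2, h3⟩
  have hAn : A.ncard = (sol ((n : ℤ))).ncard := by
    rw [hA_eq]
    apply Set.ncard_image_of_injective
    rintro ⟨x₁, x₂, x₃, x₄⟩ ⟨z₁, z₂, z₃, z₄⟩ h
    simp only [Prod.mk.injEq] at h ⊢
    obtain ⟨h1, h2, h3, h4⟩ := h
    refine ⟨by omega, by omega, by omega, by omega⟩
  rw [hU, hBn, hCn, hAn]
  ring
end
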